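/- arXiv:1305.6747 — 13 statements merged into one kernel-verified Lean document; each statement's English description precedes it below -/
import Mathlib

section
/- Let S1 and S2 be complete separable metric spaces, ν a Borel probability measure on S2, and S ⊆ P_ν(S1×S2) a set of joint distributions whose S2-marginal is ν. Then the following are equivalent: (a) S is nonempty and pointwise uniqueness holds (i.e., whenever X1, X2, Y are defined on a common probability space with both joint laws μ_{X1,Y} and μ_{X2,Y} in S, then X1 = X2 a.s.); (b) there exists a strong solution (some μ ∈ S of the form μ(dx×dy) = δ_{F(y)}(dx) ν(dy) for a Borel measurable F : S2 → S1) and S contains at most one measure. -/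
/-!
Disintegrate each law in `S` along its `S2`-marginal: `μ` is the law of `(X, Y)` with `Y ∼ ν` and
`X ∼ κ Y`. For two laws with kernels `κ₁, κ₂`, drawing `Y ∼ ν` and then `X₁ ∼ κ₁ Y`, `X₂ ∼ κ₂ Y`
conditionally independently couples them over the same `Y`, so pointwise uniqueness gives
`X₁ = X₂` a.s. and the two laws coincide. Coupling a law with itself, two independent samples of
`κ y` agree a.s., so `κ y` is a Dirac mass `δ (F y)` for `ν`-a.e. `y`, and `F` can be read off
measurably through a Borel embedding of `S1` into `ℝ≥0∞`. Conversely, if `S` is the single law of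
`(F Y, Y)`, every solution satisfies `X = F Y` a.s.
-/

open MeasureTheory ProbabilityTheory

section Dirac

variable {α β : Type*} [MeasurableSpace α] [MeasurableSpace β]

lemma MeasureTheory.Measure.isZeroOneMeasure_of_ae_fst_eq_snd (m : Measure α)
    [IsProbabilityMeasure m] (h : ∀ᵐ p ∂m.prod m, p.1 = p.2) : IsZeroOneMeasure m where
  zero_one₀ s hs := by
    have hprod : m s * m sᶜ = 0 := by
      rw [← Measure.prod_prod]
      exact measure_mono_null (fun p hp (heq : p.1 = p.2) => hp.2 (heq ▸ hp.1)) (ae_iff.mp h)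
    rcases mul_eq_zero.mp hprod with hs0 | hsc0
    · exact .inl hs0
    · exact .inr ((prob_compl_eq_zero_iff hs).mp hsc0)

lemma MeasureTheory.Measure.exists_eq_dirac_of_ae_fst_eq_snd [StandardBorelSpace α]
    (m : Measure α) [IsProbabilityMeasure m] (h : ∀ᵐ p ∂m.prod m, p.1 = p.2) :
    ∃ a, m = dirac a :=
  haveI := m.isZeroOneMeasure_of_ae_fst_eq_snd h
  IsZeroOneMeasure.exists_eq_dirac

lemma ProbabilityTheory.Kernel.exists_measurable_ae_eq_deterministic [StandardBorelSpace α]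
    [Nonempty α] {ν : Measure β} (κ : Kernel β α) (h : ∀ᵐ y ∂ν, ∃ a, κ y = Measure.dirac a) :
    ∃ (F : β → α) (hF : Measurable F), κ =ᵐ[ν] Kernel.deterministic F hF := by
  set φ : α → ENNReal := fun x => ENNReal.ofReal (Real.exp (embeddingReal α x))
  have hφ : MeasurableEmbedding φ := by
    refine Measurable.measurableEmbedding (by fun_prop) fun x y hxy => ?_
    refine (measurableEmbedding_embeddingReal α).injective (Real.exp_injective ?_)
    exact (ENNReal.ofReal_eq_ofReal_iff (Real.exp_pos _).le (Real.exp_pos _).le).mp hxy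
  obtain ⟨r, hr, hrφ⟩ := hφ.exists_measurable_extend measurable_id fun _ => inferInstance
  refine ⟨fun y => r (∫⁻ x, φ x ∂κ y), hr.comp hφ.measurable.lintegral_kernel, ?_⟩
  filter_upwards [h] with y ⟨a, ha⟩
  rw [Kernel.deterministic_apply, ha, lintegral_dirac]
  exact congrArg _ (congrFun hrφ a).symm

end Dirac

section Coupling

variable {α β : Type*} [MeasurableSpace α] [MeasurableSpace β]

lemma MeasureTheory.Measure.exists_kernel_map_swap_compProd_eq [StandardBorelSpace α]
    {ν : Measure β} (μ : Measure (α × β)) [IsProbabilityMeasure μ] (hμ : μ.map Prod.snd = ν) :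
    ∃ κ : Kernel β α, IsMarkovKernel κ ∧ (ν ⊗ₘ κ).map Prod.swap = μ := by
  have : Nonempty α := (nonempty_of_isProbabilityMeasure μ).map Prod.fst
  have hfst : (μ.map Prod.swap).fst = ν := by
    rw [Measure.fst, Measure.map_map measurable_fst measurable_swap]
    exact hμ
  refine ⟨(μ.map Prod.swap).condKernel, inferInstance, ?_⟩
  rw [← hfst, Measure.disintegrate, Measure.map_map measurable_swap measurable_swap,
    Prod.swap_swap_eq, Measure.map_id]

variable (ν : Measure β) [SFinite ν] (κ₁ κ₂ : Kernel β α) [IsMarkovKernel κ₁]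
  [IsMarkovKernel κ₂]

lemma MeasureTheory.Measure.map_compProd_prod_fst :
    (ν ⊗ₘ (κ₁ ×ₖ κ₂)).map (fun p => (p.2.1, p.1)) = (ν ⊗ₘ κ₁).map Prod.swap := by
  conv_rhs => rw [← Kernel.fst_prod κ₁ κ₂, Kernel.fst_eq, Measure.compProd_map measurable_fst,
    Measure.map_map measurable_swap (by fun_prop)]
  rfl

lemma MeasureTheory.Measure.map_compProd_prod_snd :
    (ν ⊗ₘ (κ₁ ×ₖ κ₂)).map (fun p => (p.2.2, p.1)) = (ν ⊗ₘ κ₂).map Prod.swap := by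
  conv_rhs => rw [← Kernel.snd_prod κ₁ κ₂, Kernel.snd_eq, Measure.compProd_map measurable_snd,
    Measure.map_map measurable_swap (by fun_prop)]
  rfl

end Coupling

def PointwiseUniqueness {α β : Type*} [MeasurableSpace α] [MeasurableSpace β]
    (S : Set (Measure (α × β))) : Prop :=
  ∀ (Ω : Type) (_ : MeasurableSpace Ω) (P : Measure Ω), IsProbabilityMeasure P →
    ∀ (X1 X2 : Ω → α) (Y : Ω → β), Measurable X1 → Measurable X2 → Measurable Y →
      P.map (fun ω => (X1 ω, Y ω)) ∈ S → P.map (fun ω => (X2 ω, Y ω)) ∈ S → X1 =ᵐ[P] X2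

namespace PointwiseUniqueness

variable {α β : Type} [MeasurableSpace α] [MeasurableSpace β] {ν : Measure β}
  {S : Set (Measure (α × β))}

lemma ae_eq_of_compProd_prod (hpu : PointwiseUniqueness S) [IsProbabilityMeasure ν]
    {κ₁ κ₂ : Kernel β α} [IsMarkovKernel κ₁] [IsMarkovKernel κ₂]
    (h₁ : (ν ⊗ₘ κ₁).map Prod.swap ∈ S) (h₂ : (ν ⊗ₘ κ₂).map Prod.swap ∈ S) :
    ∀ᵐ p ∂ν ⊗ₘ (κ₁ ×ₖ κ₂), p.2.1 = p.2.2 :=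
  hpu _ _ _ inferInstance (fun p : β × α × α => p.2.1) (fun p => p.2.2) Prod.fst (by fun_prop)
    (by fun_prop) measurable_fst (by rwa [Measure.map_compProd_prod_fst])
    (by rwa [Measure.map_compProd_prod_snd])

variable [StandardBorelSpace α] [IsProbabilityMeasure ν]

lemma subsingleton (hpu : PointwiseUniqueness S)
    (hS : ∀ μ ∈ S, IsProbabilityMeasure μ ∧ μ.map Prod.snd = ν) : S.Subsingleton := by
  intro μ₁ h₁ μ₂ h₂
  have := (hS μ₁ h₁).1
  have := (hS μ₂ h₂).1
  obtain ⟨κ₁, _, rfl⟩ := Measure.exists_kernel_map_swap_compProd_eq μ₁ (hS μ₁ h₁).2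
  obtain ⟨κ₂, _, rfl⟩ := Measure.exists_kernel_map_swap_compProd_eq μ₂ (hS μ₂ h₂).2
  rw [← Measure.map_compProd_prod_fst ν κ₁ κ₂, ← Measure.map_compProd_prod_snd ν κ₁ κ₂]
  exact Measure.map_congr ((hpu.ae_eq_of_compProd_prod h₁ h₂).mono fun p hp => by simp only [hp])

lemma exists_measurable_map_eq (hpu : PointwiseUniqueness S)
    (hS : ∀ μ ∈ S, IsProbabilityMeasure μ ∧ μ.map Prod.snd = ν) {μ : Measure (α × β)}
    (hμ : μ ∈ S) : ∃ F : β → α, Measurable F ∧ ν.map (fun y => (F y, y)) = μ := by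
  have := (hS μ hμ).1
  have : Nonempty α := (nonempty_of_isProbabilityMeasure μ).map Prod.fst
  obtain ⟨κ, _, rfl⟩ := Measure.exists_kernel_map_swap_compProd_eq μ (hS μ hμ).2
  have hdirac : ∀ᵐ y ∂ν, ∃ a, κ y = Measure.dirac a := by
    filter_upwards [Measure.ae_ae_of_ae_compProd (hpu.ae_eq_of_compProd_prod hμ hμ)] with y hy
    exact (κ y).exists_eq_dirac_of_ae_fst_eq_snd (by rwa [← Kernel.prod_apply])
  obtain ⟨F, hF, hκF⟩ := κ.exists_measurable_ae_eq_deterministic hdirac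
  refine ⟨F, hF, ?_⟩
  rw [Measure.compProd_congr hκF, Measure.compProd_deterministic,
    Measure.map_map measurable_swap (by fun_prop)]
  rfl

end PointwiseUniqueness

lemma pointwiseUniqueness_of_subsingleton {α β : Type*} [MeasurableSpace α] [MeasurableEq α]
    [MeasurableSpace β] {ν : Measure β} {S : Set (Measure (α × β))} {F : β → α}
    (hF : Measurable F) (hFS : ν.map (fun y => (F y, y)) ∈ S) (hsub : S.Subsingleton) :
    PointwiseUniqueness S := by
  intro Ω _ P _ X₁ X₂ Y hX₁ hX₂ hY h₁ h₂
  have hgraph : MeasurableSet {p : α × β | p.1 = F p.2} :=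
    measurableSet_eq_fun measurable_fst (hF.comp measurable_snd)
  have hstrong (X : Ω → α) (hX : Measurable X) (hXS : P.map (fun ω => (X ω, Y ω)) ∈ S) :
      ∀ᵐ ω ∂P, X ω = F (Y ω) := by
    rw [← ae_map_iff (μ := P) (hX.prodMk hY).aemeasurable hgraph, hsub hXS hFS,
      ae_map_iff (by fun_prop) hgraph]
    exact .of_forall fun _ => rfl
  filter_upwards [hstrong X₁ hX₁ h₁, hstrong X₂ hX₂ h₂] with ω h₁ h₂
  rw [h₁, h₂]

theorem stmt0_general
    {S1 S2 : Type} [MeasurableSpace S1] [TopologicalSpace S1] [PolishSpace S1] [BorelSpace S1]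
    [MeasurableSpace S2]
    (ν : Measure S2) [IsProbabilityMeasure ν]
    (S : Set (Measure (S1 × S2)))
    (hS : ∀ μ ∈ S, IsProbabilityMeasure μ ∧ μ.map Prod.snd = ν) :
    (S.Nonempty ∧
      ∀ (Ω : Type) (mΩ : MeasurableSpace Ω) (P : Measure Ω), IsProbabilityMeasure P →
        ∀ (X1 X2 : Ω → S1) (Y : Ω → S2), Measurable X1 → Measurable X2 → Measurable Y →
          P.map (fun ω => (X1 ω, Y ω)) ∈ S → P.map (fun ω => (X2 ω, Y ω)) ∈ S →
          X1 =ᵐ[P] X2)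
    ↔ ((∃ F : S2 → S1, Measurable F ∧ ν.map (fun y => (F y, y)) ∈ S) ∧ S.Subsingleton) := by
  constructor
  · rintro ⟨⟨μ, hμ⟩, hpu⟩
    obtain ⟨F, hF, hFμ⟩ := PointwiseUniqueness.exists_measurable_map_eq hpu hS hμ
    exact ⟨⟨F, hF, hFμ ▸ hμ⟩, PointwiseUniqueness.subsingleton hpu hS⟩
  · rintro ⟨⟨F, hF, hFS⟩, hsub⟩
    exact ⟨⟨_, hFS⟩, pointwiseUniqueness_of_subsingleton hF hFS hsub⟩

/-- Generalized Yamada-Watanabe / Engelbert theorem (Kurtz, Theorem 1.5):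
weak existence plus pointwise uniqueness is equivalent to existence of a strong
solution plus joint uniqueness in law. -/
theorem stmt0
    {S1 S2 : Type} [MeasurableSpace S1] [TopologicalSpace S1] [PolishSpace S1] [BorelSpace S1]
    [MeasurableSpace S2] [TopologicalSpace S2] [PolishSpace S2] [BorelSpace S2]
    (ν : Measure S2) [IsProbabilityMeasure ν]
    (S : Set (Measure (S1 × S2)))
    (hS : ∀ μ ∈ S, IsProbabilityMeasure μ ∧ μ.map Prod.snd = ν) :
    (S.Nonempty ∧
      ∀ (Ω : Type) (mΩ : MeasurableSpace Ω) (P : Measure Ω), IsProbabilityMeasure P →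
        ∀ (X1 X2 : Ω → S1) (Y : Ω → S2), Measurable X1 → Measurable X2 → Measurable Y →
          P.map (fun ω => (X1 ω, Y ω)) ∈ S → P.map (fun ω => (X2 ω, Y ω)) ∈ S →
          X1 =ᵐ[P] X2)
    ↔ ((∃ F : S2 → S1, Measurable F ∧ ν.map (fun y => (F y, y)) ∈ S) ∧ S.Subsingleton) :=
  stmt0_general ν S hS
end

section
/- Let S1, S2 be Polish spaces, ν a Borel probability measure on S2, and μ a Borel probability measure on S1×S2 with second marginal ν. Then there exists a Borel measurable function G : S2×[0,1] → S1 such that if Y has distribution ν and ξ is uniformly distributed on [0,1] and independent of Y, then the pair (G(Y,ξ), Y) has distribution μ. -/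
/-!
View `μ` on `S2 × S1` and disintegrate it as `ν ⊗ κ` with a Markov kernel `κ : S2 → S1`, which
exists because `S1` is standard Borel. Any such kernel is the image of Lebesgue measure on `[0,1]`
under a jointly measurable map `G (y, ·)` (Kallenberg, Lemma 4.22). By independence `(Y, ξ)` has
law `ν ⊗ Leb[0,1]`, whose image under `(y, u) ↦ (G (y, u), y)` is `μ`.
-/

open MeasureTheory ProbabilityTheory Set

namespace unitInterval

lemma map_projIcc_volume_restrict :
    (volume.restrict (Icc (0 : ℝ) 1)).map (projIcc (0 : ℝ) 1 zero_le_one) =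
      (volume : Measure I) := by
  rw [← measurePreserving_coe.map_eq, Measure.map_map (by fun_prop) measurable_subtype_coe]
  exact (congrArg (Measure.map · volume) (funext (projIcc_val zero_le_one))).trans Measure.map_id

end unitInterval

namespace ProbabilityTheory.Kernel

lemma exists_measurable_map_volume_Icc_eq {X Y : Type*} [MeasurableSpace X] [MeasurableSpace Y]
    [StandardBorelSpace Y] [Nonempty Y] (κ : Kernel X Y) [IsMarkovKernel κ] :
    ∃ G : X × ℝ → Y, Measurable G ∧
      ∀ x, (volume.restrict (Icc (0 : ℝ) 1)).map (fun u => G (x, u)) = κ x := by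
  obtain ⟨f, hf, hfκ⟩ := κ.exists_measurable_map_eq_unitInterval
  refine ⟨fun p => f p.1 (projIcc (0 : ℝ) 1 zero_le_one p.2), by fun_prop, fun x => ?_⟩
  rw [← hfκ x, ← unitInterval.map_projIcc_volume_restrict,
    Measure.map_map hf.of_uncurry_left (by fun_prop)]
  rfl

end ProbabilityTheory.Kernel

namespace MeasureTheory.Measure

lemma map_prod_eq_compProd {X Y Z : Type*} [MeasurableSpace X] [MeasurableSpace Y]
    [MeasurableSpace Z] (ν : Measure X) [SFinite ν] (η : Measure Z) [SFinite η]
    (κ : Kernel X Y) [IsSFiniteKernel κ] {G : X × Z → Y} (hG : Measurable G)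
    (hGκ : ∀ x, η.map (fun z => G (x, z)) = κ x) :
    (ν.prod η).map (fun p => (p.1, G p)) = ν ⊗ₘ κ := by
  have hmeas : Measurable fun p : X × Z => (p.1, G p) := measurable_fst.prodMk hG
  ext s hs
  rw [map_apply hmeas hs, prod_apply (hmeas hs), compProd_apply hs]
  refine lintegral_congr fun x => ?_
  rw [← hGκ x, map_apply (by fun_prop) (measurable_prodMk_left hs)]
  rfl

end MeasureTheory.Measure

theorem stmt1_general
    {S1 S2 : Type} [MeasurableSpace S1] [TopologicalSpace S1] [PolishSpace S1] [BorelSpace S1]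
    [MeasurableSpace S2]
    (ν : Measure S2) [IsProbabilityMeasure ν]
    (μ : Measure (S1 × S2)) [IsProbabilityMeasure μ]
    (hμ : μ.map Prod.snd = ν) :
    ∃ G : S2 × ℝ → S1, Measurable G ∧
      ∀ (Ω : Type) (mΩ : MeasurableSpace Ω) (P : Measure Ω), IsProbabilityMeasure P →
        ∀ (Y : Ω → S2) (ξ : Ω → ℝ), Measurable Y → Measurable ξ →
          P.map Y = ν → P.map ξ = volume.restrict (Set.Icc (0:ℝ) 1) →
          IndepFun Y ξ P →
          P.map (fun ω => (G (Y ω, ξ ω), Y ω)) = μ := by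
  have : Nonempty S1 := (nonempty_of_isProbabilityMeasure μ).map Prod.fst
  set κ := (μ.map Prod.swap).condKernel
  have hdisint : ν ⊗ₘ κ = μ.map Prod.swap := by
    rw [← hμ, ← Measure.snd, ← Measure.fst_map_swap]
    exact Measure.disintegrate _ _
  obtain ⟨G, hG, hGκ⟩ := κ.exists_measurable_map_volume_Icc_eq
  refine ⟨G, hG, fun Ω _ P _ Y ξ hY hξ hPY hPξ hindep => ?_⟩
  have hlaw : P.map (fun ω => (Y ω, ξ ω)) = ν.prod (volume.restrict (Icc (0 : ℝ) 1)) := by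
    rw [← hPY, ← hPξ]
    exact (indepFun_iff_map_prod_eq_prod_map_map hY.aemeasurable hξ.aemeasurable).mp hindep
  calc P.map (fun ω => (G (Y ω, ξ ω), Y ω))
      = ((P.map fun ω => (Y ω, ξ ω)).map fun p => (p.1, G p)).map Prod.swap := by
        rw [Measure.map_map measurable_swap (measurable_fst.prodMk hG),
          Measure.map_map (measurable_swap.comp (measurable_fst.prodMk hG)) (hY.prodMk hξ)]
        rfl
    _ = μ := by
        rw [hlaw, Measure.map_prod_eq_compProd _ _ _ hG hGκ, hdisint,
          Measure.map_map measurable_swap measurable_swap, Prod.swap_swap_eq, Measure.map_id]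

/-- Lemma 1.3(b) of Kurtz: randomized representation of the disintegration of a joint
law over its second marginal (Blackwell–Dubins construction). -/
theorem stmt1
    {S1 S2 : Type} [MeasurableSpace S1] [TopologicalSpace S1] [PolishSpace S1] [BorelSpace S1]
    [MeasurableSpace S2] [TopologicalSpace S2] [PolishSpace S2] [BorelSpace S2]
    (ν : Measure S2) [IsProbabilityMeasure ν]
    (μ : Measure (S1 × S2)) [IsProbabilityMeasure μ]
    (hμ : μ.map Prod.snd = ν) :
    ∃ G : S2 × ℝ → S1, Measurable G ∧
      ∀ (Ω : Type) (mΩ : MeasurableSpace Ω) (P : Measure Ω), IsProbabilityMeasure P →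
        ∀ (Y : Ω → S2) (ξ : Ω → ℝ), Measurable Y → Measurable ξ →
          P.map Y = ν → P.map ξ = volume.restrict (Set.Icc (0:ℝ) 1) →
          IndepFun Y ξ P →
          P.map (fun ω => (G (Y ω, ξ ω), Y ω)) = μ :=
  stmt1_general ν μ hμ
end

section
/- Let S1, S2 be Polish spaces and ν a probability measure on S2. A probability measure μ on S1×S2 with second marginal ν corresponds to a strong solution (i.e., there is Borel F : S2 → S1 with μ = law of (F(Y),Y) for Y ~ ν) if and only if its disintegration η(y,dx) over ν is ν-a.s. a Dirac measure: η(y,dx) = δ_{F(y)}(dx) for some Borel F. -/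
open MeasureTheory ProbabilityTheory

lemma compProd_det {S1 S2 : Type} [MeasurableSpace S1] [MeasurableSpace S2]
    [MeasurableSingletonClass S1]
    (ν : Measure S2) [SFinite ν] {F : S2 → S1} (hF : Measurable F) :
    ν.compProd (Kernel.deterministic F hF) = ν.map (fun y => (y, F y)) := by
  have hm : Measurable fun y : S2 => (y, F y) := measurable_id.prodMk hF
  ext s hs
  rw [Measure.compProd_apply hs, Measure.map_apply hm hs]
  rw [← lintegral_indicator_one (hs.preimage hm)]
  congr with a
  rw [Kernel.deterministic_apply, Measure.dirac_apply' _ (measurable_prodMk_left hs)]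
  classical
  simp only [Set.indicator_apply, Set.mem_preimage, Pi.one_apply]

/-- Lemma 1.3(c) of Kurtz: a joint law corresponds to a strong solution iff its
disintegration kernel over the second marginal is a.s. a Dirac measure. -/
theorem stmt2
    {S1 S2 : Type} [MeasurableSpace S1] [TopologicalSpace S1] [PolishSpace S1] [BorelSpace S1]
    [MeasurableSpace S2] [TopologicalSpace S2] [PolishSpace S2] [BorelSpace S2]
    (ν : Measure S2) [IsProbabilityMeasure ν]
    (μ : Measure (S1 × S2)) [IsProbabilityMeasure μ]
    (η : ProbabilityTheory.Kernel S2 S1) [IsMarkovKernel η]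
    (hdis : μ = (ν.compProd η).map Prod.swap) :
    (∃ F : S2 → S1, Measurable F ∧ μ = ν.map (fun y => (F y, y)))
    ↔ (∃ F : S2 → S1, Measurable F ∧ ∀ᵐ y ∂ν, η y = Measure.dirac (F y)) := by
  have hfst : (ν.compProd η).fst = ν := Measure.fst_compProd ν η
  haveI : Nonempty S2 := Measure.nonempty_of_neZero ν
  constructor
  · rintro ⟨F, hF, hμ⟩
    haveI : Nonempty S1 := ⟨F (Classical.arbitrary S2)⟩
    refine ⟨F, hF, ?_⟩
    have hm : Measurable fun y : S2 => (F y, y) := hF.prodMk measurable_id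
    have h1 : ν.compProd η = ν.compProd (Kernel.deterministic F hF) := by
      rw [compProd_det ν hF]
      have hsw : (ν.compProd η) = μ.map Prod.swap := by
        rw [hdis, Measure.map_map measurable_swap measurable_swap]
        simp [Prod.swap_swap_eq]
      rw [hsw, hμ, Measure.map_map measurable_swap hm]
      rfl
    have h2 := eq_condKernel_of_measure_eq_compProd η (ρ := ν.compProd η) (by rw [hfst])
    have h3 := eq_condKernel_of_measure_eq_compProd (Kernel.deterministic F hF)
      (ρ := ν.compProd η) (by rw [hfst, ← h1])
    rw [hfst] at h2 h3
    filter_upwards [h2, h3] with y hy hy'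
    rw [hy, ← hy', Kernel.deterministic_apply]
  · rintro ⟨F, hF, hae⟩
    refine ⟨F, hF, ?_⟩
    have hm : Measurable fun y : S2 => (y, F y) := measurable_id.prodMk hF
    have h1 : ν.compProd η = ν.compProd (Kernel.deterministic F hF) := by
      apply Measure.compProd_congr
      filter_upwards [hae] with y hy
      rw [hy, Kernel.deterministic_apply]
    rw [hdis, h1, compProd_det ν hF, Measure.map_map measurable_swap hm]
    rfl
end

section
/- Let S1, S2 be Polish spaces, ν a probability measure on S2, and S ⊆ P_ν(S1×S2) nonempty and convex. Then every solution is a strong solution (every μ ∈ S has the form μ(dx×dy)=δ_{F(y)}(dx)ν(dy) for some Borel F) if and only if pointwise uniqueness holds for S. -/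
/-!
If `μ` is a strong solution carried by the graph of `F`, and `μ` is the midpoint of the laws of
`(X₁, Y)` and `(X₂, Y)`, then both laws are carried by that graph, so `X₁ = F ∘ Y = X₂` a.s.

Conversely, disintegrate a solution as `μ = ν ⊗ κ` along `Y` and draw `X₁`, `X₂` conditionally
independently from `κ Y`. Both `(X₁, Y)` and `(X₂, Y)` have law `μ`, so pointwise uniqueness
forces `κ y ⊗ κ y` to live on the diagonal for `ν`-a.e. `y`. Then `κ y` takes only the values
`0` and `1`, hence is a Dirac mass `δ (F y)` on the standard Borel space `S1`, and `F` can be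
chosen measurable.
-/

open MeasureTheory ProbabilityTheory Set
open scoped ENNReal

variable {α β Ω : Type*} [MeasurableSpace α] [MeasurableSpace β] [MeasurableSpace Ω]

namespace MeasureTheory

lemma isZeroOneMeasure_of_prod_compl_diagonal_eq_zero {m : Measure α} [IsProbabilityMeasure m]
    (h : (m.prod m) (diagonal α)ᶜ = 0) : IsZeroOneMeasure m := by
  refine ⟨fun s hs => ?_⟩
  have hsub : s ×ˢ sᶜ ⊆ (diagonal α)ᶜ := fun p hp hdiag => hp.2 (hdiag ▸ hp.1)
  have hmul : m s * (1 - m s) = 0 := by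
    rw [← prob_compl_eq_one_sub hs, ← Measure.prod_prod]
    exact measure_mono_null hsub h
  rcases mul_eq_zero.1 hmul with h0 | h1
  · exact .inl h0
  · exact .inr (le_antisymm prob_le_one (tsub_eq_zero_iff_le.1 h1))

lemma ae_eq_comp_of_map_absolutelyContinuous_map_graph [MeasurableEq β] {P : Measure Ω}
    {ν : Measure α} {X : Ω → β} {Y : Ω → α} {F : α → β} (hX : Measurable X) (hY : Measurable Y)
    (hF : Measurable F) (h : P.map (fun ω => (X ω, Y ω)) ≪ ν.map (fun a => (F a, a))) :
    X =ᵐ[P] F ∘ Y := by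
  have h_graph : ∀ᵐ p ∂ν.map (fun a => (F a, a)), p.1 = F p.2 :=
    (ae_map_iff (hF.prodMk measurable_id).aemeasurable
      (measurableSet_eq_fun measurable_fst (hF.comp measurable_snd))).2 (ae_of_all _ fun _ => rfl)
  exact ae_of_ae_map (hX.prodMk hY).aemeasurable (h.ae_le h_graph)

end MeasureTheory

namespace ProbabilityTheory

lemma Kernel.exists_ae_eq_deterministic_of_ae_isZeroOneMeasure [StandardBorelSpace β]
    [Nonempty β] {ν : Measure α} {κ : Kernel α β} [IsMarkovKernel κ]
    (h : ∀ᵐ a ∂ν, IsZeroOneMeasure (κ a)) :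
    ∃ (f : α → β) (hf : Measurable f), κ =ᵐ[ν] Kernel.deterministic f hf := by
  classical
  obtain ⟨s, hs_ae, hs, hs01⟩ := h.exists_measurable_mem
  let κ' := Kernel.piecewise hs κ
    (Kernel.deterministic (fun _ => Classical.arbitrary β) measurable_const)
  have : IsDeterministic κ' := (isDeterministic_iff_isZeroOneMeasure κ').2 fun a => by
    by_cases ha : a ∈ s
    · simpa [κ', Kernel.piecewise_apply, ha] using hs01 a ha
    · simp only [κ', Kernel.piecewise_apply, ha, if_false]
      infer_instance
  obtain ⟨f, hf, hκ'⟩ := IsDeterministic.exists_eq_deterministic κ'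
  refine ⟨f, hf, ?_⟩
  filter_upwards [hs_ae] with a ha
  rw [← hκ']
  simp [κ', Kernel.piecewise_apply, ha]

lemma Measure.compProd_prod_map_fst {ν : Measure α} [SFinite ν] (κ : Kernel α β) (η : Kernel α Ω)
    [IsSFiniteKernel κ] [IsMarkovKernel η] :
    (ν ⊗ₘ (κ ×ₖ η)).map (Prod.map id Prod.fst) = ν ⊗ₘ κ := by
  rw [← Measure.compProd_map measurable_fst, ← Kernel.fst_eq, Kernel.fst_prod]

lemma Measure.compProd_prod_map_snd {ν : Measure α} [SFinite ν] (κ : Kernel α β) (η : Kernel α Ω)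
    [IsMarkovKernel κ] [IsSFiniteKernel η] :
    (ν ⊗ₘ (κ ×ₖ η)).map (Prod.map id Prod.snd) = ν ⊗ₘ η := by
  rw [← Measure.compProd_map measurable_snd, ← Kernel.snd_eq, Kernel.snd_prod]

lemma Kernel.ae_isZeroOneMeasure_of_fst_ae_eq_snd {ν : Measure α} [SFinite ν] {κ : Kernel α β}
    [IsMarkovKernel κ] (h : (fun ω : α × β × β => ω.2.1) =ᵐ[ν ⊗ₘ (κ ×ₖ κ)] fun ω => ω.2.2) :
    ∀ᵐ a ∂ν, IsZeroOneMeasure (κ a) := by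
  filter_upwards [Measure.ae_ae_of_ae_compProd h] with a ha
  rw [Kernel.prod_apply] at ha
  exact isZeroOneMeasure_of_prod_compl_diagonal_eq_zero (ae_iff.1 ha)

lemma exists_measurable_eq_map_graph_of_coupling_ae_eq [StandardBorelSpace β] {ν : Measure α}
    {μ : Measure (β × α)} [IsProbabilityMeasure μ] (hμ : μ.map Prod.snd = ν)
    (huniq : ∀ P : Measure (α × β × β), IsProbabilityMeasure P →
      P.map (fun ω => (ω.2.1, ω.1)) = μ → P.map (fun ω => (ω.2.2, ω.1)) = μ →
      (fun ω => ω.2.1) =ᵐ[P] fun ω => ω.2.2) :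
    ∃ F : α → β, Measurable F ∧ μ = ν.map fun a => (F a, a) := by
  have : IsProbabilityMeasure ν := hμ ▸ Measure.isProbabilityMeasure_map measurable_snd.aemeasurable
  have : Nonempty β := (nonempty_of_isProbabilityMeasure μ).map Prod.fst
  have hμ_swap : (μ.map Prod.swap).map Prod.swap = μ := by
    rw [Measure.map_map measurable_swap measurable_swap, Prod.swap_swap_eq, Measure.map_id]
  set κ := (μ.map Prod.swap).condKernel
  have hdis : ν ⊗ₘ κ = μ.map Prod.swap := by
    conv_rhs => rw [← (μ.map Prod.swap).disintegrate κ]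
    rw [Measure.fst, Measure.map_map measurable_fst measurable_swap]
    exact congrArg (· ⊗ₘ κ) hμ.symm
  have hlaw : ∀ g : β × β → β, Measurable g → (ν ⊗ₘ (κ ×ₖ κ)).map (Prod.map id g) = ν ⊗ₘ κ →
      (ν ⊗ₘ (κ ×ₖ κ)).map (fun ω => (g ω.2, ω.1)) = μ := fun g hg hmap => by
    rw [← hμ_swap, ← hdis, ← hmap, Measure.map_map measurable_swap (measurable_id.prodMap hg)]
    rfl
  have h_ae_eq := huniq _ inferInstance
    (hlaw _ measurable_fst (Measure.compProd_prod_map_fst κ κ))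
    (hlaw _ measurable_snd (Measure.compProd_prod_map_snd κ κ))
  obtain ⟨F, hF, hκF⟩ := Kernel.exists_ae_eq_deterministic_of_ae_isZeroOneMeasure
    (Kernel.ae_isZeroOneMeasure_of_fst_ae_eq_snd h_ae_eq)
  refine ⟨F, hF, ?_⟩
  rw [← hμ_swap, ← hdis, Measure.compProd_congr hκF, Measure.compProd_deterministic,
    Measure.map_map measurable_swap (by fun_prop)]
  rfl

end ProbabilityTheory

theorem stmt3_general
    {S1 S2 : Type} [MeasurableSpace S1] [TopologicalSpace S1] [PolishSpace S1] [BorelSpace S1]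
    [MeasurableSpace S2]
    (ν : Measure S2)
    (S : Set (Measure (S1 × S2)))
    (hS : ∀ μ ∈ S, IsProbabilityMeasure μ ∧ μ.map Prod.snd = ν)
    (hconv : ∀ μ1 ∈ S, ∀ μ2 ∈ S, ∀ p : ℝ≥0∞, p ≤ 1 → p • μ1 + (1 - p) • μ2 ∈ S) :
    (∀ μ ∈ S, ∃ F : S2 → S1, Measurable F ∧ μ = ν.map (fun y => (F y, y)))
    ↔ (∀ (Ω : Type) (mΩ : MeasurableSpace Ω) (P : Measure Ω), IsProbabilityMeasure P →
        ∀ (X1 X2 : Ω → S1) (Y : Ω → S2), Measurable X1 → Measurable X2 → Measurable Y →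
          P.map (fun ω => (X1 ω, Y ω)) ∈ S → P.map (fun ω => (X2 ω, Y ω)) ∈ S →
          X1 =ᵐ[P] X2) := by
  constructor
  · intro hstrong Ω _ P _ X1 X2 Y hX1 hX2 hY h1 h2
    obtain ⟨F, hF, hmid⟩ := hstrong _ (hconv _ h1 _ h2 2⁻¹ (ENNReal.inv_le_one.2 one_le_two))
    have hac1 : P.map (fun ω => (X1 ω, Y ω)) ≪ ν.map (fun y => (F y, y)) :=
      hmid ▸ (Measure.absolutelyContinuous_smul (by simp)).add_right _
    have hac2 : P.map (fun ω => (X2 ω, Y ω)) ≪ ν.map (fun y => (F y, y)) :=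
      hmid ▸ (Measure.absolutelyContinuous_smul (by simp [ENNReal.one_sub_inv_two])).add_right' _
    exact (ae_eq_comp_of_map_absolutelyContinuous_map_graph hX1 hY hF hac1).trans
      (ae_eq_comp_of_map_absolutelyContinuous_map_graph hX2 hY hF hac2).symm
  · intro huniq μ hμ
    have := (hS μ hμ).1
    exact exists_measurable_eq_map_graph_of_coupling_ae_eq (hS μ hμ).2 fun P hP hlaw1 hlaw2 =>
      huniq _ _ P hP _ _ _ measurable_snd.fst measurable_snd.snd measurable_fst
        (hlaw1 ▸ hμ) (hlaw2 ▸ hμ)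

/-- Corollary 1.7 of Kurtz: if the set of joint solution measures is nonempty and
convex, then every solution is strong iff pointwise uniqueness holds. -/
theorem stmt3
    {S1 S2 : Type} [MeasurableSpace S1] [TopologicalSpace S1] [PolishSpace S1] [BorelSpace S1]
    [MeasurableSpace S2] [TopologicalSpace S2] [PolishSpace S2] [BorelSpace S2]
    (ν : Measure S2) [IsProbabilityMeasure ν]
    (S : Set (Measure (S1 × S2)))
    (hS : ∀ μ ∈ S, IsProbabilityMeasure μ ∧ μ.map Prod.snd = ν)
    (hne : S.Nonempty)
    (hconv : ∀ μ1 ∈ S, ∀ μ2 ∈ S, ∀ p : ℝ≥0∞, p ≤ 1 → p • μ1 + (1 - p) • μ2 ∈ S) :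
    (∀ μ ∈ S, ∃ F : S2 → S1, Measurable F ∧ μ = ν.map (fun y => (F y, y)))
    ↔ (∀ (Ω : Type) (mΩ : MeasurableSpace Ω) (P : Measure Ω), IsProbabilityMeasure P →
        ∀ (X1 X2 : Ω → S1) (Y : Ω → S2), Measurable X1 → Measurable X2 → Measurable Y →
          P.map (fun ω => (X1 ω, Y ω)) ∈ S → P.map (fun ω => (X2 ω, Y ω)) ∈ S →
          X1 =ᵐ[P] X2) :=
  stmt3_general ν S hS hconv
end

section
/- Suppose Y ~ ν on a Polish space S2, ξ1 and ξ2 are uniform on [0,1], and Y, ξ1, ξ2 are mutually independent. If G1, G2 : S2×[0,1] → S1 are Borel measurable and G1(Y,ξ1) = G2(Y,ξ2) almost surely, then there exists a Borel measurable F : S2 → S1 with F(Y) = G1(Y,ξ1) = G2(Y,ξ2) almost surely. -/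
/-!
Transport the almost sure identity to the law `ν ⊗ λ ⊗ λ` of `(Y, ξ1, ξ2)` and apply Fubini with
the `ξ2`-coordinate outermost: for `λ`-almost every `t₀`, `G1 (y, s) = G2 (y, t₀)` for
`ν ⊗ λ`-almost every `(y, s)`. Fixing one such `t₀`, `F := G2 (·, t₀)` works; no measurable
selection is needed.
-/

open MeasureTheory

namespace MeasureTheory.Measure

variable {β γ₁ γ₂ S : Type*} [MeasurableSpace β] [MeasurableSpace γ₁] [MeasurableSpace γ₂]
  {ν : Measure β} {μ₁ : Measure γ₁} {μ₂ : Measure γ₂} [SFinite μ₁] [SFinite μ₂]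

lemma quasiMeasurePreserving_fst_snd_fst :
    QuasiMeasurePreserving (fun p : β × γ₁ × γ₂ => (p.1, p.2.1))
      (ν.prod (μ₁.prod μ₂)) (ν.prod μ₁) :=
  quasiMeasurePreserving_fst.comp (measurePreserving_prodAssoc ν μ₁ μ₂).symm.quasiMeasurePreserving

lemma exists_ae_eq_of_ae_prod_prod_eq [SFinite ν] [NeZero μ₂]
    {G₁ : β × γ₁ → S} {G₂ : β × γ₂ → S}
    (h : ∀ᵐ p ∂ν.prod (μ₁.prod μ₂), G₁ (p.1, p.2.1) = G₂ (p.1, p.2.2)) :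
    ∃ t₀, ∀ᵐ p ∂ν.prod (μ₁.prod μ₂), G₁ (p.1, p.2.1) = G₂ (p.1, t₀) := by
  have hswap : ∀ᵐ q ∂μ₂.prod (ν.prod μ₁), G₁ q.2 = G₂ (q.2.1, q.1) :=
    ((measurePreserving_prodAssoc ν μ₁ μ₂).comp
      measurePreserving_swap).quasiMeasurePreserving.ae h
  obtain ⟨t₀, ht₀⟩ := (ae_ae_of_ae_prod hswap).exists
  exact ⟨t₀, quasiMeasurePreserving_fst_snd_fst.ae ht₀⟩

end MeasureTheory.Measure

theorem stmt4_general
    {S1 S2 : Type} [MeasurableSpace S1] [TopologicalSpace S1] [PolishSpace S1] [BorelSpace S1]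
    [MeasurableSpace S2]
    (ν : Measure S2) [IsProbabilityMeasure ν]
    {Ω : Type} [MeasurableSpace Ω] (P : Measure Ω)
    (Y : Ω → S2) (ξ1 ξ2 : Ω → ℝ)
    (hY : Measurable Y) (hξ1 : Measurable ξ1) (hξ2 : Measurable ξ2)
    (hlaw : P.map (fun ω => (Y ω, ξ1 ω, ξ2 ω)) =
      ν.prod ((volume.restrict (Set.Icc (0:ℝ) 1)).prod (volume.restrict (Set.Icc (0:ℝ) 1))))
    (G1 G2 : S2 × ℝ → S1) (hG1 : Measurable G1) (hG2 : Measurable G2)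
    (heq : (fun ω => G1 (Y ω, ξ1 ω)) =ᵐ[P] fun ω => G2 (Y ω, ξ2 ω)) :
    ∃ F : S2 → S1, Measurable F ∧
      (fun ω => F (Y ω)) =ᵐ[P] (fun ω => G1 (Y ω, ξ1 ω)) ∧
      (fun ω => F (Y ω)) =ᵐ[P] (fun ω => G2 (Y ω, ξ2 ω)) := by
  have : IsProbabilityMeasure (volume.restrict (Set.Icc (0:ℝ) 1)) :=
    ⟨by simp [Real.volume_Icc]⟩
  have hT : Measurable fun ω => (Y ω, ξ1 ω, ξ2 ω) := hY.prodMk (hξ1.prodMk hξ2)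
  have hcanon : ∀ᵐ p ∂ν.prod ((volume.restrict (Set.Icc (0:ℝ) 1)).prod
      (volume.restrict (Set.Icc (0:ℝ) 1))), G1 (p.1, p.2.1) = G2 (p.1, p.2.2) := by
    -- `S1` is standard Borel, so its diagonal is measurable
    rw [← hlaw, ae_map_iff hT.aemeasurable (measurableSet_eq_fun (by fun_prop) (by fun_prop))]
    exact heq
  obtain ⟨t₀, ht₀⟩ := Measure.exists_ae_eq_of_ae_prod_prod_eq hcanon
  have hF : (fun ω => G2 (Y ω, t₀)) =ᵐ[P] fun ω => G1 (Y ω, ξ1 ω) :=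
    (ae_of_ae_map hT.aemeasurable (hlaw ▸ ht₀)).mono fun _ h => h.symm
  exact ⟨fun y => G2 (y, t₀), by fun_prop, hF, hF.trans heq⟩

/-- Lemma A.2 of Kurtz (2007): if two randomizations agree a.s., the common value
is a.s. a Borel function of `Y` alone. -/
theorem stmt4
    {S1 S2 : Type} [MeasurableSpace S1] [TopologicalSpace S1] [PolishSpace S1] [BorelSpace S1]
    [MeasurableSpace S2] [TopologicalSpace S2] [PolishSpace S2] [BorelSpace S2]
    (ν : Measure S2) [IsProbabilityMeasure ν]
    {Ω : Type} [MeasurableSpace Ω] (P : Measure Ω) [IsProbabilityMeasure P]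
    (Y : Ω → S2) (ξ1 ξ2 : Ω → ℝ)
    (hY : Measurable Y) (hξ1 : Measurable ξ1) (hξ2 : Measurable ξ2)
    (hlaw : P.map (fun ω => (Y ω, ξ1 ω, ξ2 ω)) =
      ν.prod ((volume.restrict (Set.Icc (0:ℝ) 1)).prod (volume.restrict (Set.Icc (0:ℝ) 1))))
    (G1 G2 : S2 × ℝ → S1) (hG1 : Measurable G1) (hG2 : Measurable G2)
    (heq : (fun ω => G1 (Y ω, ξ1 ω)) =ᵐ[P] fun ω => G2 (Y ω, ξ2 ω)) :
    ∃ F : S2 → S1, Measurable F ∧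
      (fun ω => F (Y ω)) =ᵐ[P] (fun ω => G1 (Y ω, ξ1 ω)) ∧
      (fun ω => F (Y ω)) =ᵐ[P] (fun ω => G2 (Y ω, ξ2 ω)) :=
  stmt4_general ν P Y ξ1 ξ2 hY hξ1 hξ2 hlaw G1 G2 hG1 hG2 heq
end

section
/- Suppose {F^Y_α : α ∈ A} and {F^X_α : α ∈ A} are filtrations indexed by a partially ordered set A, and X is C-compatible with Y, i.e., for each α, E[h(Y)|F^X_α ∨ F^Y_α] = E[h(Y)|F^Y_α] for all bounded Borel h on S2. Then every {F^Y_α}-martingale M is a {F^Y_α ∨ F^X_α}-martingale. -/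
open MeasureTheory

theorem condExp_ae_eq_of_stronglyMeasurable_comap {Ω S : Type*} [MeasurableSpace Ω]
    [mS : MeasurableSpace S] {μ : Measure Ω} {Y : Ω → S} {𝓖 𝓗 : MeasurableSpace Ω}
    (hY : ∀ h : S → ℝ, Measurable h → Integrable (fun ω => h (Y ω)) μ →
      μ[fun ω => h (Y ω)|𝓗] =ᵐ[μ] μ[fun ω => h (Y ω)|𝓖])
    {n : MeasurableSpace S} (hn : n ≤ mS) {f : Ω → ℝ}
    (hf : StronglyMeasurable[n.comap Y] f) (hf_int : Integrable f μ) :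
    μ[f|𝓗] =ᵐ[μ] μ[f|𝓖] := by
  obtain ⟨g, hg, rfl⟩ := hf.exists_eq_measurable_comp
  exact hY g (hg.measurable.mono hn le_rfl) hf_int

theorem stmt6_general
    {S1 S2 : Type} [mS2 : MeasurableSpace S2]
    {Ω : Type} [MeasurableSpace Ω] (P : Measure Ω) (X : Ω → S1) (Y : Ω → S2)
    {A : Type} [PartialOrder A]
    (B1 : A → MeasurableSpace S1)
    (B2 : A → MeasurableSpace S2) (hB2 : ∀ α, B2 α ≤ mS2)
    -- C-compatibility of X with Y (for integrable h, equivalently bounded Borel h)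
    (hcompat : ∀ (α : A) (h : S2 → ℝ), Measurable h → Integrable (fun ω => h (Y ω)) P →
      P[fun ω => h (Y ω)|MeasurableSpace.comap X (B1 α) ⊔ MeasurableSpace.comap Y (B2 α)]
        =ᵐ[P] P[fun ω => h (Y ω)|MeasurableSpace.comap Y (B2 α)])
    (M : A → Ω → ℝ)
    (hadapted : ∀ α, StronglyMeasurable[MeasurableSpace.comap Y (B2 α)] (M α))
    (hint : ∀ α, Integrable (M α) P)
    (hmart : ∀ α1 α2 : A, α1 ≤ α2 →
      P[M α2|MeasurableSpace.comap Y (B2 α1)] =ᵐ[P] M α1) :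
    ∀ α1 α2 : A, α1 ≤ α2 →
      P[M α2|MeasurableSpace.comap Y (B2 α1) ⊔ MeasurableSpace.comap X (B1 α1)]
        =ᵐ[P] M α1 := by
  intro α1 α2 h12
  rw [sup_comm]
  exact (condExp_ae_eq_of_stronglyMeasurable_comap (hcompat α1) (hB2 α2) (hadapted α2)
    (hint α2)).trans (hmart α1 α2 h12)

/-- Lemma 2.6 of Kurtz: if `{F^Y_α}` and `{F^X_α}` are filtrations and `X` is
`C`-compatible with `Y`, then every `{F^Y_α}`-martingale is a
`{F^Y_α ∨ F^X_α}`-martingale. -/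
theorem stmt6
    {S1 S2 : Type} [mS1 : MeasurableSpace S1] [TopologicalSpace S1] [PolishSpace S1] [BorelSpace S1]
    [mS2 : MeasurableSpace S2] [TopologicalSpace S2] [PolishSpace S2] [BorelSpace S2]
    {Ω : Type} [MeasurableSpace Ω] (P : Measure Ω) [IsProbabilityMeasure P]
    (X : Ω → S1) (Y : Ω → S2) (hX : Measurable X) (hY : Measurable Y)
    {A : Type} [PartialOrder A]
    (B1 : A → MeasurableSpace S1) (hB1 : ∀ α, B1 α ≤ mS1) (hB1mono : Monotone B1)
    (B2 : A → MeasurableSpace S2) (hB2 : ∀ α, B2 α ≤ mS2) (hB2mono : Monotone B2)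
    -- C-compatibility of X with Y (for integrable h, equivalently bounded Borel h)
    (hcompat : ∀ (α : A) (h : S2 → ℝ), Measurable h → Integrable (fun ω => h (Y ω)) P →
      P[fun ω => h (Y ω)|MeasurableSpace.comap X (B1 α) ⊔ MeasurableSpace.comap Y (B2 α)]
        =ᵐ[P] P[fun ω => h (Y ω)|MeasurableSpace.comap Y (B2 α)])
    (M : A → Ω → ℝ)
    (hadapted : ∀ α, StronglyMeasurable[MeasurableSpace.comap Y (B2 α)] (M α))
    (hint : ∀ α, Integrable (M α) P)
    (hmart : ∀ α1 α2 : A, α1 ≤ α2 →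
      P[M α2|MeasurableSpace.comap Y (B2 α1)] =ᵐ[P] M α1) :
    ∀ α1 α2 : A, α1 ≤ α2 →
      P[M α2|MeasurableSpace.comap Y (B2 α1) ⊔ MeasurableSpace.comap X (B1 α1)]
        =ᵐ[P] M α1 :=
  stmt6_general (mS2 := mS2) P X Y B1 B2 hB2 hcompat M hadapted hint hmart
end

section
/- Let X be an S1-valued and Y an S2-valued random variable. X is C-compatible with Y (i.e., for each α ∈ A and all bounded Borel h on S2, E[h(Y)|F^X_α ∨ F^Y_α] = E[h(Y)|F^Y_α]) if and only if for each α ∈ A and each bounded B^{S1}_α-measurable g, E[g(X)|σ(Y)] = E[g(X)|F^Y_α] almost surely. -/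
/-!
Write `F = F^X_α`, `G = σ(Y)` and `H = F^Y_α ≤ G`. The symmetry `E[f E[g|H]] = E[E[f|H] g]` of
conditional expectation, together with the pull-out property, moves the conditioning from one side
to the other: for `F`-measurable `ψ` and `s ∈ G`,
`E[ψ 1_s] = E[ψ E[1_s|F ⊔ H]] = E[ψ E[1_s|H]] = E[E[ψ|H] 1_s]`, which is the forward direction.
Conversely, for `G`-measurable `φ`, `a ∈ F` and `b ∈ H`, the same chain applied to `1_b φ` and
`1_a` gives `∫_{a ∩ b} φ = ∫_{a ∩ b} E[φ|H]`, and the sets `a ∩ b` form a π-system generating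
`F ⊔ H`. In both directions the hypothesis is only needed for indicators.
-/

open MeasureTheory Set MeasurableSpace

section Indicator
variable {α : Type*}

lemma abs_indicator_one_le_one (s : Set α) (x : α) : |s.indicator (1 : α → ℝ) x| ≤ 1 := by
  by_cases hx : x ∈ s <;> simp [hx]

lemma mul_indicator_one_eq_indicator (f : α → ℝ) (s : Set α) :
    f * s.indicator 1 = s.indicator f := by
  ext x
  simp only [Pi.mul_apply, ← indicator_mul_right, Pi.one_apply, mul_one]

lemma indicator_preimage_one {β : Type*} (Y : α → β) (B : Set β) :
    (Y ⁻¹' B).indicator (1 : α → ℝ) = fun x => B.indicator 1 (Y x) :=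
  funext fun _ => indicator_comp_right (g := (1 : β → ℝ)) Y

end Indicator

section Integral
variable {Ω : Type*} {m m0 : MeasurableSpace Ω} {P : Measure Ω} {f g : Ω → ℝ} {s : Set Ω}

lemma integral_mul_indicator_one (hs : MeasurableSet s) :
    ∫ ω, f ω * s.indicator 1 ω ∂P = ∫ ω in s, f ω ∂P := by
  rw [← integral_indicator hs]
  exact integral_congr_ae (ae_of_all _ (congrFun (mul_indicator_one_eq_indicator f s)))

lemma MeasureTheory.Integrable.mul_indicator_one (hf : Integrable f P) (hs : MeasurableSet s) :
    Integrable (f * s.indicator 1) P := by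
  rw [mul_indicator_one_eq_indicator]
  exact hf.indicator hs

lemma MeasureTheory.Integrable.mul_condExp_indicator_one (hf : Integrable f P) :
    Integrable (f * P[s.indicator 1|m]) P :=
  hf.mul_bdd integrable_condExp.aestronglyMeasurable (c := 1)
    (ae_bdd_abs_condExp_of_ae_bdd_abs (ae_of_all _ (abs_indicator_one_le_one s)))

lemma integral_mul_eq_integral_mul_condExp (hm : m ≤ m0) [SigmaFinite (P.trim hm)]
    (hf : StronglyMeasurable[m] f) (hfg : Integrable (f * g) P) (hg : Integrable g P) :
    ∫ ω, f ω * g ω ∂P = ∫ ω, f ω * P[g|m] ω ∂P := by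
  rw [← integral_condExp hm]
  exact integral_congr_ae (condExp_mul_of_stronglyMeasurable_left hf hfg hg)

lemma integral_mul_condExp_comm (hm : m ≤ m0) [SigmaFinite (P.trim hm)]
    (hf : Integrable f P) (hg : Integrable g P)
    (hfg : Integrable (f * P[g|m]) P) (hgf : Integrable (P[f|m] * g) P) :
    ∫ ω, f ω * P[g|m] ω ∂P = ∫ ω, P[f|m] ω * g ω ∂P := by
  calc ∫ ω, f ω * P[g|m] ω ∂P = ∫ ω, P[g|m] ω * f ω ∂P := by simp_rw [mul_comm]
    _ = ∫ ω, P[g|m] ω * P[f|m] ω ∂P :=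
      integral_mul_eq_integral_mul_condExp hm stronglyMeasurable_condExp
        (by rwa [mul_comm]) hf
    _ = ∫ ω, P[f|m] ω * P[g|m] ω ∂P := by simp_rw [mul_comm]
    _ = ∫ ω, P[f|m] ω * g ω ∂P :=
      (integral_mul_eq_integral_mul_condExp hm stronglyMeasurable_condExp hgf hg).symm

end Integral

section PiSystem

lemma IsPiSystem.image2_inter {α : Type*} {C D : Set (Set α)} (hC : IsPiSystem C)
    (hD : IsPiSystem D) : IsPiSystem (image2 (· ∩ ·) C D) := by
  rintro _ ⟨s₁, hs₁, t₁, ht₁, rfl⟩ _ ⟨s₂, hs₂, t₂, ht₂, rfl⟩ hst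
  rw [inter_inter_inter_comm] at hst ⊢
  exact mem_image2_of_mem (hC _ hs₁ _ hs₂ (Nonempty.left hst))
    (hD _ ht₁ _ ht₂ (Nonempty.right hst))

lemma MeasurableSpace.sup_eq_generateFrom_image2_inter {α : Type*} (m₁ m₂ : MeasurableSpace α) :
    m₁ ⊔ m₂ =
      generateFrom (image2 (· ∩ ·) {s | MeasurableSet[m₁] s} {t | MeasurableSet[m₂] t}) := by
  refine le_antisymm (sup_le (fun s hs => ?_) (fun t ht => ?_)) (generateFrom_le ?_)
  · exact measurableSet_generateFrom ⟨s, hs, univ, MeasurableSet.univ, inter_univ s⟩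
  · exact measurableSet_generateFrom ⟨univ, MeasurableSet.univ, t, ht, univ_inter t⟩
  · rintro _ ⟨s, hs, t, ht, rfl⟩
    exact (le_sup_left (a := m₁) s hs).inter (le_sup_right (a := m₁) t ht)

variable {Ω : Type*} {m m0 : MeasurableSpace Ω} {P : Measure Ω} {f g : Ω → ℝ}

lemma setIntegral_eq_of_isPiSystem {S : Set (Set Ω)} (hm : m ≤ m0) (hmS : m = generateFrom S)
    (hS : IsPiSystem S) (hf : Integrable f P) (hg : Integrable g P)
    (huniv : ∫ ω, f ω ∂P = ∫ ω, g ω ∂P) (hfg : ∀ s ∈ S, ∫ ω in s, f ω ∂P = ∫ ω in s, g ω ∂P)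
    {t : Set Ω} (ht : MeasurableSet[m] t) : ∫ ω in t, f ω ∂P = ∫ ω in t, g ω ∂P := by
  induction t, ht using induction_on_inter hmS hS with
  | empty => simp
  | basic s hs => exact hfg s hs
  | compl s hs ih =>
    have hf_add := integral_add_compl (hm s hs) hf
    have hg_add := integral_add_compl (hm s hs) hg
    linarith
  | iUnion s hdisj hs ih =>
    rw [integral_iUnion (fun i => hm _ (hs i)) hdisj hf.integrableOn,
      integral_iUnion (fun i => hm _ (hs i)) hdisj hg.integrableOn]
    exact tsum_congr ih

lemma ae_eq_condExp_sup_of_forall_setIntegral_inter_eq {m₁ m₂ : MeasurableSpace Ω}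
    (hm₁ : m₁ ≤ m0) (hm₂ : m₂ ≤ m0) [SigmaFinite (P.trim (sup_le hm₁ hm₂))]
    (hf : Integrable f P) (hgm : StronglyMeasurable[m₁ ⊔ m₂] g) (hg : Integrable g P)
    (hgf : ∀ s t, MeasurableSet[m₁] s → MeasurableSet[m₂] t →
      ∫ ω in s ∩ t, g ω ∂P = ∫ ω in s ∩ t, f ω ∂P) :
    g =ᵐ[P] P[f|m₁ ⊔ m₂] := by
  have huniv : ∫ ω, g ω ∂P = ∫ ω, f ω ∂P := by
    simpa using hgf univ univ MeasurableSet.univ MeasurableSet.univ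
  refine ae_eq_condExp_of_forall_setIntegral_eq (sup_le hm₁ hm₂) hf
    (fun s _ _ => hg.integrableOn) (fun t ht _ => ?_) hgm.aestronglyMeasurable
  refine setIntegral_eq_of_isPiSystem (sup_le hm₁ hm₂) (sup_eq_generateFrom_image2_inter m₁ m₂)
    ((@isPiSystem_measurableSet Ω m₁).image2_inter (@isPiSystem_measurableSet Ω m₂))
    hg hf huniv ?_ ht
  rintro _ ⟨s, hs, t, ht, rfl⟩
  exact hgf s t hs ht

end PiSystem

section CondIndep
variable {Ω : Type*} {F G H m0 : MeasurableSpace Ω} {P : Measure Ω} [IsFiniteMeasure P]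

lemma condExp_ae_eq_of_condExp_indicator_sup_ae_eq (hF : F ≤ m0) (hHG : H ≤ G) (hG : G ≤ m0)
    (hcomp : ∀ s, MeasurableSet[G] s →
      P[s.indicator (1 : Ω → ℝ)|F ⊔ H] =ᵐ[P] P[s.indicator 1|H])
    {ψ : Ω → ℝ} (hψm : StronglyMeasurable[F] ψ) (hψ : Integrable ψ P) :
    P[ψ|G] =ᵐ[P] P[ψ|H] := by
  have hH : H ≤ m0 := hHG.trans hG
  refine (ae_eq_condExp_of_forall_setIntegral_eq hG hψ
    (fun s _ _ => integrable_condExp.integrableOn) (fun s hs _ => ?_)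
    (stronglyMeasurable_condExp.mono hHG).aestronglyMeasurable).symm
  have hs₀ : MeasurableSet s := hG s hs
  have h1 : Integrable (s.indicator (1 : Ω → ℝ)) P := (integrable_const 1).indicator hs₀
  calc ∫ ω in s, P[ψ|H] ω ∂P = ∫ ω, P[ψ|H] ω * s.indicator 1 ω ∂P :=
        (integral_mul_indicator_one hs₀).symm
    _ = ∫ ω, ψ ω * P[s.indicator 1|H] ω ∂P :=
        (integral_mul_condExp_comm hH hψ h1 hψ.mul_condExp_indicator_one
          (integrable_condExp.mul_indicator_one hs₀)).symm
    _ = ∫ ω, ψ ω * P[s.indicator 1|F ⊔ H] ω ∂P :=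
        integral_congr_ae ((hcomp s hs).mono fun ω hω => congrArg (ψ ω * ·) hω.symm)
    _ = ∫ ω, ψ ω * s.indicator 1 ω ∂P :=
        (integral_mul_eq_integral_mul_condExp (sup_le hF hH) (hψm.mono le_sup_left)
          (hψ.mul_indicator_one hs₀) h1).symm
    _ = ∫ ω in s, ψ ω ∂P := integral_mul_indicator_one hs₀

lemma condExp_sup_ae_eq_of_condExp_indicator_ae_eq (hF : F ≤ m0) (hHG : H ≤ G) (hG : G ≤ m0)
    (hcomp : ∀ s, MeasurableSet[F] s → P[s.indicator (1 : Ω → ℝ)|G] =ᵐ[P] P[s.indicator 1|H])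
    {φ : Ω → ℝ} (hφm : StronglyMeasurable[G] φ) (hφ : Integrable φ P) :
    P[φ|F ⊔ H] =ᵐ[P] P[φ|H] := by
  have hH : H ≤ m0 := hHG.trans hG
  refine (ae_eq_condExp_sup_of_forall_setIntegral_inter_eq hF hH hφ
    (stronglyMeasurable_condExp.mono le_sup_right) integrable_condExp fun s t hs ht => ?_).symm
  have hs₀ : MeasurableSet s := hF s hs
  have ht₀ : MeasurableSet t := hH t ht
  have h1 : Integrable (s.indicator (1 : Ω → ℝ)) P := (integrable_const 1).indicator hs₀
  have htφ : Integrable (t.indicator φ) P := hφ.indicator ht₀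
  calc ∫ ω in s ∩ t, P[φ|H] ω ∂P = ∫ ω in s, t.indicator (P[φ|H]) ω ∂P :=
        (setIntegral_indicator ht₀).symm
    _ = ∫ ω in s, P[t.indicator φ|H] ω ∂P :=
        integral_congr_ae (ae_restrict_of_ae (condExp_indicator hφ ht).symm)
    _ = ∫ ω, P[t.indicator φ|H] ω * s.indicator 1 ω ∂P := (integral_mul_indicator_one hs₀).symm
    _ = ∫ ω, t.indicator φ ω * P[s.indicator 1|H] ω ∂P :=
        (integral_mul_condExp_comm hH htφ h1 htφ.mul_condExp_indicator_one
          (integrable_condExp.mul_indicator_one hs₀)).symm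
    _ = ∫ ω, t.indicator φ ω * P[s.indicator 1|G] ω ∂P :=
        integral_congr_ae
          ((hcomp s hs).mono fun ω hω => congrArg (t.indicator φ ω * ·) hω.symm)
    _ = ∫ ω, t.indicator φ ω * s.indicator 1 ω ∂P :=
        (integral_mul_eq_integral_mul_condExp hG (hφm.indicator (hHG t ht))
          (htφ.mul_indicator_one hs₀) h1).symm
    _ = ∫ ω in s, t.indicator φ ω ∂P := integral_mul_indicator_one hs₀
    _ = ∫ ω in s ∩ t, φ ω ∂P := setIntegral_indicator ht₀

end CondIndep

lemma integrable_comp_of_bounded {Ω S : Type*} [MeasurableSpace Ω] [MeasurableSpace S]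
    {P : Measure Ω} [IsFiniteMeasure P] {X : Ω → S} (hX : Measurable X) {g : S → ℝ}
    (hg : Measurable g) (hgb : ∃ C, ∀ x, |g x| ≤ C) : Integrable (fun ω => g (X ω)) P :=
  let ⟨C, hC⟩ := hgb
  .of_bound (hg.comp hX).aestronglyMeasurable C (ae_of_all _ fun ω => hC (X ω))

theorem stmt7_general
    {S1 S2 : Type} [mS1 : MeasurableSpace S1]
    [mS2 : MeasurableSpace S2]
    {Ω : Type} [MeasurableSpace Ω] (P : Measure Ω) [IsProbabilityMeasure P]
    (X : Ω → S1) (Y : Ω → S2) (hX : Measurable X) (hY : Measurable Y)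
    {A : Type}
    (B1 : A → MeasurableSpace S1) (hB1 : ∀ α, B1 α ≤ mS1)
    (B2 : A → MeasurableSpace S2) (hB2 : ∀ α, B2 α ≤ mS2) :
    (∀ (α : A) (h : S2 → ℝ), Measurable h → (∃ C, ∀ x, |h x| ≤ C) →
      P[fun ω => h (Y ω)|MeasurableSpace.comap X (B1 α) ⊔ MeasurableSpace.comap Y (B2 α)]
        =ᵐ[P] P[fun ω => h (Y ω)|MeasurableSpace.comap Y (B2 α)])
    ↔ (∀ (α : A) (g : S1 → ℝ), Measurable[B1 α] g → (∃ C, ∀ x, |g x| ≤ C) →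
      P[fun ω => g (X ω)|MeasurableSpace.comap Y mS2]
        =ᵐ[P] P[fun ω => g (X ω)|MeasurableSpace.comap Y (B2 α)]) := by
  have hF α : MeasurableSpace.comap X (B1 α) ≤ ‹MeasurableSpace Ω› :=
    (comap_mono (hB1 α)).trans hX.comap_le
  have hHG α : MeasurableSpace.comap Y (B2 α) ≤ MeasurableSpace.comap Y mS2 := comap_mono (hB2 α)
  constructor
  · intro hcomp α g hg hgb
    refine condExp_ae_eq_of_condExp_indicator_sup_ae_eq (hF α) (hHG α) hY.comap_le ?_
      (hg.comp (comap_measurable X)).stronglyMeasurable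
      (integrable_comp_of_bounded hX (hg.mono (hB1 α) le_rfl) hgb)
    rintro _ ⟨B, hB, rfl⟩
    rw [indicator_preimage_one]
    exact hcomp α _ ((measurable_indicator_const_iff 1).2 hB) ⟨1, abs_indicator_one_le_one B⟩
  · intro hcomp α h hh hhb
    refine condExp_sup_ae_eq_of_condExp_indicator_ae_eq (hF α) (hHG α) hY.comap_le ?_
      (hh.comp (comap_measurable Y)).stronglyMeasurable (integrable_comp_of_bounded hY hh hhb)
    rintro _ ⟨B, hB, rfl⟩
    rw [indicator_preimage_one]
    exact hcomp α _ ((measurable_indicator_const_iff 1).2 hB) ⟨1, abs_indicator_one_le_one B⟩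

/-- Lemma 2.12 of Kurtz: `X` is `C`-compatible with `Y` iff for each `α` and each
bounded `B^{S1}_α`-measurable `g`, `E[g(X)|Y] = E[g(X)|F^Y_α]` a.s. -/
theorem stmt7
    {S1 S2 : Type} [mS1 : MeasurableSpace S1] [TopologicalSpace S1] [PolishSpace S1] [BorelSpace S1]
    [mS2 : MeasurableSpace S2] [TopologicalSpace S2] [PolishSpace S2] [BorelSpace S2]
    {Ω : Type} [MeasurableSpace Ω] (P : Measure Ω) [IsProbabilityMeasure P]
    (X : Ω → S1) (Y : Ω → S2) (hX : Measurable X) (hY : Measurable Y)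
    {A : Type}
    (B1 : A → MeasurableSpace S1) (hB1 : ∀ α, B1 α ≤ mS1)
    (B2 : A → MeasurableSpace S2) (hB2 : ∀ α, B2 α ≤ mS2) :
    (∀ (α : A) (h : S2 → ℝ), Measurable h → (∃ C, ∀ x, |h x| ≤ C) →
      P[fun ω => h (Y ω)|MeasurableSpace.comap X (B1 α) ⊔ MeasurableSpace.comap Y (B2 α)]
        =ᵐ[P] P[fun ω => h (Y ω)|MeasurableSpace.comap Y (B2 α)])
    ↔ (∀ (α : A) (g : S1 → ℝ), Measurable[B1 α] g → (∃ C, ∀ x, |g x| ≤ C) →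
      P[fun ω => g (X ω)|MeasurableSpace.comap Y mS2]
        =ᵐ[P] P[fun ω => g (X ω)|MeasurableSpace.comap Y (B2 α)]) :=
  stmt7_general (mS1 := mS1) (mS2 := mS2) P X Y hX hY B1 hB1 B2 hB2
end

section
/- Suppose X = F(Y) a.s. for a Borel F : S2 → S1 and X is C-compatible with Y. Then F^X_α ⊆ F^Y_α for every α ∈ A. Conversely, if F^X_α ⊆ F^Y_α for each α ∈ A and σ(X) ⊆ ∨_{α∈A} F^X_α, then X is C-compatible with Y and X = F(Y) a.s. for some Borel measurable F. -/
open MeasureTheory ProbabilityTheory MeasurableSpace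
open scoped symmDiff

/-- `s` belongs to the `P`-completion of the σ-algebra `m`. -/
def InCompletion {Ω : Type} [MeasurableSpace Ω] (P : Measure Ω)
    (m : MeasurableSpace Ω) (s : Set Ω) : Prop :=
  ∃ t, MeasurableSet[m] t ∧ P (s ∆ t) = 0

/-! If `X = F(Y)`, then `1{X ∈ B} = 1{F(Y) ∈ B}` is already measurable for
`F^X_α ∨ F^Y_α`, so compatibility makes it a.s. equal to its `F^Y_α`-conditional
expectation, i.e. to an `F^Y_α`-measurable function.

Conversely, the `P`-completion of a σ-algebra is again a σ-algebra, and conditional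
expectation does not distinguish a σ-algebra from anything between it and its completion;
this gives compatibility. For the strong part, `σ(X)` lies in the completion of `σ(Y)`. Embedding
`S1` into Cantor space `ℕ → Bool`, every coordinate of `X` is a.s. the indicator of a
`σ(Y)`-set, so `X` is a.s. equal to a `σ(Y)`-measurable map, which factors through `Y`
by Doob–Dynkin. -/

section

@[reducible] def completionOf {Ω : Type} {m0 : MeasurableSpace Ω} (P : Measure[m0] Ω)
    (n : MeasurableSpace Ω) : MeasurableSpace Ω where
  MeasurableSet' := @InCompletion Ω m0 P n
  measurableSet_empty := ⟨∅, .empty, by simp⟩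
  measurableSet_compl := by
    rintro s ⟨t, ht, hst⟩
    exact ⟨tᶜ, ht.compl, by rwa [compl_symmDiff_compl]⟩
  measurableSet_iUnion s hs := by
    choose t ht hst using hs
    exact ⟨⋃ i, t i, .iUnion ht,
      measure_mono_null Set.iUnion_symmDiff_iUnion_subset (measure_iUnion_null hst)⟩

variable {Ω : Type} {m n n' : MeasurableSpace Ω} [m0 : MeasurableSpace Ω] {P : Measure Ω}

lemma le_completionOf : n ≤ completionOf P n :=
  fun s hs => ⟨s, hs, by simp⟩

lemma completionOf_mono (h : n ≤ n') : completionOf P n ≤ completionOf P n' :=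
  fun _ ⟨t, ht, hst⟩ => ⟨t, h t ht, hst⟩

lemma completionOf_le_completionOf (h : m ≤ completionOf P n) :
    completionOf P m ≤ completionOf P n := by
  rintro s ⟨t, ht, hst⟩
  obtain ⟨u, hu, htu⟩ := h t ht
  exact ⟨u, hu, measure_mono_null (symmDiff_triangle s t u) (measure_union_null hst htu)⟩

lemma measurableSet_completionOf_of_indicator_ae_eq {β : Type*} [Zero β] [One β]
    [NeZero (1 : β)] [MeasurableSpace β] [MeasurableSingletonClass β] {s : Set Ω}
    {g : Ω → β} (hg : Measurable[n] g) (h : s.indicator 1 =ᵐ[P] g) :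
    MeasurableSet[completionOf P n] s := by
  refine ⟨g ⁻¹' {1}, hg (measurableSet_singleton 1), measure_mono_null ?_ (ae_iff.1 h)⟩
  intro ω hω
  by_cases hs : ω ∈ s <;> simp_all [Set.mem_symmDiff, eq_comm]

lemma exists_measurable_ae_eq_of_forall_measurableSet_completionOf {ι : Type*} [Countable ι]
    {Z : Ω → ι → Bool} (h : ∀ i, MeasurableSet[completionOf P n] {ω | Z ω i}) :
    ∃ W : Ω → ι → Bool, Measurable[n] W ∧ Z =ᵐ[P] W := by
  classical
  choose t ht hZt using h
  refine ⟨fun ω i => decide (ω ∈ t i), ?_, ?_⟩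
  · let := n
    exact measurable_pi_lambda _ fun i => measurable_to_bool (by convert ht i; ext; simp)
  · have hZt' : ∀ i, ∀ᵐ ω ∂P, Z ω i = decide (ω ∈ t i) := fun i => by
      filter_upwards [measure_symmDiff_eq_zero_iff.mp (hZt i)] with ω hω
      exact Bool.eq_iff_iff.2 ((Iff.of_eq hω).trans decide_eq_true_iff.symm)
    filter_upwards [ae_all_iff.2 hZt'] with ω hω using funext hω

lemma exists_measurable_ae_eq_of_comap_le_completionOf {β : Type*} [mβ : MeasurableSpace β]
    [StandardBorelSpace β] [Nonempty β] {X : Ω → β}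
    (h : mβ.comap X ≤ completionOf P n) :
    ∃ X' : Ω → β, Measurable[n] X' ∧ X =ᵐ[P] X' := by
  obtain ⟨e, he, he_inj⟩ := measurable_injection_nat_bool_of_countablySeparated β
  obtain ⟨r, hr, hre⟩ := (he.measurableEmbedding he_inj).exists_measurable_extend
    measurable_id fun _ => inferInstance
  obtain ⟨W, hW, heW⟩ := exists_measurable_ae_eq_of_forall_measurableSet_completionOf
    (P := P) (Z := e ∘ X) fun i => h _ ⟨e ⁻¹' ((fun b => b i) ⁻¹' {true}),
      he (measurable_pi_apply i (measurableSet_singleton true)), rfl⟩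
  refine ⟨r ∘ W, hr.comp hW, ?_⟩
  filter_upwards [heW] with ω hω
  simp only [Function.comp_apply, ← hω]
  exact (congrFun hre (X ω)).symm

variable [IsFiniteMeasure P]

lemma condExp_sup_ae_eq_of_le_completionOf {E : Type*} [NormedAddCommGroup E]
    [NormedSpace ℝ E] [CompleteSpace E] (hm : m ≤ m0) (hn : n ≤ m0)
    (h : m ≤ completionOf P n) (f : Ω → E) : P[f|m ⊔ n] =ᵐ[P] P[f|n] := by
  by_cases hf : Integrable f P
  swap
  · simp [condExp_of_not_integrable hf]
  refine (ae_eq_condExp_of_forall_setIntegral_eq (sup_le hm hn) hf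
    (fun s _ _ => integrable_condExp.integrableOn) (fun s hs _ => ?_)
    (stronglyMeasurable_condExp.aestronglyMeasurable.mono le_sup_right)).symm
  obtain ⟨t, ht, hst⟩ := sup_le h le_completionOf s hs
  have hst : s =ᵐ[P] t := measure_symmDiff_eq_zero_iff.mp hst
  rw [setIntegral_congr_set hst, setIntegral_congr_set hst, setIntegral_condExp hn hf ht]

lemma measurableSet_completionOf_of_condExp_sup_ae_eq (hm : m ≤ m0) (hn : n ≤ m0)
    {s : Set Ω} (hs : MeasurableSet[m] s) {f : Ω → ℝ} (hf : f =ᵐ[P] s.indicator 1)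
    (h : P[f|m ⊔ n] =ᵐ[P] P[f|n]) :
    MeasurableSet[completionOf P n] s := by
  have hf_meas : AEStronglyMeasurable[m ⊔ n] f P :=
    ⟨s.indicator 1, stronglyMeasurable_one.indicator (le_sup_left (a := m) (b := n) s hs), hf⟩
  have hf_int : Integrable f P :=
    (integrable_congr hf).2 ((integrable_const 1).indicator (hm s hs))
  refine measurableSet_completionOf_of_indicator_ae_eq (g := P[f|n])
    stronglyMeasurable_condExp.measurable ?_
  calc s.indicator 1 =ᵐ[P] f := hf.symm
    _ =ᵐ[P] P[f|m ⊔ n] := (condExp_of_aestronglyMeasurable' (sup_le hm hn) hf_meas hf_int).symm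
    _ =ᵐ[P] P[f|n] := h

end

theorem stmt10_general
    {S1 S2 : Type} [mS1 : MeasurableSpace S1] [TopologicalSpace S1] [PolishSpace S1] [BorelSpace S1]
    [mS2 : MeasurableSpace S2]
    {Ω : Type} [MeasurableSpace Ω] (P : Measure Ω) [IsProbabilityMeasure P]
    (X : Ω → S1) (Y : Ω → S2) (hX : Measurable X) (hY : Measurable Y)
    {A : Type}
    (B1 : A → MeasurableSpace S1) (hB1 : ∀ α, B1 α ≤ mS1)
    (B2 : A → MeasurableSpace S2) (hB2 : ∀ α, B2 α ≤ mS2) :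
    -- forward direction: strong + compatible implies F^X_α ⊆ F^Y_α (mod null sets)
    ((∃ F : S2 → S1, Measurable F ∧ X =ᵐ[P] fun ω => F (Y ω)) →
      (∀ (α : A) (h : S2 → ℝ), Measurable h → (∃ C, ∀ x, |h x| ≤ C) →
        P[fun ω => h (Y ω)|MeasurableSpace.comap X (B1 α) ⊔ MeasurableSpace.comap Y (B2 α)]
          =ᵐ[P] P[fun ω => h (Y ω)|MeasurableSpace.comap Y (B2 α)]) →
      ∀ (α : A) (s : Set Ω), MeasurableSet[MeasurableSpace.comap X (B1 α)] s →
        InCompletion P (MeasurableSpace.comap Y (B2 α)) s)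
    ∧
    -- converse: F^X_α ⊆ F^Y_α (mod null sets) and σ(X) ⊆ ∨_α F^X_α (mod null sets)
    -- imply compatibility and X = F(Y) a.s.
    ((∀ (α : A) (s : Set Ω), MeasurableSet[MeasurableSpace.comap X (B1 α)] s →
        InCompletion P (MeasurableSpace.comap Y (B2 α)) s) →
      (∀ s : Set Ω, MeasurableSet[MeasurableSpace.comap X mS1] s →
        InCompletion P (⨆ α : A, MeasurableSpace.comap X (B1 α)) s) →
      ((∀ (α : A) (h : S2 → ℝ), Measurable h → (∃ C, ∀ x, |h x| ≤ C) →
        P[fun ω => h (Y ω)|MeasurableSpace.comap X (B1 α) ⊔ MeasurableSpace.comap Y (B2 α)]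
          =ᵐ[P] P[fun ω => h (Y ω)|MeasurableSpace.comap Y (B2 α)])
        ∧ ∃ F : S2 → S1, Measurable F ∧ X =ᵐ[P] fun ω => F (Y ω))) := by
  have hFX (α : A) : (B1 α).comap X ≤ ‹MeasurableSpace Ω› :=
    (comap_mono (hB1 α)).trans hX.comap_le
  have hFY (α : A) : (B2 α).comap Y ≤ ‹MeasurableSpace Ω› :=
    (comap_mono (hB2 α)).trans hY.comap_le
  refine ⟨?_, fun hXY hX_sup => ⟨fun α h _ _ =>
    condExp_sup_ae_eq_of_le_completionOf (hFX α) (hFY α) (hXY α) _, ?_⟩⟩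
  · rintro ⟨F, hF, hXF⟩ hcompat α _ ⟨B, hB, rfl⟩
    refine measurableSet_completionOf_of_condExp_sup_ae_eq (hFX α) (hFY α) ⟨B, hB, rfl⟩ ?_
      (hcompat α _ (measurable_one.indicator (hF (hB1 α B hB))) ⟨1, fun x => ?_⟩)
    · filter_upwards [hXF] with ω hω
      classical
      simp [Set.indicator_apply, hω]
    · by_cases hx : x ∈ F ⁻¹' B <;> simp [hx]
  · have := nonempty_of_isProbabilityMeasure P
    have : Nonempty S1 := .map X this
    have hFX_le : ⨆ α, (B1 α).comap X ≤ completionOf P (mS2.comap Y) :=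
      iSup_le fun α s hs => completionOf_mono (comap_mono (hB2 α)) s (hXY α s hs)
    have hσ : mS1.comap X ≤ completionOf P (mS2.comap Y) :=
      fun s hs => completionOf_le_completionOf hFX_le s (hX_sup s hs)
    obtain ⟨X', hX', hXX'⟩ := exists_measurable_ae_eq_of_comap_le_completionOf hσ
    obtain ⟨F, hF, rfl⟩ := hX'.exists_eq_measurable_comp
    exact ⟨F, hF, hXX'⟩

/-- Proposition 2.13 of Kurtz: a strong compatible solution satisfies
`F^X_α ⊆ F^Y_α` (completions); conversely, `F^X_α ⊆ F^Y_α` together with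
`σ(X) ⊆ ∨_α F^X_α` (completions) yields a strong compatible solution. -/
theorem stmt10
    {S1 S2 : Type} [mS1 : MeasurableSpace S1] [TopologicalSpace S1] [PolishSpace S1] [BorelSpace S1]
    [mS2 : MeasurableSpace S2] [TopologicalSpace S2] [PolishSpace S2] [BorelSpace S2]
    {Ω : Type} [MeasurableSpace Ω] (P : Measure Ω) [IsProbabilityMeasure P]
    (X : Ω → S1) (Y : Ω → S2) (hX : Measurable X) (hY : Measurable Y)
    {A : Type}
    (B1 : A → MeasurableSpace S1) (hB1 : ∀ α, B1 α ≤ mS1)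
    (B2 : A → MeasurableSpace S2) (hB2 : ∀ α, B2 α ≤ mS2) :
    -- forward direction: strong + compatible implies F^X_α ⊆ F^Y_α (mod null sets)
    ((∃ F : S2 → S1, Measurable F ∧ X =ᵐ[P] fun ω => F (Y ω)) →
      (∀ (α : A) (h : S2 → ℝ), Measurable h → (∃ C, ∀ x, |h x| ≤ C) →
        P[fun ω => h (Y ω)|MeasurableSpace.comap X (B1 α) ⊔ MeasurableSpace.comap Y (B2 α)]
          =ᵐ[P] P[fun ω => h (Y ω)|MeasurableSpace.comap Y (B2 α)]) →
      ∀ (α : A) (s : Set Ω), MeasurableSet[MeasurableSpace.comap X (B1 α)] s →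
        InCompletion P (MeasurableSpace.comap Y (B2 α)) s)
    ∧
    -- converse: F^X_α ⊆ F^Y_α (mod null sets) and σ(X) ⊆ ∨_α F^X_α (mod null sets)
    -- imply compatibility and X = F(Y) a.s.
    ((∀ (α : A) (s : Set Ω), MeasurableSet[MeasurableSpace.comap X (B1 α)] s →
        InCompletion P (MeasurableSpace.comap Y (B2 α)) s) →
      (∀ s : Set Ω, MeasurableSet[MeasurableSpace.comap X mS1] s →
        InCompletion P (⨆ α : A, MeasurableSpace.comap X (B1 α)) s) →
      ((∀ (α : A) (h : S2 → ℝ), Measurable h → (∃ C, ∀ x, |h x| ≤ C) →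
        P[fun ω => h (Y ω)|MeasurableSpace.comap X (B1 α) ⊔ MeasurableSpace.comap Y (B2 α)]
          =ᵐ[P] P[fun ω => h (Y ω)|MeasurableSpace.comap Y (B2 α)])
        ∧ ∃ F : S2 → S1, Measurable F ∧ X =ᵐ[P] fun ω => F (Y ω))) :=
  stmt10_general (mS1 := mS1) (mS2 := mS2) P X Y hX hY B1 hB1 B2 hB2
end

section
/- Suppose for each α there exist countable (or arbitrary) families C^{S2}_α ⊆ C_b(S2) and C^{S1}_α ⊆ C_b(S1) of bounded continuous functions generating the sub-σ-algebras B^{S2}_α = σ(g : g ∈ C^{S2}_α) and B^{S1}_α = σ(g : g ∈ C^{S1}_α). Let (X_n, Y) be random variables in S1×S2 such that each X_n is C-compatible with Y, and suppose (X_n, Y) converges in distribution to (X, Y) (with the same Y-marginal ν throughout). Then X is C-compatible with Y. -/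
/-!
Write `φ = ν[h | B₂]` and `G = B₁ ⊗ B₂`. Compatibility under a law `ρ` with second marginal `ν`
says exactly that `(h - φ)(y)` has zero integral over every `G`-set. The sets `{u > 0}`, `u`
continuous and `G`-measurable, form a π-system generating `G`, and `min 1 (k u⁺)` increases to
their indicators; so it suffices that `∫ u(x, y) (h - φ)(y) dμ = 0` for such `u` with `|u| ≤ 1`.
This holds for every `μₙ`. The functional `v ↦ ∫ u(x, y) v(y) dρ` is `1`-Lipschitz on `L¹(ν)`
uniformly in `ρ` and converges along `μₙ → μ` for bounded continuous `v`, which are dense in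
`L¹(ν)`; hence it converges for `v = h - φ`, and the limit is `0`.
-/

open MeasureTheory ProbabilityTheory MeasurableSpace Filter Topology
open scoped BoundedContinuousFunction

theorem tendsto_of_forall_approx {ι E : Type*} [PseudoMetricSpace E] {l : Filter ι} {F : ι → E}
    {a : E} (h : ∀ ε > 0, ∃ (G : ι → E) (b : E), Tendsto G l (𝓝 b) ∧
      (∀ i, dist (F i) (G i) ≤ ε) ∧ dist a b ≤ ε) :
    Tendsto F l (𝓝 a) := by
  refine Metric.tendsto_nhds.mpr fun ε hε => ?_
  obtain ⟨G, b, hG, hFG, hab⟩ := h (ε / 3) (by positivity)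
  filter_upwards [Metric.tendsto_nhds.mp hG (ε / 3) (by positivity)] with i hi
  calc dist (F i) a ≤ dist (F i) (G i) + dist (G i) b + dist a b :=
        by linarith [dist_triangle (F i) (G i) a, dist_triangle (G i) b a, dist_comm a b]
    _ < ε := by linarith [hFG i]

namespace MeasureTheory

section CondExpComp

variable {Ω S : Type*} {m mΩ : MeasurableSpace Ω} {B mS : MeasurableSpace S} {ρ : Measure Ω}
  {ν : Measure S} {Y : Ω → S} {f : S → ℝ} {u : Ω → ℝ}

theorem condExp_comp_ae_eq [IsFiniteMeasure ρ] (hY : MeasurePreserving Y ρ ν) (hB : B ≤ mS)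
    (hf : Integrable f ν) : ρ[f ∘ Y | B.comap Y] =ᵐ[ρ] ν[f | B] ∘ Y := by
  obtain rfl := hY.map_eq
  have hYB : B.comap Y ≤ mΩ := (comap_mono hB).trans hY.measurable.comap_le
  refine (ae_eq_condExp_of_forall_setIntegral_eq hYB (hY.integrable_comp_of_integrable hf)
    (fun s _ _ => (hY.integrable_comp_of_integrable integrable_condExp).integrableOn) ?_
    ((stronglyMeasurable_condExp.comp_measurable
      (measurable_iff_comap_le.mpr le_rfl)).aestronglyMeasurable)).symm
  rintro _ ⟨t, ht, rfl⟩ -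
  simp only [Function.comp_apply]
  rw [← setIntegral_map (hB t ht) integrable_condExp.aestronglyMeasurable
      hY.measurable.aemeasurable,
    ← setIntegral_map (hB t ht) hf.aestronglyMeasurable hY.measurable.aemeasurable,
    setIntegral_condExp hB hf ht]

theorem MeasurePreserving.integrable_mul_comp (hY : MeasurePreserving Y ρ ν) (hf : Integrable f ν)
    (hu : AEStronglyMeasurable u ρ) (hub : ∀ x, |u x| ≤ 1) :
    Integrable (fun x => u x * f (Y x)) ρ :=
  (hY.integrable_comp_of_integrable hf).bdd_mul hu (.of_forall hub)

theorem integral_mul_eq_of_condExp_ae_eq [IsFiniteMeasure ρ] (hm : m ≤ mΩ) {g h : Ω → ℝ}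
    (hg : Integrable g ρ) (hgh : ρ[g | m] =ᵐ[ρ] h) (hu : StronglyMeasurable[m] u)
    (hub : ∀ x, |u x| ≤ 1) : ∫ x, u x * g x ∂ρ = ∫ x, u x * h x ∂ρ :=
  calc ∫ x, u x * g x ∂ρ = ∫ x, ρ[u * g | m] x ∂ρ := (integral_condExp hm).symm
    _ = ∫ x, u x * h x ∂ρ := by
      refine integral_congr_ae ?_
      filter_upwards [condExp_mul_of_stronglyMeasurable_left hu
        (hg.bdd_mul (hu.mono hm).aestronglyMeasurable (.of_forall hub)) hg, hgh] with x hx hx'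
      rw [hx, Pi.mul_apply, hx']

theorem integral_mul_comp_sub_condExp_eq_zero [IsFiniteMeasure ρ] (hY : MeasurePreserving Y ρ ν)
    (hB : B ≤ mS) (hm : m ≤ mΩ) (hf : Integrable f ν)
    (hcompat : ρ[f ∘ Y | m] =ᵐ[ρ] ρ[f ∘ Y | B.comap Y]) (hu : StronglyMeasurable[m] u)
    (hub : ∀ x, |u x| ≤ 1) : ∫ x, u x * (f (Y x) - ν[f | B] (Y x)) ∂ρ = 0 := by
  have hu' := (hu.mono hm).aestronglyMeasurable (μ := ρ)
  simp_rw [mul_sub]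
  rw [integral_sub (hY.integrable_mul_comp hf hu' hub)
    (hY.integrable_mul_comp integrable_condExp hu' hub), sub_eq_zero]
  exact integral_mul_eq_of_condExp_ae_eq hm (hY.integrable_comp_of_integrable hf)
    (hcompat.trans (condExp_comp_ae_eq hY hB hf)) hu hub

theorem condExp_comp_ae_eq_of_forall_setIntegral_eq_zero [IsFiniteMeasure ρ]
    (hY : MeasurePreserving Y ρ ν) (hB : B ≤ mS) (hBm : B.comap Y ≤ m) (hm : m ≤ mΩ)
    (hf : Integrable f ν)
    (hzero : ∀ s, MeasurableSet[m] s → ∫ x in s, (f (Y x) - ν[f | B] (Y x)) ∂ρ = 0) :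
    ρ[f ∘ Y | m] =ᵐ[ρ] ρ[f ∘ Y | B.comap Y] := by
  have hfY : Integrable (fun x => f (Y x)) ρ := hY.integrable_comp_of_integrable hf
  have hφY : Integrable (fun x => ν[f | B] (Y x)) ρ :=
    hY.integrable_comp_of_integrable integrable_condExp
  refine (ae_eq_condExp_of_forall_setIntegral_eq hm hfY (fun s _ _ => hφY.integrableOn)
    (fun s hs _ => ?_) ?_).symm.trans (condExp_comp_ae_eq hY hB hf).symm
  · have := hzero s hs
    rw [integral_sub hfY.integrableOn hφY.integrableOn, sub_eq_zero] at this
    exact this.symm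
  · exact ((stronglyMeasurable_condExp.comp_measurable
      (measurable_iff_comap_le.mpr le_rfl)).mono hBm).aestronglyMeasurable

end CondExpComp

section WeakConvergence

variable {Ω S : Type*} [MeasurableSpace Ω] [MeasurableSpace S] {ν : Measure S} {Y : Ω → S}
  {u : Ω → ℝ}

theorem abs_integral_mul_comp_le {ρ : Measure Ω} (hY : MeasurePreserving Y ρ ν) {v : S → ℝ}
    (hv : Integrable v ν) (hu : AEStronglyMeasurable u ρ) (hub : ∀ x, |u x| ≤ 1) :
    |∫ x, u x * v (Y x) ∂ρ| ≤ ∫ y, |v y| ∂ν := by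
  have hvY : Integrable (fun x => v (Y x)) ρ := hY.integrable_comp_of_integrable hv
  calc |∫ x, u x * v (Y x) ∂ρ| ≤ ∫ x, |u x * v (Y x)| ∂ρ := abs_integral_le_integral_abs
    _ ≤ ∫ x, |v (Y x)| ∂ρ := by
      refine integral_mono (hY.integrable_mul_comp hv hu hub).abs hvY.abs fun x => ?_
      rw [abs_mul]
      exact mul_le_of_le_one_left (abs_nonneg _) (hub x)
    _ = ∫ y, |v y| ∂ν := by
      rw [← hY.map_eq, integral_map hY.measurable.aemeasurable]
      exact hY.map_eq ▸ hv.abs.aestronglyMeasurable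

variable [TopologicalSpace Ω] [OpensMeasurableSpace Ω] [TopologicalSpace S] [BorelSpace S]
  [NormalSpace S] [ν.WeaklyRegular]

theorem tendsto_integral_mul_comp {ι : Type*} {l : Filter ι} {μs : ι → ProbabilityMeasure Ω}
    {μ : ProbabilityMeasure Ω} (hμs : Tendsto μs l (𝓝 μ)) (hYc : Continuous Y)
    (hYs : ∀ i, MeasurePreserving Y (μs i) ν) (hY : MeasurePreserving Y μ ν)
    (hu : Continuous u) (hub : ∀ x, |u x| ≤ 1) {v : S → ℝ} (hv : Integrable v ν) :
    Tendsto (fun i => ∫ x, u x * v (Y x) ∂(μs i : Measure Ω))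
      l (𝓝 (∫ x, u x * v (Y x) ∂(μ : Measure Ω))) := by
  have hbcf (w : S →ᵇ ℝ) : Tendsto (fun i => ∫ x, u x * w (Y x) ∂(μs i : Measure Ω))
      l (𝓝 (∫ x, u x * w (Y x) ∂(μ : Measure Ω))) := by
    refine ProbabilityMeasure.tendsto_iff_forall_integral_tendsto.mp hμs
      (.ofNormedAddCommGroup (fun x => u x * w (Y x)) (by fun_prop) ‖w‖ fun x => ?_)
    rw [norm_mul]
    exact (mul_le_mul (hub x) (w.norm_coe_le_norm _) (norm_nonneg _) zero_le_one).trans_eq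
      (one_mul _)
  have happrox {ρ : Measure Ω} (hρ : MeasurePreserving Y ρ ν) {w : S →ᵇ ℝ}
      (hw : Integrable w ν) :
      dist (∫ x, u x * v (Y x) ∂ρ) (∫ x, u x * w (Y x) ∂ρ) ≤ ∫ y, |v y - w y| ∂ν := by
    have hu' : AEStronglyMeasurable u ρ := hu.aestronglyMeasurable
    rw [Real.dist_eq, ← integral_sub (hρ.integrable_mul_comp hv hu' hub)
      (hρ.integrable_mul_comp hw hu' hub)]
    simp_rw [← mul_sub]
    exact abs_integral_mul_comp_le hρ (hv.sub hw) hu' hub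
  refine tendsto_of_forall_approx fun ε hε => ?_
  obtain ⟨w, hvw, hw⟩ := hv.exists_boundedContinuous_integral_sub_le hε
  exact ⟨_, _, hbcf w, fun i => (happrox (hYs i) hw).trans hvw, (happrox hY hw).trans hvw⟩

end WeakConvergence

section ContinuousGeneration

variable {X : Type*} [TopologicalSpace X]

def continuousPosSets (m : MeasurableSpace X) : Set (Set X) :=
  {s | ∃ u : X → ℝ, Continuous u ∧ Measurable[m] u ∧ u ⁻¹' Set.Ioi 0 = s}

theorem isPiSystem_continuousPosSets (m : MeasurableSpace X) :
    IsPiSystem (continuousPosSets m) := by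
  rintro _ ⟨u, hu, hum, rfl⟩ _ ⟨v, hv, hvm, rfl⟩ -
  refine ⟨fun x => min (u x) (v x), hu.min hv, hum.min hvm, ?_⟩
  ext x
  simp

theorem generateFrom_continuousPosSets_le (m : MeasurableSpace X) :
    generateFrom (continuousPosSets m) ≤ m :=
  generateFrom_le fun _ ⟨_, _, hum, hs⟩ => hs ▸ hum measurableSet_Ioi

theorem measurable_generateFrom_continuousPosSets {m : MeasurableSpace X} {q : X → ℝ}
    (hq : Continuous q) (hqm : Measurable[m] q) :
    Measurable[generateFrom (continuousPosSets m)] q := by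
  let := generateFrom (continuousPosSets m)
  exact measurable_of_Ioi fun a => measurableSet_generateFrom
    ⟨fun x => q x - a, by fun_prop, hqm.sub_const a, by ext; simp⟩

theorem tendsto_min_one_mul_max_zero (r : ℝ) :
    Tendsto (fun k : ℕ => min 1 (k * max r 0)) atTop (𝓝 ((Set.Ioi 0).indicator 1 r)) := by
  rcases lt_or_ge 0 r with hr | hr
  · have hlarge : ∀ᶠ k : ℕ in atTop, 1 ≤ (k : ℝ) * max r 0 := by
      rw [max_eq_left hr.le]
      exact (tendsto_natCast_atTop_atTop.atTop_mul_const hr).eventually_ge_atTop 1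
    rw [Set.indicator_of_mem (Set.mem_Ioi.mpr hr)]
    exact tendsto_const_nhds.congr' (hlarge.mono fun k hk => (min_eq_left hk).symm)
  · simp [max_eq_right hr, Set.indicator_of_notMem (Set.notMem_Ioi.mpr hr)]

theorem setIntegral_eq_zero_of_forall_integral_mul_eq_zero {m mX : MeasurableSpace X}
    (hm : m ≤ mX) (hgen : m ≤ generateFrom (continuousPosSets m)) {μ : Measure X} {d : X → ℝ}
    (hd : Integrable d μ)
    (htest : ∀ u : X → ℝ, Continuous u → Measurable[m] u → (∀ x, |u x| ≤ 1) →
      ∫ x, u x * d x ∂μ = 0)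
    {s : Set X} (hs : MeasurableSet[m] s) : ∫ x in s, d x ∂μ = 0 := by
  have hintegral : ∫ x, d x ∂μ = 0 := by
    simpa using htest 1 continuous_const measurable_const (by simp)
  induction s, hs using MeasurableSpace.induction_on_inter
      (le_antisymm hgen (generateFrom_continuousPosSets_le m))
      (isPiSystem_continuousPosSets m) with
  | empty => simp
  | basic _ hs =>
    obtain ⟨u, hu, hum, rfl⟩ := hs
    have hbound (k : ℕ) (x : X) : |min 1 (k * max (u x) 0)| ≤ 1 := by
      rw [abs_of_nonneg (le_min zero_le_one (by positivity))]
      exact min_le_left _ _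
    have hmeas (k : ℕ) : Measurable[m] fun x => min 1 (k * max (u x) 0) :=
      measurable_const.min (measurable_const.mul (hum.max measurable_const))
    have hzero (k : ℕ) : ∫ x, min 1 (k * max (u x) 0) * d x ∂μ = 0 :=
      htest _ (by fun_prop) (hmeas k) (hbound k)
    have hlim := tendsto_integral_of_dominated_convergence (μ := μ)
      (F := fun (k : ℕ) x => min 1 (k * max (u x) 0) * d x) (fun x => |d x|)
      (fun k => ((hmeas k).mono hm le_rfl).aestronglyMeasurable.mul hd.1)
      hd.abs (fun k => .of_forall fun x => by
        rw [Real.norm_eq_abs, abs_mul]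
        exact mul_le_of_le_one_left (abs_nonneg _) (hbound k x))
      (.of_forall fun x => (tendsto_min_one_mul_max_zero (u x)).mul_const (d x))
    simp only [hzero, tendsto_const_nhds_iff] at hlim
    rw [← integral_indicator (hm _ (hum measurableSet_Ioi))]
    convert hlim.symm using 1
    congr 1 with x
    by_cases hx : 0 < u x <;> simp [hx]
  | compl s hs ihs =>
    rw [setIntegral_compl (hm s hs) hd, hintegral, ihs, sub_zero]
  | iUnion f hdisj hf ihf =>
    rw [integral_iUnion (fun i => hm _ (hf i)) hdisj hd.integrableOn]
    simp [ihf]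

theorem comap_iSup₂_comap_le_generateFrom_continuousPosSets {Z : Type*} [TopologicalSpace Z]
    {m : MeasurableSpace X} {p : X → Z} (hp : Continuous p) {C : Set (Z → ℝ)}
    (hC : ∀ g ∈ C, Continuous g)
    (hm : (⨆ g ∈ C, MeasurableSpace.comap g (inferInstance : MeasurableSpace ℝ)).comap p ≤ m) :
    (⨆ g ∈ C, MeasurableSpace.comap g (inferInstance : MeasurableSpace ℝ)).comap p ≤
      generateFrom (continuousPosSets m) := by
  simp only [MeasurableSpace.comap_iSup, MeasurableSpace.comap_comp] at hm ⊢
  refine iSup₂_le fun g hg => ?_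
  have hgm : Measurable[m] (g ∘ p) := measurable_iff_comap_le.mpr <|
    (le_iSup₂ (f := fun g (_ : g ∈ C) => MeasurableSpace.comap (g ∘ p) inferInstance) g hg).trans hm
  exact (measurable_generateFrom_continuousPosSets ((hC g hg).comp hp) hgm).comap_le

end ContinuousGeneration

end MeasureTheory

theorem stmt11_general
    {S1 S2 : Type} [mS1 : MeasurableSpace S1] [TopologicalSpace S1] [BorelSpace S1]
    [mS2 : MeasurableSpace S2] [TopologicalSpace S2] [PolishSpace S2] [BorelSpace S2]
    (ν : Measure S2) [IsProbabilityMeasure ν]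
    {A : Type}
    (C1 : A → Set (S1 → ℝ)) (C2 : A → Set (S2 → ℝ))
    (hC1 : ∀ α, ∀ g ∈ C1 α, Continuous g ∧ ∃ M, ∀ x, |g x| ≤ M)
    (hC2 : ∀ α, ∀ g ∈ C2 α, Continuous g ∧ ∃ M, ∀ x, |g x| ≤ M)
    (B1 : A → MeasurableSpace S1) (B2 : A → MeasurableSpace S2)
    (hgen1 : ∀ α, B1 α = ⨆ g ∈ C1 α, MeasurableSpace.comap g (inferInstance : MeasurableSpace ℝ))
    (hgen2 : ∀ α, B2 α = ⨆ g ∈ C2 α, MeasurableSpace.comap g (inferInstance : MeasurableSpace ℝ))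
    (μs : ℕ → ProbabilityMeasure (S1 × S2)) (μ : ProbabilityMeasure (S1 × S2))
    (hmargn : ∀ n, (μs n : Measure (S1 × S2)).map Prod.snd = ν)
    (hmarg : (μ : Measure (S1 × S2)).map Prod.snd = ν)
    -- each X_n is C-compatible with Y (compatibility is a distributional property,
    -- stated for the canonical pair (fst, snd) under the law of (X_n, Y))
    (hcompatn : ∀ n (α : A) (h : S2 → ℝ), Measurable h → (∃ C, ∀ x, |h x| ≤ C) →
      (μs n : Measure (S1 × S2))[fun p => h p.2|MeasurableSpace.comap Prod.fst (B1 α) ⊔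
          MeasurableSpace.comap Prod.snd (B2 α)]
        =ᵐ[(μs n : Measure (S1 × S2))]
          (μs n : Measure (S1 × S2))[fun p => h p.2|MeasurableSpace.comap Prod.snd (B2 α)])
    -- (X_n, Y) ⇒ (X, Y)
    (hconv : Tendsto μs atTop (nhds μ)) :
    -- X is C-compatible with Y
    ∀ (α : A) (h : S2 → ℝ), Measurable h → (∃ C, ∀ x, |h x| ≤ C) →
      (μ : Measure (S1 × S2))[fun p => h p.2|MeasurableSpace.comap Prod.fst (B1 α) ⊔
          MeasurableSpace.comap Prod.snd (B2 α)]
        =ᵐ[(μ : Measure (S1 × S2))]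
          (μ : Measure (S1 × S2))[fun p => h p.2|MeasurableSpace.comap Prod.snd (B2 α)] := by
  rintro α h hh ⟨C, hC⟩
  have hhν : Integrable h ν := .of_bound hh.aestronglyMeasurable C (.of_forall hC)
  have hB1 : B1 α ≤ mS1 := hgen1 α ▸ iSup₂_le fun g hg => (hC1 α g hg).1.measurable.comap_le
  have hB2 : B2 α ≤ mS2 := hgen2 α ▸ iSup₂_le fun g hg => (hC2 α g hg).1.measurable.comap_le
  have hG : (B1 α).comap Prod.fst ⊔ (B2 α).comap Prod.snd ≤
      (inferInstance : MeasurableSpace (S1 × S2)) :=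
    sup_le ((comap_mono hB1).trans measurable_fst.comap_le)
      ((comap_mono hB2).trans measurable_snd.comap_le)
  have hGgen : (B1 α).comap Prod.fst ⊔ (B2 α).comap Prod.snd ≤
      generateFrom (continuousPosSets ((B1 α).comap Prod.fst ⊔ (B2 α).comap Prod.snd)) := by
    rw [hgen1 α, hgen2 α]
    exact sup_le
      (comap_iSup₂_comap_le_generateFrom_continuousPosSets continuous_fst
        (fun g hg => (hC1 α g hg).1) le_sup_left)
      (comap_iSup₂_comap_le_generateFrom_continuousPosSets continuous_snd
        (fun g hg => (hC2 α g hg).1) le_sup_right)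
  have hY {ρ : ProbabilityMeasure (S1 × S2)} (hρ : (ρ : Measure (S1 × S2)).map Prod.snd = ν) :
      MeasurePreserving Prod.snd (ρ : Measure (S1 × S2)) ν := ⟨measurable_snd, hρ⟩
  have hd : Integrable (h - ν[h | B2 α]) ν := hhν.sub integrable_condExp
  refine condExp_comp_ae_eq_of_forall_setIntegral_eq_zero (hY hmarg) hB2 le_sup_right hG hhν
    fun s hs => setIntegral_eq_zero_of_forall_integral_mul_eq_zero hG hGgen
      ((hY hmarg).integrable_comp_of_integrable hd) (fun u hu hum hub => ?_) hs
  exact tendsto_nhds_unique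
    (tendsto_integral_mul_comp hconv continuous_snd (fun n => hY (hmargn n)) (hY hmarg) hu hub hd)
    (tendsto_const_nhds.congr fun n => (integral_mul_comp_sub_condExp_eq_zero (hY (hmargn n)) hB2
      hG hhν (hcompatn n α h hh ⟨C, hC⟩) hum.stronglyMeasurable hub).symm)

/-- Lemma 3.2 of Kurtz: when the σ-algebras of the compatibility structure are
generated by bounded continuous functions, compatibility passes to limits in
distribution (with the `Y`-marginal fixed). -/
theorem stmt11
    {S1 S2 : Type} [mS1 : MeasurableSpace S1] [TopologicalSpace S1] [PolishSpace S1] [BorelSpace S1]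
    [mS2 : MeasurableSpace S2] [TopologicalSpace S2] [PolishSpace S2] [BorelSpace S2]
    (ν : Measure S2) [IsProbabilityMeasure ν]
    {A : Type}
    (C1 : A → Set (S1 → ℝ)) (C2 : A → Set (S2 → ℝ))
    (hC1 : ∀ α, ∀ g ∈ C1 α, Continuous g ∧ ∃ M, ∀ x, |g x| ≤ M)
    (hC2 : ∀ α, ∀ g ∈ C2 α, Continuous g ∧ ∃ M, ∀ x, |g x| ≤ M)
    (B1 : A → MeasurableSpace S1) (B2 : A → MeasurableSpace S2)
    (hgen1 : ∀ α, B1 α = ⨆ g ∈ C1 α, MeasurableSpace.comap g (inferInstance : MeasurableSpace ℝ))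
    (hgen2 : ∀ α, B2 α = ⨆ g ∈ C2 α, MeasurableSpace.comap g (inferInstance : MeasurableSpace ℝ))
    (μs : ℕ → ProbabilityMeasure (S1 × S2)) (μ : ProbabilityMeasure (S1 × S2))
    (hmargn : ∀ n, (μs n : Measure (S1 × S2)).map Prod.snd = ν)
    (hmarg : (μ : Measure (S1 × S2)).map Prod.snd = ν)
    -- each X_n is C-compatible with Y (compatibility is a distributional property,
    -- stated for the canonical pair (fst, snd) under the law of (X_n, Y))
    (hcompatn : ∀ n (α : A) (h : S2 → ℝ), Measurable h → (∃ C, ∀ x, |h x| ≤ C) →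
      (μs n : Measure (S1 × S2))[fun p => h p.2|MeasurableSpace.comap Prod.fst (B1 α) ⊔
          MeasurableSpace.comap Prod.snd (B2 α)]
        =ᵐ[(μs n : Measure (S1 × S2))]
          (μs n : Measure (S1 × S2))[fun p => h p.2|MeasurableSpace.comap Prod.snd (B2 α)])
    -- (X_n, Y) ⇒ (X, Y)
    (hconv : Tendsto μs atTop (nhds μ)) :
    -- X is C-compatible with Y
    ∀ (α : A) (h : S2 → ℝ), Measurable h → (∃ C, ∀ x, |h x| ≤ C) →
      (μ : Measure (S1 × S2))[fun p => h p.2|MeasurableSpace.comap Prod.fst (B1 α) ⊔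
          MeasurableSpace.comap Prod.snd (B2 α)]
        =ᵐ[(μ : Measure (S1 × S2))]
          (μ : Measure (S1 × S2))[fun p => h p.2|MeasurableSpace.comap Prod.snd (B2 α)] :=
  stmt11_general (mS1 := mS1) (mS2 := mS2) ν C1 C2 hC1 hC2 B1 B2 hgen1 hgen2 μs μ hmargn hmarg
    hcompatn hconv
end

section
/- C-compatibility is a property of the joint distribution: for bounded Borel h on S2, the condition E[h(Y)|F^X_α ∨ F^Y_α] = E[h(Y)|F^Y_α] holds if and only if inf over bounded (B^{S1}_α ⊗ B^{S2}_α)-measurable f of E[(h(Y) − f(X,Y))²] equals inf over bounded B^{S2}_α-measurable f of E[(h(Y) − f(Y))²]. In particular whether X is C-compatible with Y depends only on the law of (X,Y). -/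
open MeasureTheory ProbabilityTheory MeasurableSpace

lemma aux_int_bdd {Ω : Type} [MeasurableSpace Ω] (P : Measure Ω) [IsFiniteMeasure P]
    {f : Ω → ℝ} (hf : AEStronglyMeasurable f P) {C : ℝ} (h : ∀ᵐ ω ∂P, |f ω| ≤ C) :
    Integrable f P :=
  Integrable.mono' (integrable_const C) hf (by simpa [Real.norm_eq_abs] using h)

lemma aux_cross {Ω : Type} {m m0 : MeasurableSpace Ω} (hm : m ≤ m0) (P : Measure Ω)
    [IsProbabilityMeasure P] {φ w : Ω → ℝ} (hφ : Measurable φ) {C : ℝ}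
    (hφC : ∀ᵐ ω ∂P, |φ ω| ≤ C)
    (hw : StronglyMeasurable[m] w) {D : ℝ} (hwD : ∀ᵐ ω ∂P, |w ω| ≤ D) :
    ∫ ω, w ω * (φ ω - (P[φ|m]) ω) ∂P = 0 := by
  have hφint : Integrable φ P := aux_int_bdd P hφ.aestronglyMeasurable hφC
  have hwm : AEStronglyMeasurable w P := (hw.mono hm).aestronglyMeasurable
  have hwφ : Integrable (w * φ) P := hφint.bdd_mul hwm (by simpa [Real.norm_eq_abs] using hwD)
  have hwp : Integrable (w * P[φ|m]) P :=
    integrable_condExp.bdd_mul hwm (by simpa [Real.norm_eq_abs] using hwD)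
  have key : P[w * φ|m] =ᵐ[P] w * P[φ|m] :=
    condExp_stronglyMeasurable_mul_of_bound hm hw hφint D
      (by simpa [Real.norm_eq_abs] using hwD)
  have h1 : ∫ ω, (w * φ) ω ∂P = ∫ ω, (w * P[φ|m]) ω ∂P := by
    rw [← integral_condExp hm]
    exact integral_congr_ae key
  simp only [Pi.mul_apply] at h1
  have h2 : ∫ ω, w ω * (φ ω - (P[φ|m]) ω) ∂P
      = ∫ ω, w ω * φ ω ∂P - ∫ ω, w ω * (P[φ|m]) ω ∂P := by
    simp_rw [mul_sub]
    exact integral_sub hwφ hwp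
  rw [h2, h1, sub_self]

lemma aux_pyth {Ω : Type} {m m0 : MeasurableSpace Ω} (hm : m ≤ m0) (P : Measure Ω)
    [IsProbabilityMeasure P] {φ g : Ω → ℝ} (hφ : Measurable φ) {C : ℝ} (hC : 0 ≤ C)
    (hφC : ∀ ω, |φ ω| ≤ C)
    (hg : StronglyMeasurable[m] g) {D : ℝ} (hgD : ∀ᵐ ω ∂P, |g ω| ≤ D) :
    ∫ ω, (φ ω - g ω) ^ 2 ∂P
      = ∫ ω, (φ ω - (P[φ|m]) ω) ^ 2 ∂P + ∫ ω, ((P[φ|m]) ω - g ω) ^ 2 ∂P := by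
  set p := P[φ|m] with hp
  have hpSM : StronglyMeasurable[m] p := stronglyMeasurable_condExp
  have hpm : Measurable p := (hpSM.mono hm).measurable
  have hpC : ∀ᵐ ω ∂P, |p ω| ≤ C := by
    have := ae_bdd_condExp_of_ae_bdd (μ := P) (m := m) (R := ⟨C, hC⟩)
      (f := φ) (ae_of_all _ hφC)
    exact this
  have hgm : AEStronglyMeasurable g P := (hg.mono hm).aestronglyMeasurable
  -- integrabilities
  have i1 : Integrable (fun ω => (φ ω - p ω) ^ 2) P := by
    refine aux_int_bdd P ?_ (C := (C + C) ^ 2) ?_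
    · exact ((hφ.sub hpm).pow_const 2).aestronglyMeasurable
    · filter_upwards [hpC] with ω hω
      have h1 : |φ ω - p ω| ≤ C + C := (abs_sub _ _).trans (add_le_add (hφC ω) hω)
      rw [abs_of_nonneg (sq_nonneg _), ← sq_abs]
      exact pow_le_pow_left₀ (abs_nonneg _) h1 2
  have i2 : Integrable (fun ω => (p ω - g ω) ^ 2) P := by
    refine aux_int_bdd P ?_ (C := (C + D) ^ 2) ?_
    · exact ((hpm.sub (hg.mono hm).measurable).pow_const 2).aestronglyMeasurable
    · filter_upwards [hpC, hgD] with ω h1 h2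
      have h3 : |p ω - g ω| ≤ C + D := (abs_sub _ _).trans (add_le_add h1 h2)
      rw [abs_of_nonneg (sq_nonneg _), ← sq_abs]
      exact pow_le_pow_left₀ (abs_nonneg _) h3 2
  have i3 : Integrable (fun ω => (p ω - g ω) * (φ ω - p ω)) P := by
    refine aux_int_bdd P ?_ (C := (C + D) * (C + C)) ?_
    · exact ((hpm.sub (hg.mono hm).measurable).mul (hφ.sub hpm)).aestronglyMeasurable
    · filter_upwards [hpC, hgD] with ω h1 h2
      have h3 : |p ω - g ω| ≤ C + D := (abs_sub _ _).trans (add_le_add h1 h2)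
      have h4 : |φ ω - p ω| ≤ C + C := (abs_sub _ _).trans (add_le_add (hφC ω) h1)
      calc |(p ω - g ω) * (φ ω - p ω)| = |p ω - g ω| * |φ ω - p ω| := abs_mul _ _
        _ ≤ (C + D) * (C + C) := by
            exact mul_le_mul h3 h4 (abs_nonneg _) (by linarith [abs_nonneg (p ω - g ω)])
  have hcross : ∫ ω, (p ω - g ω) * (φ ω - p ω) ∂P = 0 :=
    aux_cross hm P hφ (ae_of_all _ hφC) (hpSM.sub hg) (D := C + D) (by
      filter_upwards [hpC, hgD] with ω h1 h2
      exact (abs_sub _ _).trans (add_le_add h1 h2))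
  have hexp : ∀ ω, (φ ω - g ω) ^ 2
      = (φ ω - p ω) ^ 2 + ((p ω - g ω) ^ 2 + 2 * ((p ω - g ω) * (φ ω - p ω))) := by
    intro ω; ring
  calc ∫ ω, (φ ω - g ω) ^ 2 ∂P
      = ∫ ω, ((φ ω - p ω) ^ 2 + ((p ω - g ω) ^ 2 + 2 * ((p ω - g ω) * (φ ω - p ω)))) ∂P :=
        integral_congr_ae (ae_of_all _ hexp)
    _ = ∫ ω, (φ ω - p ω) ^ 2 ∂P + ∫ ω, ((p ω - g ω) ^ 2 + 2 * ((p ω - g ω) * (φ ω - p ω))) ∂P :=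
        integral_add i1 (i2.add (i3.const_mul 2))
    _ = ∫ ω, (φ ω - p ω) ^ 2 ∂P + (∫ ω, (p ω - g ω) ^ 2 ∂P
          + ∫ ω, 2 * ((p ω - g ω) * (φ ω - p ω)) ∂P) := by
        rw [integral_add i2 (i3.const_mul 2)]
    _ = ∫ ω, (φ ω - p ω) ^ 2 ∂P + ∫ ω, (p ω - g ω) ^ 2 ∂P := by
        rw [integral_const_mul, hcross]; ring

lemma aux_factor {Ω S : Type} [m' : MeasurableSpace S] {W : Ω → S}
    (g : @SimpleFunc Ω (MeasurableSpace.comap W m') ℝ) :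
    ∃ f : S → ℝ, Measurable f ∧ (∃ D, ∀ s, |f s| ≤ D) ∧ ∀ ω, f (W ω) = g ω := by
  letI : MeasurableSpace Ω := MeasurableSpace.comap W m'
  have hA : ∀ c : ℝ, ∃ A, MeasurableSet[m'] A ∧ W ⁻¹' A = g ⁻¹' {c} := fun c =>
    g.measurableSet_fiber c
  choose A hA1 hA2 using hA
  refine ⟨fun s => ∑ c ∈ g.range, Set.indicator (A c) (fun _ => c) s, ?_, ?_, ?_⟩
  · exact Finset.measurable_sum _ fun c _ =>
      measurable_const.indicator (hA1 c)
  · refine ⟨∑ c ∈ g.range, |c|, fun s => ?_⟩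
    refine (Finset.abs_sum_le_sum_abs _ _).trans (Finset.sum_le_sum fun c _ => ?_)
    by_cases hs : s ∈ A c <;> simp [Set.indicator_apply, hs, abs_nonneg]
  · intro ω
    have hmem : ∀ c, W ω ∈ A c ↔ g ω = c := by
      intro c
      constructor
      · intro hc
        have : ω ∈ W ⁻¹' A c := hc
        rw [hA2 c] at this
        simpa using this
      · intro hc
        have : ω ∈ g ⁻¹' {c} := by simpa using hc
        rw [← hA2 c] at this
        exact this
    show ∑ c ∈ g.range, (A c).indicator (fun _ => c) (W ω) = g ω
    rw [Finset.sum_eq_single (g ω)]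
    · simp [Set.indicator_apply, (hmem (g ω)).2 rfl]
    · intro c _ hc
      have : W ω ∉ A c := fun hcc => hc ((hmem c).1 hcc).symm
      simp [Set.indicator_apply, this]
    · intro hrange
      exact absurd (SimpleFunc.mem_range_self g ω) hrange

lemma aux_sInf {Ω S : Type} {m0 : MeasurableSpace Ω} (P : Measure Ω)
    [IsProbabilityMeasure P] [m' : MeasurableSpace S] {W : Ω → S}
    (hW : MeasurableSpace.comap W m' ≤ m0)
    {φ : Ω → ℝ} (hφ : Measurable φ) {C : ℝ} (hC : 0 ≤ C) (hφC : ∀ ω, |φ ω| ≤ C) :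
    sInf {r : ℝ | ∃ f : S → ℝ, Measurable f ∧ (∃ D, ∀ s, |f s| ≤ D) ∧
        r = ∫ ω, (φ ω - f (W ω)) ^ 2 ∂P}
      = ∫ ω, (φ ω - (P[φ|MeasurableSpace.comap W m']) ω) ^ 2 ∂P := by
  set m := MeasurableSpace.comap W m' with hm
  set p := P[φ|m] with hp
  have hpSM : StronglyMeasurable[m] p := stronglyMeasurable_condExp
  have hpC : ∀ᵐ ω ∂P, |p ω| ≤ C := by
    have := ae_bdd_condExp_of_ae_bdd (μ := P) (m := m) (R := ⟨C, hC⟩)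
      (f := φ) (ae_of_all _ hφC)
    exact this
  have hWm : @Measurable Ω S m m' W := Measurable.of_comap_le le_rfl
  -- lower bound
  have hlb : ∀ r ∈ {r : ℝ | ∃ f : S → ℝ, Measurable f ∧ (∃ D, ∀ s, |f s| ≤ D) ∧
      r = ∫ ω, (φ ω - f (W ω)) ^ 2 ∂P}, ∫ ω, (φ ω - p ω) ^ 2 ∂P ≤ r := by
    rintro r ⟨f, hf, ⟨D, hD⟩, rfl⟩
    have hgSM : StronglyMeasurable[m] (fun ω => f (W ω)) :=
      ((hf.comp hWm).stronglyMeasurable : StronglyMeasurable[m] (f ∘ W))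
    have := aux_pyth hW P hφ hC hφC hgSM (D := D)
      (ae_of_all _ fun ω => hD (W ω))
    rw [this]
    have : 0 ≤ ∫ ω, (p ω - f (W ω)) ^ 2 ∂P := integral_nonneg fun ω => sq_nonneg _
    linarith
  have hne : {r : ℝ | ∃ f : S → ℝ, Measurable f ∧ (∃ D, ∀ s, |f s| ≤ D) ∧
      r = ∫ ω, (φ ω - f (W ω)) ^ 2 ∂P}.Nonempty :=
    ⟨∫ ω, (φ ω - (0 : S → ℝ) (W ω)) ^ 2 ∂P, 0, measurable_const, ⟨0, by simp⟩, rfl⟩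
  have hbdd : BddBelow {r : ℝ | ∃ f : S → ℝ, Measurable f ∧ (∃ D, ∀ s, |f s| ≤ D) ∧
      r = ∫ ω, (φ ω - f (W ω)) ^ 2 ∂P} := ⟨∫ ω, (φ ω - p ω) ^ 2 ∂P, hlb⟩
  refine le_antisymm ?_ (le_csInf hne hlb)
  -- upper bound via approximation
  set fs := hpSM.approxBounded C with hfs
  have hfs_tendsto : ∀ᵐ ω ∂P, Filter.Tendsto (fun n => fs n ω) Filter.atTop (nhds (p ω)) :=
    hpSM.tendsto_approxBounded_ae (by simpa [Real.norm_eq_abs] using hpC)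
  have hfs_bound : ∀ n ω, |fs n ω| ≤ C := by
    intro n ω
    simpa [Real.norm_eq_abs] using hpSM.norm_approxBounded_le hC n ω
  have hvmem : ∀ n, (∫ ω, (φ ω - fs n ω) ^ 2 ∂P) ∈ {r : ℝ | ∃ f : S → ℝ, Measurable f ∧
      (∃ D, ∀ s, |f s| ≤ D) ∧ r = ∫ ω, (φ ω - f (W ω)) ^ 2 ∂P} := by
    intro n
    obtain ⟨f, hf, hfD, hfW⟩ := aux_factor (fs n)
    exact ⟨f, hf, hfD, by simp_rw [hfW]⟩
  have hvtendsto : Filter.Tendsto (fun n => ∫ ω, (φ ω - fs n ω) ^ 2 ∂P) Filter.atTop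
      (nhds (∫ ω, (φ ω - p ω) ^ 2 ∂P)) := by
    refine tendsto_integral_of_dominated_convergence (fun _ => (C + C) ^ 2) ?_ ?_ ?_ ?_
    · intro n
      exact ((hφ.sub (((fs n).measurable.mono hW le_rfl))).pow_const 2).aestronglyMeasurable
    · exact integrable_const _
    · intro n
      refine ae_of_all _ fun ω => ?_
      rw [Real.norm_eq_abs, abs_of_nonneg (sq_nonneg _), ← sq_abs]
      exact pow_le_pow_left₀ (abs_nonneg _)
        ((abs_sub _ _).trans (add_le_add (hφC ω) (hfs_bound n ω))) 2
    · filter_upwards [hfs_tendsto] with ω hω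
      exact (Filter.Tendsto.const_sub _ hω).pow 2
  exact ge_of_tendsto hvtendsto (Filter.Eventually.of_forall fun n => csInf_le hbdd (hvmem n))

/-- Identity (2.3) of Kurtz: compatibility is equivalent to the equality of the
`L²`-approximation errors of `h(Y)` by functions of `(X,Y)` and by functions of `Y`,
hence is a property of the joint distribution of `(X,Y)`. -/
theorem stmt12
    {S1 S2 : Type} (B1 : MeasurableSpace S1) [mS1 : MeasurableSpace S1] [TopologicalSpace S1] [PolishSpace S1] [BorelSpace S1]
    (B2 : MeasurableSpace S2) [mS2 : MeasurableSpace S2] [TopologicalSpace S2] [PolishSpace S2] [BorelSpace S2]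
    {Ω : Type} [MeasurableSpace Ω] (P : Measure Ω) [IsProbabilityMeasure P]
    (X : Ω → S1) (Y : Ω → S2) (hX : Measurable X) (hY : Measurable Y)
    (hB1 : B1 ≤ mS1)
    (hB2 : B2 ≤ mS2)
    (h : S2 → ℝ) (hh : Measurable h) (hbd : ∃ C, ∀ x, |h x| ≤ C) :
    (P[fun ω => h (Y ω)|MeasurableSpace.comap X B1 ⊔ MeasurableSpace.comap Y B2]
      =ᵐ[P] P[fun ω => h (Y ω)|MeasurableSpace.comap Y B2])
    ↔ sInf {r : ℝ | ∃ f : S1 × S2 → ℝ, Measurable[B1.prod B2] f ∧ (∃ C, ∀ p, |f p| ≤ C) ∧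
          r = ∫ ω, (h (Y ω) - f (X ω, Y ω)) ^ 2 ∂P}
      = sInf {r : ℝ | ∃ f : S2 → ℝ, Measurable[B2] f ∧ (∃ C, ∀ y, |f y| ≤ C) ∧
          r = ∫ ω, (h (Y ω) - f (Y ω)) ^ 2 ∂P} := by
  obtain ⟨C0, hC0⟩ := hbd
  set C := max C0 0 with hCdef
  have hC : 0 ≤ C := le_max_right _ _
  have hφC : ∀ ω, |h (Y ω)| ≤ C := fun ω => (hC0 (Y ω)).trans (le_max_left _ _)
  have hφ : Measurable fun ω => h (Y ω) := (hh.comp hY :)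
  have hH : MeasurableSpace.comap Y B2 ≤ ‹MeasurableSpace Ω› :=
    (MeasurableSpace.comap_mono hB2).trans hY.comap_le
  have hG : MeasurableSpace.comap X B1 ⊔ MeasurableSpace.comap Y B2 ≤ ‹MeasurableSpace Ω› :=
    sup_le ((MeasurableSpace.comap_mono hB1).trans hX.comap_le) hH
  have hZ : MeasurableSpace.comap (fun ω => (X ω, Y ω)) (B1.prod B2)
      = MeasurableSpace.comap X B1 ⊔ MeasurableSpace.comap Y B2 := by
    rw [MeasurableSpace.prod, MeasurableSpace.comap_sup, MeasurableSpace.comap_comp,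
      MeasurableSpace.comap_comp]
    rfl
  have e1 := aux_sInf (m' := B1.prod B2) (W := fun ω => (X ω, Y ω)) P
    (by rw [hZ]; exact hG) hφ hC hφC
  have e2 := aux_sInf (m' := B2) (W := Y) P hH hφ hC hφC
  rw [hZ] at e1
  beta_reduce at e1 e2
  rw [e1, e2]
  set p := P[fun ω => h (Y ω)|MeasurableSpace.comap X B1 ⊔ MeasurableSpace.comap Y B2] with hpd
  set q := P[fun ω => h (Y ω)|MeasurableSpace.comap Y B2] with hqd
  have hqSM : StronglyMeasurable[MeasurableSpace.comap X B1 ⊔ MeasurableSpace.comap Y B2] q :=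
    stronglyMeasurable_condExp.mono le_sup_right
  have hqC : ∀ᵐ ω ∂P, |q ω| ≤ C := by
    have := ae_bdd_condExp_of_ae_bdd (μ := P) (m := MeasurableSpace.comap Y B2)
      (R := ⟨C, hC⟩) (f := fun ω => h (Y ω)) (ae_of_all _ hφC)
    exact this
  have hpC : ∀ᵐ ω ∂P, |p ω| ≤ C := by
    have := ae_bdd_condExp_of_ae_bdd (μ := P)
      (m := MeasurableSpace.comap X B1 ⊔ MeasurableSpace.comap Y B2)
      (R := ⟨C, hC⟩) (f := fun ω => h (Y ω)) (ae_of_all _ hφC)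
    exact this
  have E : ∫ ω, (h (Y ω) - q ω) ^ 2 ∂P
      = ∫ ω, (h (Y ω) - p ω) ^ 2 ∂P + ∫ ω, (p ω - q ω) ^ 2 ∂P :=
    aux_pyth hG P hφ hC hφC hqSM (D := C) hqC
  constructor
  · intro hpq
    have : (fun ω => (h (Y ω) - p ω) ^ 2) =ᵐ[P] fun ω => (h (Y ω) - q ω) ^ 2 := by
      filter_upwards [hpq] with ω hω
      rw [hω]
    exact integral_congr_ae this
  · intro heq
    have hzero : ∫ ω, (p ω - q ω) ^ 2 ∂P = 0 := by linarith [E, heq]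
    have hpmeas : Measurable p := (stronglyMeasurable_condExp.mono hG).measurable
    have hqmeas : Measurable q := (stronglyMeasurable_condExp.mono hH).measurable
    have hint : Integrable (fun ω => (p ω - q ω) ^ 2) P := by
      refine aux_int_bdd P ((hpmeas.sub hqmeas).pow_const 2).aestronglyMeasurable
        (C := (C + C) ^ 2) ?_
      filter_upwards [hpC, hqC] with ω h1 h2
      rw [abs_of_nonneg (sq_nonneg _), ← sq_abs]
      exact pow_le_pow_left₀ (abs_nonneg _) ((abs_sub _ _).trans (add_le_add h1 h2)) 2
    have := (integral_eq_zero_iff_of_nonneg (fun ω => sq_nonneg _) hint).1 hzero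
    filter_upwards [this] with ω hω
    have : p ω - q ω = 0 := by
      have := hω
      simpa [pow_eq_zero_iff] using this
    linarith
end

section
/- Let X be a right-continuous E1-valued process and Y a right-continuous E2-valued process. Then X is RC-compatible with Y (compatible with respect to the RC-compatibility structure indexed by (t,ε), t ≥ 0, ε > 0, built from time-averaged functionals) if and only if for all t > 0 and all bounded Borel h, E[h(Y) | F^Y_{t+} ∨ F^X_{t−}] = E[h(Y) | F^Y_{t+}] almost surely, where F^X_{t−} = ∨_{s<t} F^X_s and F^Y_{t+} = ∩_{s>t} F^Y_s for the natural filtrations of X and Y. -/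
open MeasureTheory ProbabilityTheory MeasurableSpace

/-- Natural filtration of a process at time `s` (σ-algebra generated by the values
at times `u ∈ [0,s]`). -/
def natF {Ω E : Type} [MeasurableSpace E] (Z : Ω → ℝ → E) (s : ℝ) :
    MeasurableSpace Ω :=
  ⨆ u ∈ Set.Icc (0:ℝ) s, MeasurableSpace.comap (fun ω => Z ω u) inferInstance

/-- The σ-algebra `F^Y_{(t,ε)}` of the RC-compatibility structure: generated by the
forward time averages `∫_s^{s+r} g(Y(u)) du`, `s ≤ t`, `0 < r < ε`, `g ∈ C_b(E)`. -/
noncomputable def RCy {Ω E : Type} [TopologicalSpace E] (Y : Ω → ℝ → E) (t ε : ℝ) :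
    MeasurableSpace Ω :=
  ⨆ s ∈ Set.Icc (0:ℝ) t, ⨆ r ∈ Set.Ioo (0:ℝ) ε,
    ⨆ g ∈ {g : E → ℝ | Continuous g ∧ ∃ M, ∀ x, |g x| ≤ M},
      MeasurableSpace.comap (fun ω => ∫ u in s..(s + r), g (Y ω u)) inferInstance

/-- The σ-algebra `F^X_{(t,ε)}` of the RC-compatibility structure: generated by the
backward time averages `∫_{(s−r)∨0}^s g(X(u)) du`, `s ≤ t`, `0 < r < ε`, `g ∈ C_b(E)`. -/
noncomputable def RCx {Ω E : Type} [TopologicalSpace E] (X : Ω → ℝ → E) (t ε : ℝ) :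
    MeasurableSpace Ω :=
  ⨆ s ∈ Set.Icc (0:ℝ) t, ⨆ r ∈ Set.Ioo (0:ℝ) ε,
    ⨆ g ∈ {g : E → ℝ | Continuous g ∧ ∃ M, ∀ x, |g x| ≤ M},
      MeasurableSpace.comap (fun ω => ∫ u in (max (s - r) 0)..s, g (X ω u)) inferInstance

/-! For right-continuous paths, time averages of `g ∘ X` and point values of `X` generate the
same σ-algebras: `F^X_{(t,ε)} = σ(X u : u < t) = F^X_{t−}` and `F^Y_{(t,ε)} = σ(Y u : u < t + ε)`.
By Doob's criterion, `E[h(Y) | B ∨ C] = E[h(Y) | C]` for all bounded `h` (with `C ⊆ σ(Y)`) says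
exactly that `E[1_D | σ(Y)]` has a `C`-measurable version for every `D ∈ B`. This condition is
monotone in `C`, and a function having an `m_n`-measurable version for a decreasing sequence
`m_n` has an `⋂ m_n`-measurable one (take the limsup of the versions). Letting `ε ↓ 0` turns
RC-compatibility into the condition with `C = F^Y_{t+}`; conversely
`F^Y_{(t+ε/2)+} ⊆ σ(Y u : u < t + ε)` and `F^X_{t−} ⊆ F^X_{(t+ε/2)−}`. -/

open Filter Set Topology

lemma tendsto_ceil_mul_div_nhdsGE (x : ℝ) :
    Tendsto (fun n : ℕ => (⌈x * (n + 1)⌉ : ℝ) / (n + 1)) atTop (𝓝[≥] x) := by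
  have hpos (n : ℕ) : (0 : ℝ) < n + 1 := by positivity
  have hge (n : ℕ) : x ≤ (⌈x * (n + 1)⌉ : ℝ) / (n + 1) :=
    (le_div_iff₀ (hpos n)).2 (Int.le_ceil _)
  have hlt (n : ℕ) : (⌈x * (n + 1)⌉ : ℝ) / (n + 1) ≤ x + 1 / (n + 1) := by
    rw [div_le_iff₀ (hpos n), add_mul, one_div_mul_cancel (hpos n).ne']
    exact (Int.ceil_lt_add_one _).le
  refine tendsto_nhdsWithin_iff.2 ⟨?_, Eventually.of_forall hge⟩
  refine tendsto_of_tendsto_of_tendsto_of_le_of_le tendsto_const_nhds ?_ hge hlt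
  simpa using (tendsto_const_nhds (x := x)).add (tendsto_one_div_add_atTop_nhds_zero_nat (𝕜 := ℝ))

lemma tendsto_projIcc_nhdsGE {a b : ℝ} (hab : a ≤ b) (x : ℝ) :
    Tendsto (fun y => (projIcc a b hab y : ℝ)) (𝓝[≥] x) (𝓝[≥] (projIcc a b hab x : ℝ)) :=
  tendsto_nhdsWithin_iff.2
    ⟨(continuous_subtype_val.comp continuous_projIcc).continuousWithinAt.tendsto,
      eventually_nhdsWithin_of_forall fun _ hy => monotone_projIcc hab hy⟩

section RightContinuous

variable {Ω β : Type*} {m : MeasurableSpace Ω} [TopologicalSpace β]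
  [TopologicalSpace.PseudoMetrizableSpace β] [MeasurableSpace β] [BorelSpace β] {a b : ℝ}

lemma measurable_uncurry_projIcc_of_continuousWithinAt {F : Ω → ℝ → β} (hab : a ≤ b)
    (hF : ∀ ω, ∀ u ∈ Icc a b, ContinuousWithinAt (F ω) (Ici u) u)
    (hmeas : ∀ u ∈ Icc a b, Measurable (F · u)) :
    Measurable fun p : Ω × ℝ => F p.1 (projIcc a b hab p.2) := by
  refine measurable_of_tendsto_metrizable
    (f := fun (n : ℕ) p => F p.1 (projIcc a b hab ((⌈p.2 * ((n : ℝ) + 1)⌉ : ℝ) / (n + 1))))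
    (fun n => ?_) (tendsto_pi_nhds.2 fun p => ?_)
  -- on the right-approximating grid `⌈u (n+1)⌉ / (n+1)` only countably many times occur
  · have hgrid : Measurable fun q : Ω × ℤ => F q.1 (projIcc a b hab ((q.2 : ℝ) / (n + 1))) :=
      measurable_from_prod_countable_left fun k =>
        hmeas (projIcc a b hab ((k : ℝ) / (n + 1))) (Subtype.prop _)
    exact hgrid.comp (measurable_fst.prodMk
      (Int.measurable_ceil.comp (measurable_snd.mul_const _)))
  · exact (hF p.1 _ (Subtype.prop _)).tendsto.comp
      ((tendsto_projIcc_nhdsGE hab p.2).comp (tendsto_ceil_mul_div_nhdsGE p.2))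

lemma aestronglyMeasurable_of_continuousWithinAt {f : ℝ → ℝ} (hab : a ≤ b)
    (hf : ∀ u ∈ Icc a b, ContinuousWithinAt f (Ici u) u) :
    AEStronglyMeasurable f (volume.restrict (Icc a b)) := by
  have hproj : Measurable fun u => f (projIcc a b hab u) :=
    (measurable_uncurry_projIcc_of_continuousWithinAt (m := ⊤) (F := fun (_ : Unit) => f) hab
      (fun _ => hf) fun _ _ => measurable_from_top).comp (measurable_prodMk_left (x := ()))
  refine hproj.aestronglyMeasurable.congr ?_
  filter_upwards [ae_restrict_mem measurableSet_Icc] with u hu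
  rw [projIcc_of_mem hab hu]

lemma intervalIntegrable_of_continuousWithinAt {f : ℝ → ℝ} {M : ℝ} (hab : a ≤ b)
    (hf : ∀ u ∈ Icc a b, ContinuousWithinAt f (Ici u) u) (hM : ∀ u, |f u| ≤ M) :
    IntervalIntegrable f volume a b := by
  rw [intervalIntegrable_iff_integrableOn_Icc_of_le hab]
  exact (integrable_const M).mono' (aestronglyMeasurable_of_continuousWithinAt hab hf)
    (Eventually.of_forall hM)

lemma measurable_intervalIntegral_of_forall_Icc {F : Ω → ℝ → ℝ} (hab : a ≤ b)
    (hF : ∀ ω, ∀ u ∈ Icc a b, ContinuousWithinAt (F ω) (Ici u) u)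
    (hmeas : ∀ u ∈ Icc a b, Measurable (F · u)) :
    Measurable fun ω => ∫ u in a..b, F ω u := by
  have hint := (measurable_uncurry_projIcc_of_continuousWithinAt hab hF hmeas).stronglyMeasurable
    |>.integral_prod_right' (ν := volume.restrict (Ioc a b))
  convert hint.measurable using 1
  funext ω
  rw [intervalIntegral.integral_of_le hab]
  refine setIntegral_congr_fun measurableSet_Ioc fun u hu => ?_
  rw [projIcc_of_mem hab (Ioc_subset_Icc_self hu)]

lemma measurable_intervalIntegral_of_forall_Ico {F : Ω → ℝ → ℝ} {M : ℝ} (hab : a ≤ b)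
    (hF : ∀ ω, ∀ u ∈ Icc a b, ContinuousWithinAt (F ω) (Ici u) u) (hM : ∀ ω u, |F ω u| ≤ M)
    (hmeas : ∀ u ∈ Ico a b, Measurable (F · u)) :
    Measurable fun ω => ∫ u in a..b, F ω u := by
  rcases hab.eq_or_lt with rfl | hlt
  · simp
  -- `F · b` need not be measurable, so integrate up to `c n ↑ b` instead
  set c : ℕ → ℝ := fun n => b - (b - a) / (n + 1)
  have hc (n : ℕ) : c n ∈ Ico a b := by
    have hpos : (0 : ℝ) < (b - a) / (n + 1) := by have := sub_pos.2 hlt; positivity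
    have hle : (b - a) / (n + 1) ≤ b - a := div_le_self (sub_pos.2 hlt).le (by simp)
    exact ⟨by linarith, by linarith⟩
  have hcb : Tendsto c atTop (𝓝[uIcc a b] b) := by
    refine tendsto_nhdsWithin_iff.2 ⟨?_, Eventually.of_forall fun n =>
      Icc_subset_uIcc (Ico_subset_Icc_self (hc n))⟩
    simpa using tendsto_const_nhds.sub
      ((tendsto_const_div_atTop_nhds_zero_nat (b - a)).comp (tendsto_add_atTop_nat 1))
  refine measurable_of_tendsto_metrizable (f := fun n ω => ∫ u in a..c n, F ω u)
    (fun n => measurable_intervalIntegral_of_forall_Icc (hc n).1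
      (fun ω u hu => hF ω u ⟨hu.1, hu.2.trans (hc n).2.le⟩)
      fun u hu => hmeas u ⟨hu.1, hu.2.trans_lt (hc n).2⟩)
    (tendsto_pi_nhds.2 fun ω => ?_)
  have hint := intervalIntegrable_of_continuousWithinAt hab (hF ω) (hM ω)
  exact ((intervalIntegral.continuousOn_primitive_interval' hint left_mem_uIcc) b
    right_mem_uIcc).tendsto.comp hcb

end RightContinuous

lemma tendsto_inv_mul_intervalIntegral_nhdsGT {f : ℝ → ℝ} {u : ℝ}
    (hf : ContinuousWithinAt f (Ici u) u) (hmeas : StronglyMeasurableAtFilter f (𝓝[>] u)) :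
    Tendsto (fun v => (v - u)⁻¹ * ∫ x in u..v, f x) (𝓝[>] u) (𝓝 (f u)) := by
  have hd : HasDerivWithinAt (fun v => ∫ x in u..v, f x) (f u) (Ici u) u :=
    intervalIntegral.integral_hasDerivWithinAt_right IntervalIntegrable.refl hmeas
      (hf.mono Ioi_subset_Ici_self)
  refine ((hasDerivWithinAt_iff_tendsto_slope' (lt_irrefl u)).1
    (hd.mono Ioi_subset_Ici_self)).congr fun v => ?_
  simp [slope_def_field, div_eq_inv_mul]

lemma measurable_of_forall_continuous_bounded {Ω E : Type*} {m : MeasurableSpace Ω}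
    [TopologicalSpace E] [PerfectlyNormalSpace E] [MeasurableSpace E] [BorelSpace E] {f : Ω → E}
    (H : ∀ g : E → ℝ, Continuous g → (∃ M, ∀ x, |g x| ≤ M) → Measurable fun ω => g (f ω)) :
    Measurable f := by
  refine measurable_of_isClosed fun s hs => ?_
  obtain ⟨g, rfl, hg⟩ := perfectlyNormalSpace_iff_forall_isClosed_preimage_zero.1 ‹_› s hs
  exact H g g.continuous ⟨1, fun x => abs_le.2 ⟨by linarith [(hg x).1], (hg x).2⟩⟩
    (measurableSet_singleton 0)

lemma measurable_of_forall_measurable_average {Ω E : Type*} {m : MeasurableSpace Ω}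
    [TopologicalSpace E] [PerfectlyNormalSpace E] [MeasurableSpace E] [BorelSpace E]
    {Z : Ω → ℝ → E} {u η : ℝ} (hη : 0 < η)
    (hZ : ∀ ω, ∀ v ∈ Icc u (u + η), ContinuousWithinAt (Z ω) (Ici v) v)
    (havg : ∀ g : E → ℝ, Continuous g → (∃ M, ∀ x, |g x| ≤ M) → ∀ δ ∈ Ioo 0 η,
      Measurable fun ω => ∫ v in u..u + δ, g (Z ω v)) :
    Measurable fun ω => Z ω u := by
  refine measurable_of_forall_continuous_bounded fun g hg hgM => ?_
  set δ : ℕ → ℝ := fun n => η / (n + 2)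
  have hδ (n : ℕ) : δ n ∈ Ioo 0 η :=
    ⟨by positivity, div_lt_self hη (by linarith [n.cast_nonneg (α := ℝ)])⟩
  have hδ0 : Tendsto (fun n => u + δ n) atTop (𝓝[>] u) := by
    refine tendsto_nhdsWithin_iff.2 ⟨?_, Eventually.of_forall fun n => by simpa using (hδ n).1⟩
    simpa using tendsto_const_nhds.add
      ((tendsto_const_div_atTop_nhds_zero_nat η).comp (tendsto_add_atTop_nat 2))
  refine measurable_of_tendsto_metrizable
    (f := fun n ω => (u + δ n - u)⁻¹ * ∫ v in u..u + δ n, g (Z ω v))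
    (fun n => (havg g hg hgM (δ n) (hδ n)).const_mul _) (tendsto_pi_nhds.2 fun ω => ?_)
  have hgZ (v : ℝ) (hv : v ∈ Icc u (u + η)) : ContinuousWithinAt (fun v => g (Z ω v)) (Ici v) v :=
    hg.continuousAt.comp_continuousWithinAt (hZ ω v hv)
  have hmeas : StronglyMeasurableAtFilter (fun v => g (Z ω v)) (𝓝[>] u) :=
    ⟨Icc u (u + η), mem_of_superset (Ioo_mem_nhdsGT (by linarith)) Ioo_subset_Icc_self,
      aestronglyMeasurable_of_continuousWithinAt (by linarith) hgZ⟩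
  exact (tendsto_inv_mul_intervalIntegral_nhdsGT (hgZ u ⟨le_rfl, by linarith⟩) hmeas).comp hδ0

def coordSigma {Ω E : Type*} [MeasurableSpace E] (Z : Ω → ℝ → E) (S : Set ℝ) :
    MeasurableSpace Ω :=
  ⨆ u ∈ S, MeasurableSpace.comap (fun ω => Z ω u) inferInstance

section CoordSigma

variable {Ω E : Type*} [MeasurableSpace E] {Z : Ω → ℝ → E} {S T : Set ℝ}

lemma coordSigma_le_iff {m : MeasurableSpace Ω} :
    coordSigma Z S ≤ m ↔ ∀ u ∈ S, Measurable[m] (Z · u) := by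
  simp only [coordSigma, iSup₂_le_iff, measurable_iff_comap_le]

lemma measurable_coordSigma {u : ℝ} (hu : u ∈ S) : Measurable[coordSigma Z S] (Z · u) :=
  coordSigma_le_iff.1 le_rfl u hu

lemma coordSigma_mono (h : S ⊆ T) : coordSigma Z S ≤ coordSigma Z T :=
  coordSigma_le_iff.2 fun _ hu => measurable_coordSigma (h hu)

lemma coordSigma_le_comap (S : Set ℝ) :
    coordSigma Z S ≤ MeasurableSpace.comap Z MeasurableSpace.pi :=
  coordSigma_le_iff.2 fun u _ => (measurable_pi_apply u).comp (comap_measurable Z)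

end CoordSigma

section NaturalFiltration

variable {Ω E : Type} [MeasurableSpace E] {Z : Ω → ℝ → E}

lemma iSup_natF_Ico (t : ℝ) : ⨆ s ∈ Ico (0 : ℝ) t, natF Z s = coordSigma Z (Ico 0 t) := by
  refine le_antisymm (iSup₂_le fun s hs => coordSigma_mono (Icc_subset_Ico_right hs.2)) ?_
  exact coordSigma_le_iff.2 fun u hu =>
    (measurable_coordSigma (Z := Z) (S := Icc 0 u) ⟨hu.1, le_rfl⟩).mono
      (le_iSup₂ (f := fun s (_ : s ∈ Ico (0 : ℝ) t) => natF Z s) u hu) le_rfl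

lemma iInf_natF_le_coordSigma {t t' : ℝ} (h : t < t') :
    ⨅ s ∈ Ioi t, natF Z s ≤ coordSigma Z (Ico 0 t') :=
  (iInf₂_le ((t + t') / 2) (by simp only [mem_Ioi]; linarith)).trans
    (coordSigma_mono (Icc_subset_Ico_right (by linarith)))

lemma iInf_coordSigma_le_iInf_natF (t : ℝ) :
    ⨅ n : ℕ, coordSigma Z (Ico 0 (t + 1 / (n + 1))) ≤ ⨅ s ∈ Ioi t, natF Z s := by
  refine le_iInf₂ fun s hs => ?_
  obtain ⟨n, hn⟩ := exists_nat_one_div_lt (sub_pos.2 (mem_Ioi.1 hs))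
  exact (iInf_le _ n).trans
    (coordSigma_mono (Ico_subset_Icc_self.trans (Icc_subset_Icc_right (by linarith))))

lemma iInf_natF_le_comap (t : ℝ) :
    ⨅ s ∈ Ioi t, natF Z s ≤ MeasurableSpace.comap Z MeasurableSpace.pi :=
  (iInf₂_le (t + 1) (by simp)).trans (coordSigma_le_comap _)

end NaturalFiltration

section RCSigma

variable {Ω E : Type} [TopologicalSpace E] {Z : Ω → ℝ → E} {t ε : ℝ}

lemma measurable_RCy_intervalIntegral {s r : ℝ} (hs : s ∈ Icc 0 t) (hr : r ∈ Ico 0 ε)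
    {g : E → ℝ} (hg : Continuous g) (hM : ∃ M, ∀ x, |g x| ≤ M) :
    Measurable[RCy Z t ε] fun ω => ∫ u in s..s + r, g (Z ω u) := by
  rcases hr.1.eq_or_lt with rfl | hr0
  · simp
  exact measurable_iff_comap_le.2 <| le_iSup₂_of_le s hs <| le_iSup₂_of_le r ⟨hr0, hr.2⟩ <|
    le_iSup₂_of_le g ⟨hg, hM⟩ le_rfl

lemma measurable_RCx_intervalIntegral {s r : ℝ} (hs : s ∈ Icc 0 t) (hr : r ∈ Ioo 0 ε)
    {g : E → ℝ} (hg : Continuous g) (hM : ∃ M, ∀ x, |g x| ≤ M) :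
    Measurable[RCx Z t ε] fun ω => ∫ u in (max (s - r) 0)..s, g (Z ω u) :=
  measurable_iff_comap_le.2 <| le_iSup₂_of_le s hs <| le_iSup₂_of_le r hr <|
    le_iSup₂_of_le g ⟨hg, hM⟩ le_rfl

variable [MeasurableSpace E] [BorelSpace E]
  (hZ : ∀ ω, ∀ u, 0 ≤ u → ContinuousWithinAt (Z ω) (Ici u) u)
include hZ

lemma measurable_intervalIntegral_coordSigma {a b : ℝ} (ha : 0 ≤ a) (hab : a ≤ b)
    {g : E → ℝ} (hg : Continuous g) (hM : ∃ M, ∀ x, |g x| ≤ M) :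
    Measurable[coordSigma Z (Ico 0 b)] fun ω => ∫ u in a..b, g (Z ω u) := by
  obtain ⟨M, hM⟩ := hM
  exact measurable_intervalIntegral_of_forall_Ico hab
    (fun ω u hu => hg.continuousAt.comp_continuousWithinAt (hZ ω u (ha.trans hu.1)))
    (fun _ _ => hM _) fun u hu => hg.measurable.comp (measurable_coordSigma ⟨ha.trans hu.1, hu.2⟩)

lemma RCy_eq_coordSigma [PerfectlyNormalSpace E] (ht : 0 ≤ t) (hε : 0 < ε) :
    RCy Z t ε = coordSigma Z (Ico 0 (t + ε)) := by
  refine le_antisymm (iSup₂_le fun s hs => iSup₂_le fun r hr => iSup₂_le fun g hg => ?_) ?_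
  · exact measurable_iff_comap_le.1 <|
      (measurable_intervalIntegral_coordSigma hZ hs.1 (by linarith [hr.1]) hg.1 hg.2).mono
        (coordSigma_mono (Ico_subset_Ico_right (by linarith [hs.2, hr.2]))) le_rfl
  refine coordSigma_le_iff.2 fun u hu => ?_
  refine measurable_of_forall_measurable_average (η := min ε (t + ε - u))
    (lt_min hε (by linarith [hu.2])) (fun ω v hv => hZ ω v (hu.1.trans hv.1))
    fun g hg hM δ hδ => ?_
  -- the generators start at times `≤ t`, so split `[min u t, u + δ]` at `u`
  set s := min u t
  have hδε : δ < ε := hδ.2.trans_le (min_le_left _ _)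
  have hus : u - s < ε - δ := by
    rcases le_total u t with h | h
    · rw [show s = u from min_eq_left h]; linarith
    · rw [show s = t from min_eq_right h]; linarith [hδ.2.trans_le (min_le_right _ _)]
  have hs : s ∈ Icc 0 t := ⟨le_min hu.1 ht, min_le_right _ _⟩
  have hsu : 0 ≤ u - s := sub_nonneg.2 (min_le_left _ _)
  have hint (ω : Ω) (b : ℝ) (hb : s ≤ b) :
      IntervalIntegrable (fun v => g (Z ω v)) volume s b := by
    obtain ⟨M, hM⟩ := hM
    exact intervalIntegrable_of_continuousWithinAt hb
      (fun v hv => hg.continuousAt.comp_continuousWithinAt (hZ ω v (hs.1.trans hv.1)))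
      fun _ => hM _
  have hdiff : (fun ω => ∫ v in u..u + δ, g (Z ω v)) = fun ω =>
      (∫ v in s..s + (u - s + δ), g (Z ω v)) - ∫ v in s..s + (u - s), g (Z ω v) := by
    funext ω
    rw [show s + (u - s + δ) = u + δ by ring, show s + (u - s) = u by ring,
      intervalIntegral.integral_interval_sub_left (hint ω _ (by linarith [hδ.1]))
        (hint ω _ (by linarith))]
  rw [hdiff]
  exact (measurable_RCy_intervalIntegral hs ⟨by linarith [hδ.1], by linarith⟩ hg hM).sub
    (measurable_RCy_intervalIntegral hs ⟨hsu, by linarith [hδ.1]⟩ hg hM)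

lemma RCx_eq_coordSigma [PerfectlyNormalSpace E] (hε : 0 < ε) :
    RCx Z t ε = coordSigma Z (Ico 0 t) := by
  refine le_antisymm (iSup₂_le fun s hs => iSup₂_le fun r hr => iSup₂_le fun g hg => ?_) ?_
  · exact measurable_iff_comap_le.1 <|
      (measurable_intervalIntegral_coordSigma hZ (le_max_right _ _)
        (max_le (by linarith [hr.1]) hs.1) hg.1 hg.2).mono
        (coordSigma_mono (Ico_subset_Ico_right hs.2)) le_rfl
  refine coordSigma_le_iff.2 fun u hu => ?_
  refine measurable_of_forall_measurable_average (η := min ε (t - u))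
    (lt_min hε (by linarith [hu.2])) (fun ω v hv => hZ ω v (hu.1.trans hv.1))
    fun g hg hM δ hδ => ?_
  have h := measurable_RCx_intervalIntegral (Z := Z) (t := t) (ε := ε) (s := u + δ) (r := δ)
    ⟨by linarith [hu.1, hδ.1], by linarith [hδ.2.trans_le (min_le_right _ _)]⟩
    ⟨hδ.1, hδ.2.trans_le (min_le_left _ _)⟩ hg hM
  rwa [add_sub_cancel_right, max_eq_left hu.1] at h

end RCSigma

section CondExp

open scoped ENNReal

variable {Ω : Type*} {m A B C m0 : MeasurableSpace Ω} {P : Measure Ω}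

lemma setIntegral_eq_integral_indicator_one_mul {D : Set Ω} (hD : MeasurableSet D)
    (φ : Ω → ℝ) : ∫ x in D, φ x ∂P = ∫ x, D.indicator 1 x * φ x ∂P := by
  rw [← integral_indicator hD]
  congr 1
  funext x
  by_cases hx : x ∈ D <;> simp [hx]

lemma aestronglyMeasurable_iInf_of_antitone {mseq : ℕ → MeasurableSpace Ω} (hanti : Antitone mseq)
    {ξ : Ω → ℝ} (h : ∀ n, AEStronglyMeasurable[mseq n] ξ P) :
    AEStronglyMeasurable[⨅ n, mseq n] ξ P := by
  choose g hg hξg using h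
  -- the limsup of the versions `g n` only depends on the tail, so it is `mseq k`-measurable
  have hmeas : Measurable[⨅ n, mseq n] fun ω => limsup (fun n => g n ω) atTop := by
    refine fun s hs => MeasurableSpace.measurableSet_iInf.2 fun k => ?_
    have htail : Measurable[mseq k] fun ω => limsup (fun n => g (n + k) ω) atTop :=
      Measurable.limsup fun n => (hg (n + k)).measurable.mono (hanti (Nat.le_add_left k n)) le_rfl
    convert htail hs using 3 with ω
    exact (limsup_nat_add (fun n => g n ω) k).symm
  refine ⟨_, hmeas.stronglyMeasurable, ?_⟩
  filter_upwards [ae_all_iff.2 hξg] with ω hω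
  rw [show (fun n => g n ω) = fun _ => ξ ω from funext fun n => (hω n).symm, limsup_const]

lemma setIntegral_eq_of_forall_inter {f g : Ω → ℝ} (hf : Integrable f P) (hg : Integrable g P)
    (hB : B ≤ m0) (hC : C ≤ m0)
    (h : ∀ D E, MeasurableSet[B] D → MeasurableSet[C] E →
      ∫ x in D ∩ E, f x ∂P = ∫ x in D ∩ E, g x ∂P)
    {S : Set Ω} (hS : MeasurableSet[B ⊔ C] S) : ∫ x in S, f x ∂P = ∫ x in S, g x ∂P := by
  set p : Set (Set Ω) := image2 (· ∩ ·) {D | MeasurableSet[B] D} {E | MeasurableSet[C] E}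
  have hp : IsPiSystem p := by
    rintro _ ⟨D₁, hD₁, E₁, hE₁, rfl⟩ _ ⟨D₂, hD₂, E₂, hE₂, rfl⟩ -
    exact ⟨D₁ ∩ D₂, hD₁.inter hD₂, E₁ ∩ E₂, hE₁.inter hE₂, inter_inter_inter_comm _ _ _ _⟩
  have hgen : B ⊔ C = MeasurableSpace.generateFrom p := by
    refine le_antisymm (sup_le (fun D hD => ?_) fun E hE => ?_) (generateFrom_le ?_)
    · exact measurableSet_generateFrom ⟨D, hD, univ, MeasurableSet.univ, inter_univ D⟩
    · exact measurableSet_generateFrom ⟨univ, MeasurableSet.univ, E, hE, univ_inter E⟩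
    · rintro _ ⟨D, hD, E, hE, rfl⟩
      exact (le_sup_left (b := C) _ hD).inter (le_sup_right (a := B) _ hE)
  have huniv := h univ univ MeasurableSet.univ MeasurableSet.univ
  rw [univ_inter, setIntegral_univ, setIntegral_univ] at huniv
  induction S, hS using MeasurableSpace.induction_on_inter hgen hp with
  | empty => simp
  | basic S hS =>
    obtain ⟨D, hD, E, hE, rfl⟩ := hS
    exact h D E hD hE
  | compl S hS ih =>
    have hS0 : MeasurableSet S := sup_le hB hC _ hS
    linarith [integral_add_compl hS0 hf, integral_add_compl hS0 hg]
  | iUnion S hdisj hS ih =>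
    have hS0 (i : ℕ) : MeasurableSet (S i) := sup_le hB hC _ (hS i)
    rw [integral_iUnion hS0 hdisj hf.integrableOn, integral_iUnion hS0 hdisj hg.integrableOn]
    exact tsum_congr ih

variable [IsFiniteMeasure P]

lemma setIntegral_condExp_eq_integral_condExp_indicator_mul (hm : m ≤ m0) {D : Set Ω}
    (hD : MeasurableSet D) {g : Ω → ℝ} (hg : MemLp g ∞ P) :
    ∫ x in D, P[g|m] x ∂P = ∫ x, P[D.indicator 1|m] x * g x ∂P := by
  have hD1 : Integrable (D.indicator (1 : Ω → ℝ)) P := (integrable_const 1).indicator hD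
  calc ∫ x in D, P[g|m] x ∂P = ∫ x, P[D.indicator 1 * P[g|m]|m] x ∂P := by
        rw [integral_condExp hm, setIntegral_eq_integral_indicator_one_mul hD]; rfl
    _ = ∫ x, P[D.indicator 1|m] x * P[g|m] x ∂P :=
        integral_congr_ae (condExp_mul_of_stronglyMeasurable_right stronglyMeasurable_condExp
          (integrable_condExp.mul_of_top_right ((memLp_top_const 1).indicator hD)) hD1)
    _ = ∫ x, P[P[D.indicator 1|m] * g|m] x ∂P :=
        (integral_congr_ae (condExp_mul_of_stronglyMeasurable_left stronglyMeasurable_condExp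
          (integrable_condExp.mul_of_top_left hg) (hg.integrable le_top))).symm
    _ = ∫ x, P[D.indicator 1|m] x * g x ∂P := integral_condExp hm

lemma condExp_eq_of_aestronglyMeasurable_condExp (hCA : C ≤ A) (hA : A ≤ m0) {f : Ω → ℝ}
    (h : AEStronglyMeasurable[C] (P[f|A]) P) : P[f|C] =ᵐ[P] P[f|A] :=
  (condExp_condExp_of_le hCA hA).symm.trans
    (condExp_of_aestronglyMeasurable' (hCA.trans hA) h integrable_condExp)

lemma condExp_indicator_ae_eq_of_condExp_sup_eq (hB : B ≤ m0) (hCA : C ≤ A) (hA : A ≤ m0)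
    (h : ∀ T, MeasurableSet[A] T → P[T.indicator (1 : Ω → ℝ)|B ⊔ C] =ᵐ[P] P[T.indicator 1|C])
    {D : Set Ω} (hD : MeasurableSet[B] D) :
    P[D.indicator (1 : Ω → ℝ)|C] =ᵐ[P] P[D.indicator 1|A] := by
  have hC : C ≤ m0 := hCA.trans hA
  have hD0 : MeasurableSet D := hB _ hD
  refine ae_eq_condExp_of_forall_setIntegral_eq hA ((integrable_const 1).indicator hD0)
    (fun _ _ _ => integrable_condExp.integrableOn) (fun T hT _ => ?_)
    (stronglyMeasurable_condExp.mono hCA).aestronglyMeasurable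
  have hT0 : MeasurableSet T := hA _ hT
  calc ∫ x in T, P[D.indicator 1|C] x ∂P
      = ∫ x, P[T.indicator 1|C] x * D.indicator 1 x ∂P :=
        setIntegral_condExp_eq_integral_condExp_indicator_mul hC hT0
          ((memLp_top_const 1).indicator hD0)
    _ = ∫ x in D, P[T.indicator 1|C] x ∂P := by
        simp_rw [setIntegral_eq_integral_indicator_one_mul hD0, mul_comm]
    _ = ∫ x in D, P[T.indicator 1|B ⊔ C] x ∂P :=
        setIntegral_congr_ae hD0 ((h T hT).mono fun _ hx _ => hx.symm)
    _ = ∫ x in D, T.indicator 1 x ∂P :=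
        setIntegral_condExp (sup_le hB hC) ((integrable_const 1).indicator hT0)
          (le_sup_left (b := C) _ hD)
    _ = ∫ x in T, D.indicator 1 x ∂P := by
        simp_rw [setIntegral_eq_integral_indicator_one_mul hD0,
          setIntegral_eq_integral_indicator_one_mul hT0, mul_comm]

lemma setIntegral_condExp_eq_of_condExp_indicator_eq (hCA : C ≤ A) (hA : A ≤ m0) {D : Set Ω}
    (hD : MeasurableSet D) (hDA : P[D.indicator (1 : Ω → ℝ)|A] =ᵐ[P] P[D.indicator 1|C]) {f : Ω → ℝ}
    (hfA : StronglyMeasurable[A] f) (hf : MemLp f ∞ P) :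
    ∫ x in D, P[f|C] x ∂P = ∫ x in D, f x ∂P :=
  calc ∫ x in D, P[f|C] x ∂P = ∫ x, P[D.indicator 1|C] x * f x ∂P :=
        setIntegral_condExp_eq_integral_condExp_indicator_mul (hCA.trans hA) hD hf
    _ = ∫ x, P[D.indicator 1|A] x * f x ∂P := integral_congr_ae (hDA.symm.mul (ae_eq_refl f))
    _ = ∫ x in D, P[f|A] x ∂P :=
        (setIntegral_condExp_eq_integral_condExp_indicator_mul hA hD hf).symm
    _ = ∫ x in D, f x ∂P := by rw [condExp_of_stronglyMeasurable hA hfA (hf.integrable le_top)]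

lemma condExp_sup_ae_eq_of_condExp_indicator_eq (hB : B ≤ m0) (hCA : C ≤ A) (hA : A ≤ m0)
    (h : ∀ D, MeasurableSet[B] D → P[D.indicator (1 : Ω → ℝ)|A] =ᵐ[P] P[D.indicator 1|C])
    {f : Ω → ℝ} (hfA : StronglyMeasurable[A] f) (hf : MemLp f ∞ P) :
    P[f|B ⊔ C] =ᵐ[P] P[f|C] := by
  have hC : C ≤ m0 := hCA.trans hA
  refine (ae_eq_condExp_of_forall_setIntegral_eq (sup_le hB hC) (hf.integrable le_top)
    (fun _ _ _ => integrable_condExp.integrableOn) (fun S hS _ => ?_)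
    (stronglyMeasurable_condExp.mono (le_sup_right (a := B))).aestronglyMeasurable).symm
  refine setIntegral_eq_of_forall_inter integrable_condExp (hf.integrable le_top) hB hC
    (fun D E hD hE => ?_) hS
  have hE0 : MeasurableSet E := hC _ hE
  have hEf : StronglyMeasurable[A] (E.indicator f) := hfA.indicator (hCA _ hE)
  calc ∫ x in D ∩ E, P[f|C] x ∂P = ∫ x in D, E.indicator (P[f|C]) x ∂P :=
        (setIntegral_indicator hE0).symm
    _ = ∫ x in D, P[E.indicator f|C] x ∂P := setIntegral_congr_ae (hB _ hD)
        ((condExp_indicator (hf.integrable le_top) hE).mono fun _ hx _ => hx.symm)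
    _ = ∫ x in D, E.indicator f x ∂P :=
        setIntegral_condExp_eq_of_condExp_indicator_eq hCA hA (hB _ hD) (h D hD) hEf
          (hf.indicator hE0)
    _ = ∫ x in D ∩ E, f x ∂P := setIntegral_indicator hE0

end CondExp

lemma condExp_comp_sup_ae_eq_iff {Ω Γ : Type*} {mΓ : MeasurableSpace Γ} {B C m0 : MeasurableSpace Ω}
    {P : Measure Ω} [IsFiniteMeasure P] {Y : Ω → Γ} (hY : Measurable Y) (hB : B ≤ m0)
    (hC : C ≤ mΓ.comap Y) :
    (∀ h : Γ → ℝ, Measurable h → (∃ M, ∀ x, |h x| ≤ M) →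
      P[fun ω => h (Y ω)|B ⊔ C] =ᵐ[P] P[fun ω => h (Y ω)|C]) ↔
    ∀ D, MeasurableSet[B] D →
      AEStronglyMeasurable[C] (P[D.indicator (1 : Ω → ℝ)|mΓ.comap Y]) P := by
  have hA : mΓ.comap Y ≤ m0 := hY.comap_le
  constructor
  · refine fun h D hD => (stronglyMeasurable_condExp.aestronglyMeasurable).congr
      (condExp_indicator_ae_eq_of_condExp_sup_eq hB hC hA ?_ hD)
    rintro _ ⟨T, hT, rfl⟩
    have hT1 : ∀ x, |T.indicator (1 : Γ → ℝ) x| ≤ 1 := fun x => by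
      by_cases hx : x ∈ T <;> simp [hx]
    have hind : (Y ⁻¹' T).indicator (1 : Ω → ℝ) = fun ω => T.indicator 1 (Y ω) := by
      ext ω
      by_cases hω : Y ω ∈ T <;> simp [hω]
    rw [hind]
    exact h _ (measurable_const.indicator hT) ⟨1, hT1⟩
  · rintro h f hf ⟨M, hM⟩
    exact condExp_sup_ae_eq_of_condExp_indicator_eq hB hC hA
      (fun D hD => (condExp_eq_of_aestronglyMeasurable_condExp hC hA (h D hD)).symm)
      (hf.comp (comap_measurable Y)).stronglyMeasurable
      (memLp_top_of_bound (hf.comp hY).aestronglyMeasurable M (Eventually.of_forall fun ω => hM _))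

/-- Lemma 3.5 of Kurtz: for right-continuous processes `X` and `Y`, RC-compatibility
is equivalent to `E[h(Y)|F^Y_{t+} ∨ F^X_{t−}] = E[h(Y)|F^Y_{t+}]` for all `t > 0`. -/
theorem stmt13
    {E1 E2 : Type} [MeasurableSpace E1] [TopologicalSpace E1] [PolishSpace E1] [BorelSpace E1]
    [MeasurableSpace E2] [TopologicalSpace E2] [PolishSpace E2] [BorelSpace E2]
    {Ω : Type} [MeasurableSpace Ω] (P : Measure Ω) [IsProbabilityMeasure P]
    (X : Ω → ℝ → E1) (Y : Ω → ℝ → E2)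
    (hXmeas : ∀ u : ℝ, Measurable (fun ω => X ω u))
    (hYmeas : ∀ u : ℝ, Measurable (fun ω => Y ω u))
    (hXrc : ∀ ω, ∀ t : ℝ, 0 ≤ t → ContinuousWithinAt (X ω) (Set.Ici t) t)
    (hYrc : ∀ ω, ∀ t : ℝ, 0 ≤ t → ContinuousWithinAt (Y ω) (Set.Ici t) t) :
    -- X is RC-compatible with Y
    (∀ (t ε : ℝ), 0 ≤ t → 0 < ε →
      ∀ h : (ℝ → E2) → ℝ, Measurable h → (∃ C, ∀ x, |h x| ≤ C) →
        P[fun ω => h (Y ω)|RCx X t ε ⊔ RCy Y t ε] =ᵐ[P] P[fun ω => h (Y ω)|RCy Y t ε])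
    ↔
    -- iff E[h(Y)|F^Y_{t+} ∨ F^X_{t−}] = E[h(Y)|F^Y_{t+}] for all t > 0
    (∀ t : ℝ, 0 < t →
      ∀ h : (ℝ → E2) → ℝ, Measurable h → (∃ C, ∀ x, |h x| ≤ C) →
        P[fun ω => h (Y ω)|(⨅ s ∈ Set.Ioi t, natF Y s) ⊔ (⨆ s ∈ Set.Ico (0:ℝ) t, natF X s)]
          =ᵐ[P] P[fun ω => h (Y ω)|⨅ s ∈ Set.Ioi t, natF Y s]) := by
  have hY : Measurable Y := measurable_pi_lambda Y hYmeas
  have hX (S : Set ℝ) : coordSigma X S ≤ ‹MeasurableSpace Ω› :=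
    coordSigma_le_iff.2 fun u _ => hXmeas u
  constructor
  · intro hcompat t ht h hh hbd
    rw [sup_comm, iSup_natF_Ico]
    refine (condExp_comp_sup_ae_eq_iff hY (hX _) (iInf_natF_le_comap t)).2
      (fun D hD => ?_) h hh hbd
    refine (aestronglyMeasurable_iInf_of_antitone (fun i j hij => coordSigma_mono ?_)
      fun n => ?_).mono (iInf_coordSigma_le_iInf_natF t)
    · exact Ico_subset_Ico_right (by gcongr)
    · have hn : (0 : ℝ) < 1 / (n + 1) := by positivity
      have hcn := hcompat t _ ht.le hn
      rw [RCx_eq_coordSigma hXrc hn, RCy_eq_coordSigma hYrc ht.le hn] at hcn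
      exact (condExp_comp_sup_ae_eq_iff hY (hX _) (coordSigma_le_comap _)).1 hcn D hD
  · intro hright t ε ht hε h hh hbd
    rw [RCx_eq_coordSigma hXrc hε, RCy_eq_coordSigma hYrc ht hε]
    refine (condExp_comp_sup_ae_eq_iff hY (hX _) (coordSigma_le_comap _)).2
      (fun D hD => ?_) h hh hbd
    have hmid := hright (t + ε / 2) (by positivity)
    rw [sup_comm, iSup_natF_Ico] at hmid
    exact ((condExp_comp_sup_ae_eq_iff hY (hX _) (iInf_natF_le_comap _)).1 hmid D
      (coordSigma_mono (Ico_subset_Ico_right (by linarith)) D hD)).mono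
      (iInf_natF_le_coordSigma (by linarith))
end

section
/- There exists a random variable Y and a partial compatibility structure under which partial compatibility does not imply joint partial compatibility. Concretely: let ζ1,…,ζ4 be i.i.d. with P(ζi = 1) = P(ζi = −1) = 1/2, set Y = (ζ1ζ2, ζ2ζ3, ζ3ζ4, ζ4ζ1), F^Y = σ(Y1), and for ξ uniform on [0,1] independent of Y set X = G(Y,ξ) = 1_{ξ<1/2}Y2 + 1_{ξ≥1/2}Y3 and h0(Y) = Y4. Then E[h0(Y) | σ(Y1) ∨ σ(X)] = 0 = E[h0(Y) | σ(Y1)], so X is partially compatible with Y for H = {h0}; but for independent uniforms ξ1, ξ2 and X1 = G(Y,ξ1), X2 = G(Y,ξ2), E[h0(Y) | σ(Y1) ∨ σ(X1) ∨ σ(X2)] = 1_{X1≠X2} Y1 X1 X2 + (1/3) 1_{X1=X2} Y1, which is not a.s. equal to 0, so joint partial compatibility fails. -/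
/-!
Take `ℝ⁶` with the product law, the `ζᵢ` and `ξᵢ` being the coordinates. This law and the uniform
law on 64 coin configurations both push forward to `rademacher⁴ ⊗ coin²`, through which
`(Y₁, X₁, X₂, Y₄)` factors; so its joint law is the image of the 64 configurations and every
conditional expectation is a finite average of `Y₄` over fibres. Since `Y₄ = Y₁Y₂Y₃` with three
independent factors, `Y₁` and one of `Y₂, Y₃` carry no information on `Y₄`. When `X₁ ≠ X₂` the
pair reveals both `Y₂` and `Y₃`, so `Y₄ = Y₁X₁X₂`; when `X₁ = X₂`, Bayes' rule puts weight `1/3`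
on the case where the two choices differ and `Y₂ = Y₃`, where `Y₄ = Y₁`, the other cases
averaging to `0`.
-/

open MeasureTheory ProbabilityTheory MeasurableSpace
open scoped ENNReal

/-- The Rademacher law on `ℝ`: `P(1) = P(-1) = 1/2`. -/
noncomputable def rademacher : Measure ℝ :=
  (1/2 : ℝ≥0∞) • Measure.dirac (1:ℝ) + (1/2 : ℝ≥0∞) • Measure.dirac (-1:ℝ)

/-- The uniform law on `[0,1]`. -/
noncomputable def unif01 : Measure ℝ := volume.restrict (Set.Icc (0:ℝ) 1)

namespace PartialCompatibility

section CondExpOfFiniteModel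

variable {Ω γ α δ : Type*} {mΩ : MeasurableSpace Ω} {mγ : MeasurableSpace γ} {P : Measure Ω}
  [Fintype α] [MeasurableSpace α] [MeasurableSingletonClass α] {Q : Measure α}

theorem setIntegral_preimage_eq_zero_of_sum_fiber [IsFiniteMeasure Q] [DecidableEq δ]
    {τ : α → δ} {F : α → ℝ} (h : ∀ d, ∑ a with τ a = d, Q.real {a} * F a = 0) (B : Set δ) :
    ∫ a in τ ⁻¹' B, F a ∂Q = 0 := by
  rw [← integral_indicator .of_discrete, integral_fintype .of_finite,
    ← Finset.sum_fiberwise_of_maps_to (fun a _ => Finset.mem_image_of_mem τ (Finset.mem_univ a))]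
  refine Finset.sum_eq_zero fun d _ => ?_
  by_cases hd : d ∈ B
  · refine (Finset.sum_congr rfl fun a ha => ?_).trans (h d)
    have ha : τ a = d := (Finset.mem_filter.1 ha).2
    rw [Set.indicator_of_mem (by rwa [Set.mem_preimage, ha]), smul_eq_mul]
  · refine Finset.sum_eq_zero fun a ha => ?_
    have ha : τ a = d := (Finset.mem_filter.1 ha).2
    rw [Set.indicator_of_notMem (by rwa [Set.mem_preimage, ha]), smul_zero]

/-- The fibres of `τ` may be finer than those of `e ∘ τ`: this lets the fibre condition be
checked on discrete data `δ` even when `γ` is a space of reals. -/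
theorem condExp_comap_ae_eq_of_map_eq [IsFiniteMeasure P] [IsFiniteMeasure Q] [DecidableEq δ]
    {T : Ω → γ} {Z : Ω → ℝ} (hTZ : Measurable fun ω => (T ω, Z ω)) {τ : α → δ} {e : δ → γ}
    {z : α → ℝ} (hlaw : P.map (fun ω => (T ω, Z ω)) = Q.map (fun a => (e (τ a), z a)))
    {ψ : γ → ℝ} (hψ : Measurable ψ)
    (hfib : ∀ d, ∑ a with τ a = d, Q.real {a} * (ψ (e (τ a)) - z a) = 0) :
    P[Z | mγ.comap T] =ᵐ[P] ψ ∘ T := by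
  have hT : Measurable T := measurable_fst.comp hTZ
  have hq : Measurable fun a => (e (τ a), z a) := .of_discrete
  have transfer : ∀ g : γ × ℝ → ℝ, Measurable g → ∀ B, MeasurableSet B →
      ∫ ω in T ⁻¹' B, g (T ω, Z ω) ∂P = ∫ a in τ ⁻¹' (e ⁻¹' B), g (e (τ a), z a) ∂Q := by
    intro g hg B hB
    have hB' : MeasurableSet (B ×ˢ (Set.univ : Set ℝ)) := hB.prod .univ
    calc ∫ ω in T ⁻¹' B, g (T ω, Z ω) ∂P
        = ∫ p in B ×ˢ Set.univ, g p ∂P.map (fun ω => (T ω, Z ω)) := by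
          rw [setIntegral_map hB' hg.aestronglyMeasurable hTZ.aemeasurable, Set.mk_preimage_prod,
            Set.preimage_univ, Set.inter_univ]
      _ = ∫ a in τ ⁻¹' (e ⁻¹' B), g (e (τ a), z a) ∂Q := by
          rw [hlaw, setIntegral_map hB' hg.aestronglyMeasurable hq.aemeasurable,
            Set.mk_preimage_prod, Set.preimage_univ, Set.inter_univ]; rfl
  have integrable : ∀ g : γ × ℝ → ℝ, Measurable g → Integrable (fun ω => g (T ω, Z ω)) P := by
    intro g hg
    refine (integrable_map_measure hg.aestronglyMeasurable hTZ.aemeasurable).1 ?_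
    rw [hlaw]
    exact (integrable_map_measure hg.aestronglyMeasurable hq.aemeasurable).2 .of_finite
  refine (ae_eq_condExp_of_forall_setIntegral_eq hT.comap_le (integrable _ measurable_snd)
    (fun _ _ _ => (integrable _ (hψ.comp measurable_fst)).integrableOn) ?_
    (hψ.comp (comap_measurable T)).aestronglyMeasurable).symm
  rintro _ ⟨B, hB, rfl⟩ -
  rw [transfer _ (hψ.comp measurable_fst) B hB, transfer _ measurable_snd B hB, ← sub_eq_zero,
    ← integral_sub .of_finite .of_finite]
  exact setIntegral_preimage_eq_zero_of_sum_fiber hfib _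

theorem not_comp_ae_eq_zero_of_map_eq [NeZero Q] {X : Ω → γ} (hX : Measurable X) {x : α → γ}
    (hlaw : P.map X = Q.map x) {f : γ → ℝ} (hf : Measurable f) (hne : ∀ a, f (x a) ≠ 0) :
    ¬ f ∘ X =ᵐ[P] 0 := by
  intro h
  have hmap : ∀ᵐ y ∂P.map X, f y = 0 :=
    (ae_map_iff hX.aemeasurable (hf (measurableSet_singleton 0))).2 h
  rw [hlaw] at hmap
  obtain ⟨a, ha⟩ := (ae_of_ae_map Measurable.of_discrete.aemeasurable hmap).exists
  exact hne a ha

end CondExpOfFiniteModel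

theorem Measure.map_prodMap_of_map_eq {α β γ δ : Type*} [MeasurableSpace α] [MeasurableSpace β]
    [MeasurableSpace γ] [MeasurableSpace δ] {μ : Measure α} {ν : Measure γ} [SFinite μ] [SFinite ν]
    {μ' : Measure β} {ν' : Measure δ} {f : α → β} {g : γ → δ} (hf : Measurable f)
    (hg : Measurable g) (hμ : μ.map f = μ') (hν : ν.map g = ν') :
    (μ.prod ν).map (Prod.map f g) = μ'.prod ν' := by
  rw [← Measure.map_prod_map μ ν hf hg, hμ, hν]

noncomputable def coin : Measure Bool :=
  (1/2 : ℝ≥0∞) • Measure.dirac true + (1/2 : ℝ≥0∞) • Measure.dirac false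

def coinSign (c : Bool) : ℝ := if c then 1 else -1

instance : IsProbabilityMeasure coin := ⟨by simp [coin, ENNReal.inv_two_add_inv_two]⟩

instance : IsProbabilityMeasure rademacher :=
  ⟨by simp [rademacher, ENNReal.inv_two_add_inv_two]⟩

instance : IsProbabilityMeasure unif01 := ⟨by simp [unif01, Real.volume_Icc]⟩

theorem coin_singleton (c : Bool) : coin {c} = 2⁻¹ := by
  cases c <;> simp [coin]

theorem coinSign_mul_coinSign (b c : Bool) : coinSign b * coinSign c = coinSign (b == c) := by
  cases b <;> cases c <;> norm_num [coinSign]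

theorem map_coinSign_coin : coin.map coinSign = rademacher := by
  rw [coin, Measure.map_add _ _ .of_discrete, Measure.map_smul, Measure.map_smul,
    Measure.map_dirac' .of_discrete, Measure.map_dirac' .of_discrete]
  simp [rademacher, coinSign]

noncomputable def ltHalf (t : ℝ) : Bool := decide (t < 1/2)

theorem ltHalf_preimage_true : ltHalf ⁻¹' {true} = Set.Iio (1/2) := by
  ext t; simp [ltHalf]

theorem ltHalf_preimage_false : ltHalf ⁻¹' {false} = Set.Ici (1/2) := by
  ext t; simp [ltHalf]

@[fun_prop]
theorem measurable_ltHalf : Measurable ltHalf :=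
  measurable_to_bool (ltHalf_preimage_true ▸ measurableSet_Iio)

theorem map_ltHalf_unif01 : unif01.map ltHalf = coin := by
  refine Measure.ext_of_singleton fun c => ?_
  rw [Measure.map_apply measurable_ltHalf (measurableSet_singleton c), coin_singleton, unif01,
    Measure.restrict_apply' measurableSet_Icc]
  have half : ENNReal.ofReal (1/2) = 2⁻¹ := by
    rw [one_div, ENNReal.ofReal_inv_of_pos two_pos, ENNReal.ofReal_ofNat]
  cases c
  · have : Set.Ici (1/2 : ℝ) ∩ Set.Icc 0 1 = Set.Icc (1/2) 1 := by
      ext t; simp only [Set.mem_inter_iff, Set.mem_Ici, Set.mem_Icc]; grind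
    rw [ltHalf_preimage_false, this, Real.volume_Icc]
    norm_num [half]
  · have : Set.Iio (1/2 : ℝ) ∩ Set.Icc 0 1 = Set.Ico 0 (1/2) := by
      ext t; simp only [Set.mem_inter_iff, Set.mem_Iio, Set.mem_Icc, Set.mem_Ico]; grind
    rw [ltHalf_preimage_true, this, Real.volume_Ico]
    norm_num [half]

abbrev Sample := ℝ × ℝ × ℝ × ℝ × ℝ × ℝ

noncomputable def sampleLaw : Measure Sample :=
  rademacher.prod (rademacher.prod (rademacher.prod (rademacher.prod (unif01.prod unif01))))

instance : IsProbabilityMeasure sampleLaw := by unfold sampleLaw; infer_instance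

def Y₁ (ω : Sample) : ℝ := ω.1 * ω.2.1

noncomputable def X₁ (ω : Sample) : ℝ :=
  if ω.2.2.2.2.1 < 1/2 then ω.2.1 * ω.2.2.1 else ω.2.2.1 * ω.2.2.2.1

noncomputable def X₂ (ω : Sample) : ℝ :=
  if ω.2.2.2.2.2 < 1/2 then ω.2.1 * ω.2.2.1 else ω.2.2.1 * ω.2.2.2.1

def Y₄ (ω : Sample) : ℝ := ω.2.2.2.1 * ω.1

@[fun_prop]
theorem measurable_Y₁ : Measurable Y₁ := by unfold Y₁; fun_prop

@[fun_prop]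
theorem measurable_X₁ : Measurable X₁ :=
  .ite (measurableSet_lt (by fun_prop) measurable_const) (by fun_prop) (by fun_prop)

@[fun_prop]
theorem measurable_X₂ : Measurable X₂ :=
  .ite (measurableSet_lt (by fun_prop) measurable_const) (by fun_prop) (by fun_prop)

@[fun_prop]
theorem measurable_Y₄ : Measurable Y₄ := by unfold Y₄; fun_prop

abbrev Coins := Bool × Bool × Bool × Bool × Bool × Bool

noncomputable def coins : Measure Coins :=
  coin.prod (coin.prod (coin.prod (coin.prod (coin.prod coin))))

instance : IsProbabilityMeasure coins := by unfold coins; infer_instance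

theorem coins_real_singleton (a : Coins) : coins.real {a} = 1/64 := by
  obtain ⟨a₁, a₂, a₃, a₄, a₅, a₆⟩ := a
  simp only [← Set.singleton_prod_singleton, measureReal_def, coins, Measure.prod_prod,
    coin_singleton]
  norm_num

noncomputable def hybridLaw : Measure (ℝ × ℝ × ℝ × ℝ × Bool × Bool) :=
  rademacher.prod (rademacher.prod (rademacher.prod (rademacher.prod (coin.prod coin))))

noncomputable def discretize : Sample → ℝ × ℝ × ℝ × ℝ × Bool × Bool :=
  Prod.map id (Prod.map id (Prod.map id (Prod.map id (Prod.map ltHalf ltHalf))))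

def coinSigns : Coins → ℝ × ℝ × ℝ × ℝ × Bool × Bool :=
  Prod.map coinSign (Prod.map coinSign (Prod.map coinSign (Prod.map coinSign id)))

theorem measurable_discretize : Measurable discretize := by
  unfold discretize; fun_prop

theorem map_discretize : sampleLaw.map discretize = hybridLaw := by
  have hμ : rademacher.map id = rademacher := Measure.map_id
  exact Measure.map_prodMap_of_map_eq measurable_id (by fun_prop) hμ <|
    Measure.map_prodMap_of_map_eq measurable_id (by fun_prop) hμ <|
    Measure.map_prodMap_of_map_eq measurable_id (by fun_prop) hμ <|
    Measure.map_prodMap_of_map_eq measurable_id (by fun_prop) hμ <|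
    Measure.map_prodMap_of_map_eq measurable_ltHalf measurable_ltHalf map_ltHalf_unif01
      map_ltHalf_unif01

theorem map_coinSigns : coins.map coinSigns = hybridLaw := by
  have hs : Measurable coinSign := .of_discrete
  exact Measure.map_prodMap_of_map_eq hs .of_discrete map_coinSign_coin <|
    Measure.map_prodMap_of_map_eq hs .of_discrete map_coinSign_coin <|
    Measure.map_prodMap_of_map_eq hs .of_discrete map_coinSign_coin <|
    Measure.map_prodMap_of_map_eq hs .of_discrete map_coinSign_coin Measure.map_id

def observables (h : ℝ × ℝ × ℝ × ℝ × Bool × Bool) : ℝ × ℝ × ℝ × ℝ :=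
  (h.1 * h.2.1, if h.2.2.2.2.1 then h.2.1 * h.2.2.1 else h.2.2.1 * h.2.2.2.1,
    if h.2.2.2.2.2 then h.2.1 * h.2.2.1 else h.2.2.1 * h.2.2.2.1, h.2.2.2.1 * h.1)

theorem measurable_observables : Measurable observables := by
  have hX : ∀ c : ℝ × ℝ × ℝ × ℝ × Bool × Bool → Bool, Measurable c →
      Measurable fun h => if c h then h.2.1 * h.2.2.1 else h.2.2.1 * h.2.2.2.1 :=
    fun c hc => .ite (hc (measurableSet_singleton true)) (by fun_prop) (by fun_prop)
  exact (by fun_prop : Measurable fun h : ℝ × ℝ × ℝ × ℝ × Bool × Bool => h.1 * h.2.1).prodMk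
    ((hX _ (by fun_prop)).prodMk ((hX _ (by fun_prop)).prodMk (by fun_prop)))

theorem observables_discretize (ω : Sample) :
    observables (discretize ω) = (Y₁ ω, X₁ ω, X₂ ω, Y₄ ω) := by
  simp [observables, discretize, ltHalf, Y₁, X₁, X₂, Y₄]

/-- The signs of the observables on a coin configuration, `true` standing for `+1`. -/
def observableSigns (a : Coins) : Bool × Bool × Bool × Bool :=
  (a.1 == a.2.1, if a.2.2.2.2.1 then a.2.1 == a.2.2.1 else a.2.2.1 == a.2.2.2.1,
    if a.2.2.2.2.2 then a.2.1 == a.2.2.1 else a.2.2.1 == a.2.2.2.1, a.2.2.2.1 == a.1)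

def coinSign₄ : Bool × Bool × Bool × Bool → ℝ × ℝ × ℝ × ℝ :=
  Prod.map coinSign (Prod.map coinSign (Prod.map coinSign coinSign))

theorem observables_coinSigns (a : Coins) :
    observables (coinSigns a) = coinSign₄ (observableSigns a) := by
  simp only [observables, coinSigns, observableSigns, coinSign₄, Prod.map, id,
    coinSign_mul_coinSign, apply_ite coinSign]

theorem map_observables {β : Type*} [MeasurableSpace β] {φ : ℝ × ℝ × ℝ × ℝ → β}
    (hφ : Measurable φ) : sampleLaw.map (fun ω => φ (Y₁ ω, X₁ ω, X₂ ω, Y₄ ω))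
      = coins.map (fun a => φ (coinSign₄ (observableSigns a))) := by
  have hφ' : Measurable (φ ∘ observables) := hφ.comp measurable_observables
  calc sampleLaw.map (fun ω => φ (Y₁ ω, X₁ ω, X₂ ω, Y₄ ω))
      = (sampleLaw.map discretize).map (φ ∘ observables) := by
        rw [Measure.map_map hφ' measurable_discretize]
        simp only [Function.comp_def, observables_discretize]
    _ = (coins.map coinSigns).map (φ ∘ observables) := by rw [map_discretize, map_coinSigns]
    _ = coins.map (fun a => φ (coinSign₄ (observableSigns a))) := by
        rw [Measure.map_map hφ' .of_discrete]
        simp only [Function.comp_def, observables_coinSigns]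

theorem sum_fiber_coins_eq_zero {δ : Type*} [DecidableEq δ] {τ : Coins → δ} {F : Coins → ℝ}
    (h : ∀ d, ∑ a with τ a = d, F a = 0) (d : δ) :
    ∑ a with τ a = d, coins.real {a} * F a = 0 := by
  simp only [coins_real_singleton, ← Finset.mul_sum, h, mul_zero]

theorem condExp_Y₄_Y₁ :
    sampleLaw[Y₄ | MeasurableSpace.comap Y₁ inferInstance] =ᵐ[sampleLaw] fun _ => 0 := by
  refine condExp_comap_ae_eq_of_map_eq (by fun_prop) (τ := fun a => (observableSigns a).1)
    (e := coinSign) (z := fun a => coinSign (observableSigns a).2.2.2)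
    (map_observables (φ := fun v => (v.1, v.2.2.2)) (by fun_prop)) measurable_const
    (sum_fiber_coins_eq_zero ?_)
  rintro (_ | _) <;> rw [Finset.sum_filter] <;>
    simp only [Fintype.sum_prod_type, Fintype.sum_bool, observableSigns, coinSign] <;> norm_num

theorem condExp_Y₄_Y₁_X₁ :
    sampleLaw[Y₄ | MeasurableSpace.comap Y₁ inferInstance ⊔ MeasurableSpace.comap X₁ inferInstance]
      =ᵐ[sampleLaw] fun _ => 0 := by
  rw [← comap_prodMk]
  refine condExp_comap_ae_eq_of_map_eq (by fun_prop)
    (τ := fun a => ((observableSigns a).1, (observableSigns a).2.1))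
    (e := Prod.map coinSign coinSign) (z := fun a => coinSign (observableSigns a).2.2.2)
    (map_observables (φ := fun v => ((v.1, v.2.1), v.2.2.2)) (by fun_prop)) measurable_const
    (sum_fiber_coins_eq_zero ?_)
  rintro ⟨_ | _, _ | _⟩ <;> rw [Finset.sum_filter] <;>
    simp only [Fintype.sum_prod_type, Fintype.sum_bool, observableSigns, coinSign] <;> norm_num

noncomputable def jointCondExp (q : (ℝ × ℝ) × ℝ) : ℝ :=
  if q.1.2 ≠ q.2 then q.1.1 * q.1.2 * q.2 else 1/3 * q.1.1

theorem measurable_jointCondExp : Measurable jointCondExp :=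
  .ite (measurableSet_eq_fun (by fun_prop) (by fun_prop)).compl (by fun_prop) (by fun_prop)

theorem condExp_Y₄_Y₁_X₁_X₂ :
    sampleLaw[Y₄ | MeasurableSpace.comap Y₁ inferInstance ⊔ MeasurableSpace.comap X₁ inferInstance
      ⊔ MeasurableSpace.comap X₂ inferInstance]
      =ᵐ[sampleLaw] fun ω => jointCondExp ((Y₁ ω, X₁ ω), X₂ ω) := by
  rw [← comap_prodMk, ← comap_prodMk]
  refine condExp_comap_ae_eq_of_map_eq (by fun_prop)
    (τ := fun a => (((observableSigns a).1, (observableSigns a).2.1), (observableSigns a).2.2.1))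
    (e := Prod.map (Prod.map coinSign coinSign) coinSign)
    (z := fun a => coinSign (observableSigns a).2.2.2)
    (map_observables (φ := fun v => (((v.1, v.2.1), v.2.2.1), v.2.2.2)) (by fun_prop))
    measurable_jointCondExp (sum_fiber_coins_eq_zero ?_)
  rintro ⟨⟨_ | _, _ | _⟩, _ | _⟩ <;> rw [Finset.sum_filter] <;>
    simp only [Fintype.sum_prod_type, Fintype.sum_bool, observableSigns, coinSign, jointCondExp,
      Prod.map] <;> norm_num

theorem not_condExp_Y₄_Y₁_X₁_X₂_ae_eq_zero :
    ¬ sampleLaw[Y₄ | MeasurableSpace.comap Y₁ inferInstance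
      ⊔ MeasurableSpace.comap X₁ inferInstance ⊔ MeasurableSpace.comap X₂ inferInstance]
      =ᵐ[sampleLaw] fun _ => 0 := by
  intro h
  refine not_comp_ae_eq_zero_of_map_eq (X := fun ω => ((Y₁ ω, X₁ ω), X₂ ω)) (by fun_prop)
    (map_observables (φ := fun v => ((v.1, v.2.1), v.2.2.1)) (by fun_prop))
    measurable_jointCondExp (fun a => ?_) (condExp_Y₄_Y₁_X₁_X₂.symm.trans h)
  generalize observableSigns a = s
  rcases s with ⟨_ | _, _ | _, _ | _, _⟩ <;> norm_num [jointCondExp, coinSign₄, coinSign]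

end PartialCompatibility

/-- Example 3.1 of Kurtz: partial compatibility does not imply joint partial
compatibility.  With `Y = (ζ1ζ2, ζ2ζ3, ζ3ζ4, ζ4ζ1)` for i.i.d. Rademacher `ζi`,
`F^Y = σ(Y1)`, `X = 1_{ξ<1/2}Y2 + 1_{ξ≥1/2}Y3` and `h0(Y) = Y4`, one has
`E[h0(Y)|σ(Y1) ∨ σ(X)] = 0 = E[h0(Y)|σ(Y1)]`, but for two independent copies
`X1, X2`, `E[h0(Y)|σ(Y1) ∨ σ(X1) ∨ σ(X2)] = 1_{X1≠X2}Y1X1X2 + (1/3)1_{X1=X2}Y1 ≠ 0`. -/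
theorem stmt14 :
    ∃ (Ω : Type) (mΩ : MeasurableSpace Ω) (P : Measure Ω) (_ : IsProbabilityMeasure P)
      (ζ1 ζ2 ζ3 ζ4 ξ1 ξ2 : Ω → ℝ),
      Measurable ζ1 ∧ Measurable ζ2 ∧ Measurable ζ3 ∧ Measurable ζ4 ∧
      Measurable ξ1 ∧ Measurable ξ2 ∧
      -- ζ1,…,ζ4 i.i.d. Rademacher, ξ1, ξ2 uniform on [0,1], all mutually independent
      P.map (fun ω => (ζ1 ω, ζ2 ω, ζ3 ω, ζ4 ω, ξ1 ω, ξ2 ω)) =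
        rademacher.prod (rademacher.prod (rademacher.prod (rademacher.prod
          (unif01.prod unif01)))) ∧
      -- with the notation of the example:
      (let Y1 : Ω → ℝ := fun ω => ζ1 ω * ζ2 ω
       let Y2 : Ω → ℝ := fun ω => ζ2 ω * ζ3 ω
       let Y3 : Ω → ℝ := fun ω => ζ3 ω * ζ4 ω
       let Y4 : Ω → ℝ := fun ω => ζ4 ω * ζ1 ω
       let X1 : Ω → ℝ := fun ω => if ξ1 ω < 1/2 then Y2 ω else Y3 ω
       let X2 : Ω → ℝ := fun ω => if ξ2 ω < 1/2 then Y2 ω else Y3 ω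
       -- partial compatibility of X1 with Y for H = {h0}, h0(Y) = Y4:
       (P[Y4|MeasurableSpace.comap Y1 inferInstance ⊔ MeasurableSpace.comap X1 inferInstance]
          =ᵐ[P] fun _ => (0:ℝ)) ∧
       (P[Y4|MeasurableSpace.comap Y1 inferInstance] =ᵐ[P] fun _ => (0:ℝ)) ∧
       -- the explicit value of the jointly conditioned expectation:
       (P[Y4|MeasurableSpace.comap Y1 inferInstance ⊔ MeasurableSpace.comap X1 inferInstance
            ⊔ MeasurableSpace.comap X2 inferInstance]
          =ᵐ[P] fun ω => if X1 ω ≠ X2 ω then Y1 ω * X1 ω * X2 ω else (1/3) * Y1 ω) ∧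
       -- hence joint partial compatibility fails:
       ¬ (P[Y4|MeasurableSpace.comap Y1 inferInstance ⊔ MeasurableSpace.comap X1 inferInstance
            ⊔ MeasurableSpace.comap X2 inferInstance]
          =ᵐ[P] fun _ => (0:ℝ))) := by
  refine ⟨PartialCompatibility.Sample, inferInstance, PartialCompatibility.sampleLaw, inferInstance,
    fun ω => ω.1, fun ω => ω.2.1, fun ω => ω.2.2.1, fun ω => ω.2.2.2.1, fun ω => ω.2.2.2.2.1,
    fun ω => ω.2.2.2.2.2, by fun_prop, by fun_prop, by fun_prop, by fun_prop, by fun_prop,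
    by fun_prop, Measure.map_id', ?_⟩
  exact ⟨PartialCompatibility.condExp_Y₄_Y₁_X₁, PartialCompatibility.condExp_Y₄_Y₁,
    PartialCompatibility.condExp_Y₄_Y₁_X₁_X₂,
    PartialCompatibility.not_condExp_Y₄_Y₁_X₁_X₂_ae_eq_zero⟩
end

section
/- Suppose pointwise uniqueness holds for S ⊆ P_ν(S1×S2): then S contains at most one measure (joint uniqueness in law). Precisely, if μ1, μ2 ∈ S, then choosing Y ~ ν and independent uniforms ξ1, ξ2 with (G1(Y,ξ1),Y) ~ μ1 and (G2(Y,ξ2),Y) ~ μ2, pointwise uniqueness forces G1(Y,ξ1) = G2(Y,ξ2) a.s., hence μ1 = μ2. -/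
open MeasureTheory ProbabilityTheory

/-!
Disintegrate both laws over their common `S2`-marginal `ν` and glue the two conditional laws
independently: under `P = ν ⊗ (κ₁ × κ₂)` on `S2 × S1 × S1` the coordinates `(Y, X₁, X₂)` satisfy
`(Xᵢ, Y) ~ μᵢ`, so pointwise uniqueness gives `X₁ = X₂` a.s. and hence `μ₁ = μ₂`.
-/

namespace MeasureTheory.Measure

variable {α β γ : Type*} [MeasurableSpace α] [MeasurableSpace β] [MeasurableSpace γ]

lemma map_compProd_prod_fst_s16 (μ : Measure α) [SFinite μ] (κ : Kernel α β) [IsSFiniteKernel κ]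
    (η : Kernel α γ) [IsMarkovKernel η] :
    (μ ⊗ₘ (κ ×ₖ η)).map (fun ω => (ω.1, ω.2.1)) = μ ⊗ₘ κ := by
  conv_rhs => rw [← Kernel.fst_prod κ η, Kernel.fst_eq, compProd_map measurable_fst]
  rfl

lemma map_compProd_prod_snd_s16 (μ : Measure α) [SFinite μ] (κ : Kernel α β) [IsMarkovKernel κ]
    (η : Kernel α γ) [IsSFiniteKernel η] :
    (μ ⊗ₘ (κ ×ₖ η)).map (fun ω => (ω.1, ω.2.2)) = μ ⊗ₘ η := by
  conv_rhs => rw [← Kernel.snd_prod κ η, Kernel.snd_eq, compProd_map measurable_snd]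
  rfl

end MeasureTheory.Measure

namespace ProbabilityTheory

variable {α β : Type*} [MeasurableSpace α] [StandardBorelSpace α] [Nonempty α] [MeasurableSpace β]

lemma map_swap_compProd_condDistrib (μ : Measure (α × β)) [IsFiniteMeasure μ] :
    (μ.map Prod.snd ⊗ₘ condDistrib Prod.fst Prod.snd μ).map Prod.swap = μ := by
  rw [compProd_map_condDistrib measurable_fst.aemeasurable,
    Measure.map_map measurable_swap (by fun_prop)]
  exact Measure.map_id

lemma exists_coupling_of_map_snd_eq (μ₁ μ₂ : Measure (α × β)) [IsProbabilityMeasure μ₁]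
    [IsProbabilityMeasure μ₂] (h : μ₁.map Prod.snd = μ₂.map Prod.snd) :
    ∃ P : Measure (β × α × α), IsProbabilityMeasure P ∧
      P.map (fun ω => (ω.2.1, ω.1)) = μ₁ ∧ P.map (fun ω => (ω.2.2, ω.1)) = μ₂ := by
  have : IsProbabilityMeasure (μ₁.map Prod.snd) := Measure.isProbabilityMeasure_map (by fun_prop)
  set κ₁ := condDistrib Prod.fst Prod.snd μ₁
  set κ₂ := condDistrib Prod.fst Prod.snd μ₂
  refine ⟨μ₁.map Prod.snd ⊗ₘ (κ₁ ×ₖ κ₂), inferInstance, ?_, ?_⟩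
  · rw [show (fun ω : β × α × α => (ω.2.1, ω.1)) = Prod.swap ∘ fun ω => (ω.1, ω.2.1) from rfl,
      ← Measure.map_map measurable_swap (by fun_prop), Measure.map_compProd_prod_fst_s16,
      map_swap_compProd_condDistrib]
  · rw [show (fun ω : β × α × α => (ω.2.2, ω.1)) = Prod.swap ∘ fun ω => (ω.1, ω.2.2) from rfl,
      ← Measure.map_map measurable_swap (by fun_prop), Measure.map_compProd_prod_snd_s16, h,
      map_swap_compProd_condDistrib]

end ProbabilityTheory

theorem stmt16_general
    {S1 S2 : Type} [MeasurableSpace S1] [TopologicalSpace S1] [PolishSpace S1] [BorelSpace S1]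
    [MeasurableSpace S2]
    (ν : Measure S2)
    (S : Set (Measure (S1 × S2)))
    (hS : ∀ μ ∈ S, IsProbabilityMeasure μ ∧ μ.map Prod.snd = ν)
    (huniq : ∀ (Ω : Type) (mΩ : MeasurableSpace Ω) (P : Measure Ω), IsProbabilityMeasure P →
      ∀ (X1 X2 : Ω → S1) (Y : Ω → S2), Measurable X1 → Measurable X2 → Measurable Y →
        P.map (fun ω => (X1 ω, Y ω)) ∈ S → P.map (fun ω => (X2 ω, Y ω)) ∈ S →
        X1 =ᵐ[P] X2) :
    S.Subsingleton := by
  intro μ₁ hμ₁ μ₂ hμ₂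
  obtain ⟨hprob₁, hν₁⟩ := hS μ₁ hμ₁
  obtain ⟨hprob₂, hν₂⟩ := hS μ₂ hμ₂
  have : Nonempty S1 := (nonempty_of_isProbabilityMeasure μ₁).map Prod.fst
  obtain ⟨P, hP, rfl, rfl⟩ := exists_coupling_of_map_snd_eq μ₁ μ₂ (hν₁.trans hν₂.symm)
  have hX : (fun ω : S2 × S1 × S1 => ω.2.1) =ᵐ[P] fun ω => ω.2.2 :=
    huniq _ _ P hP _ _ Prod.fst (by fun_prop) (by fun_prop) measurable_fst hμ₁ hμ₂
  exact Measure.map_congr (hX.mono fun ω hω => by simp only [hω])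

/-- Part of the proof of Theorem 1.5 of Kurtz: pointwise uniqueness implies joint
uniqueness in law, i.e. the set of joint solution measures contains at most one
measure. -/
theorem stmt16
    {S1 S2 : Type} [MeasurableSpace S1] [TopologicalSpace S1] [PolishSpace S1] [BorelSpace S1]
    [MeasurableSpace S2] [TopologicalSpace S2] [PolishSpace S2] [BorelSpace S2]
    (ν : Measure S2) [IsProbabilityMeasure ν]
    (S : Set (Measure (S1 × S2)))
    (hS : ∀ μ ∈ S, IsProbabilityMeasure μ ∧ μ.map Prod.snd = ν)
    (huniq : ∀ (Ω : Type) (mΩ : MeasurableSpace Ω) (P : Measure Ω), IsProbabilityMeasure P →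
      ∀ (X1 X2 : Ω → S1) (Y : Ω → S2), Measurable X1 → Measurable X2 → Measurable Y →
        P.map (fun ω => (X1 ω, Y ω)) ∈ S → P.map (fun ω => (X2 ω, Y ω)) ∈ S →
        X1 =ᵐ[P] X2) :
    S.Subsingleton :=
  stmt16_general ν S hS huniq
end
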